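/- arXiv:1405.5622 — 11 statements merged into one kernel-verified Lean document; each statement's English description precedes it below -/
import Mathlib

section
/- If r and s are integers with 1 ≤ r < s, then the edge Roman domination number of the complete bipartite graph K_{r,s} equals 2r. -/
open Finset SimpleGraph

/-- An edge Roman dominating function: values in {0,1,2} on edges (0 elsewhere),
and every edge with value 0 is adjacent to a distinct edge with value 2
sharing an endpoint with it. -/
def EdgeRDF {V : Type*} (G : SimpleGraph V) (f : Sym2 V → ℕ) : Prop :=
  (∀ e, f e ≤ 2) ∧ (∀ e, e ∉ G.edgeSet → f e = 0) ∧
  (∀ e ∈ G.edgeSet, f e = 0 →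
    ∃ e' ∈ G.edgeSet, f e' = 2 ∧ e' ≠ e ∧ ∃ v, v ∈ e ∧ v ∈ e')

/-- The edge Roman domination number: the minimum weight of an
edge Roman dominating function. -/
noncomputable def edgeRomanNumber (V : Type*) [Fintype V] [DecidableEq V]
    (G : SimpleGraph V) : ℕ :=
  sInf {w | ∃ f : Sym2 V → ℕ, EdgeRDF G f ∧ w = ∑ e : Sym2 V, f e}

/-!
Let `t` be the number of edges of weight `2`. They touch at most `t` vertices on each side, so
the `(r - t)(s - t)` edges between the untouched vertices are adjacent to no edge of weight `2`
and so have weight at least `1`. The total weight is therefore at least `2t + (r - t)(s - t)`, which is `≥ 2r` because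
`s - t ≥ 2` whenever `t < r < s`. Conversely, weight `2` on a matching saturating the smaller
side dominates every edge, since every edge meets that side.
-/

section EdgeRomanNumber

variable {V : Type*} [DecidableEq V] {G : SimpleGraph V}

theorem edgeRDF_ite_mem {M : Finset (Sym2 V)} (hM : ∀ e ∈ M, e ∈ G.edgeSet)
    (hdom : ∀ e ∈ G.edgeSet, e ∉ M → ∃ e' ∈ M, ∃ v, v ∈ e ∧ v ∈ e') :
    EdgeRDF G (fun e => if e ∈ M then 2 else 0) := by
  refine ⟨fun e => by by_cases e ∈ M <;> simp [*], fun e he => if_neg (mt (hM e) he),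
    fun e he h0 => ?_⟩
  have heM : e ∉ M := fun h => by simp [h] at h0
  obtain ⟨e', he'M, v, hve, hve'⟩ := hdom e he heM
  exact ⟨e', hM e' he'M, if_pos he'M, ne_of_mem_of_not_mem he'M heM, v, hve, hve'⟩

variable [Fintype V]

theorem EdgeRDF.edgeRomanNumber_eq {f : Sym2 V → ℕ} (hf : EdgeRDF G f)
    (hmin : ∀ g, EdgeRDF G g → ∑ e, f e ≤ ∑ e, g e) :
    edgeRomanNumber V G = ∑ e, f e := by
  refine le_antisymm (Nat.sInf_le ⟨f, hf, rfl⟩) (le_csInf ⟨_, f, hf, rfl⟩ ?_)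
  rintro _ ⟨g, hg, rfl⟩
  exact hmin g hg

end EdgeRomanNumber

theorem two_mul_le_two_mul_add_sub_mul_sub {m n t : ℕ} (hmn : m < n) :
    2 * m ≤ 2 * t + (m - t) * (n - t) := by
  rcases le_or_gt m t with hmt | hmt
  · omega
  · have : (m - t) * 2 ≤ (m - t) * (n - t) := Nat.mul_le_mul_left _ (by omega)
    omega

theorem two_mul_card_le_sum_of_forall_eq_zero {α β : Type*} [Fintype α] [Fintype β]
    [DecidableEq α] [DecidableEq β] (h : α × β → ℕ) (hcard : Fintype.card α < Fintype.card β)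
    (hdom : ∀ p, h p = 0 → ∃ q, h q = 2 ∧ (p.1 = q.1 ∨ p.2 = q.2)) :
    2 * Fintype.card α ≤ ∑ p, h p := by
  set T := ({p | h p = 2} : Finset (α × β))
  set L := T.image Prod.fst
  set R := T.image Prod.snd
  -- no entry of value `2` shares a row or column with a cell of `Lᶜ ×ˢ Rᶜ`
  have hpos : ∀ p ∈ Lᶜ ×ˢ Rᶜ, 1 ≤ h p := by
    rintro p hp
    simp only [L, R, mem_product, mem_compl, mem_image] at hp
    refine Nat.one_le_iff_ne_zero.mpr fun h0 => ?_
    obtain ⟨q, hq, hq'⟩ := hdom p h0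
    have hqT : q ∈ T := by simpa [T] using hq
    rcases hq' with hq' | hq'
    · exact hp.1 ⟨q, hqT, hq'.symm⟩
    · exact hp.2 ⟨q, hqT, hq'.symm⟩
  have hdisj : Disjoint T (Lᶜ ×ˢ Rᶜ) := by
    refine disjoint_left.mpr fun p hpT hp => ?_
    exact (mem_compl.mp (mem_product.mp hp).1) (mem_image_of_mem _ hpT)
  calc 2 * Fintype.card α
      ≤ 2 * #T + (Fintype.card α - #T) * (Fintype.card β - #T) :=
        two_mul_le_two_mul_add_sub_mul_sub hcard
    _ ≤ 2 * #T + #Lᶜ * #Rᶜ := by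
        rw [card_compl, card_compl]
        gcongr <;> exact card_image_le
    _ = ∑ p ∈ T, h p + ∑ p ∈ Lᶜ ×ˢ Rᶜ, 1 := by
        rw [sum_const_nat fun p hp => (mem_filter.mp hp).2, ← card_eq_sum_ones, card_product,
          mul_comm]
    _ ≤ ∑ p ∈ T, h p + ∑ p ∈ Lᶜ ×ˢ Rᶜ, h p := by gcongr with p hp; exact hpos p hp
    _ = ∑ p ∈ T ∪ Lᶜ ×ˢ Rᶜ, h p := (sum_union hdisj).symm
    _ ≤ ∑ p, h p := sum_le_sum_of_subset (subset_univ _)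

section CompleteBipartite

variable {α β : Type*}

def crossEdge : α × β ↪ Sym2 (α ⊕ β) where
  toFun p := s(Sum.inl p.1, Sum.inr p.2)
  inj' p q h := by simpa [Prod.ext_iff] using h

@[simp]
theorem crossEdge_apply (p : α × β) : crossEdge p = s(Sum.inl p.1, Sum.inr p.2) :=
  rfl

theorem crossEdge_mem_edgeSet (p : α × β) :
    crossEdge p ∈ (completeBipartiteGraph α β).edgeSet := by
  simp

theorem exists_crossEdge_eq {e : Sym2 (α ⊕ β)}
    (he : e ∈ (completeBipartiteGraph α β).edgeSet) : ∃ p, crossEdge p = e := by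
  rwa [edgeSet_completeBipartiteGraph] at he

theorem exists_mem_crossEdge_iff {p q : α × β} :
    (∃ v, v ∈ crossEdge p ∧ v ∈ crossEdge q) ↔ p.1 = q.1 ∨ p.2 = q.2 := by
  simp

variable [Fintype α] [Fintype β] [DecidableEq α] [DecidableEq β]

theorem EdgeRDF.two_mul_card_le_sum {f : Sym2 (α ⊕ β) → ℕ}
    (hf : EdgeRDF (completeBipartiteGraph α β) f) (hcard : Fintype.card α < Fintype.card β) :
    2 * Fintype.card α ≤ ∑ e, f e := by
  have hdom (p : α × β) (h0 : f (crossEdge p) = 0) :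
      ∃ q, f (crossEdge q) = 2 ∧ (p.1 = q.1 ∨ p.2 = q.2) := by
    obtain ⟨e', he', h2, -, hshared⟩ := hf.2.2 _ (crossEdge_mem_edgeSet p) h0
    obtain ⟨q, rfl⟩ := exists_crossEdge_eq he'
    exact ⟨q, h2, exists_mem_crossEdge_iff.mp hshared⟩
  calc 2 * Fintype.card α ≤ ∑ p, f (crossEdge p) :=
        two_mul_card_le_sum_of_forall_eq_zero _ hcard hdom
    _ = ∑ e ∈ univ.map crossEdge, f e := (sum_map _ _ _).symm
    _ ≤ ∑ e, f e := sum_le_sum_of_subset (subset_univ _)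

theorem exists_edgeRDF_sum_eq (ι : α ↪ β) :
    ∃ f, EdgeRDF (completeBipartiteGraph α β) f ∧ ∑ e, f e = 2 * Fintype.card α := by
  let M := univ.image fun a => crossEdge (a, ι a)
  have hM : #M = Fintype.card α :=
    card_image_of_injective _ fun a b h => congrArg Prod.fst (crossEdge.injective h)
  refine ⟨_, edgeRDF_ite_mem (M := M) ?_ ?_, by simp [sum_ite_mem, hM, mul_comm]⟩
  · simp only [M, mem_image]
    rintro _ ⟨a, -, rfl⟩
    exact crossEdge_mem_edgeSet _
  · intro e he _
    obtain ⟨p, rfl⟩ := exists_crossEdge_eq he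
    exact ⟨crossEdge (p.1, ι p.1), by simp [M], exists_mem_crossEdge_iff.mpr (Or.inl rfl)⟩

theorem edgeRomanNumber_completeBipartiteGraph (hcard : Fintype.card α < Fintype.card β) :
    edgeRomanNumber (α ⊕ β) (completeBipartiteGraph α β) = 2 * Fintype.card α := by
  obtain ⟨ι⟩ := Function.Embedding.nonempty_of_card_le hcard.le
  obtain ⟨f, hf, hw⟩ := exists_edgeRDF_sum_eq ι
  rw [hf.edgeRomanNumber_eq fun g hg => hw ▸ hg.two_mul_card_le_sum hcard, hw]

end CompleteBipartite

theorem edgeRomanNumber_completeBipartite_lt_general (r s : ℕ) (hrs : r < s) :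
    edgeRomanNumber (Fin r ⊕ Fin s) (completeBipartiteGraph (Fin r) (Fin s)) = 2 * r := by
  simpa using edgeRomanNumber_completeBipartiteGraph (α := Fin r) (β := Fin s) (by simpa)

/-- If `1 ≤ r < s`, then the edge Roman domination number of the complete
bipartite graph `K_{r,s}` equals `2r`. -/
theorem edgeRomanNumber_completeBipartite_lt (r s : ℕ) (hr : 1 ≤ r) (hrs : r < s) :
    edgeRomanNumber (Fin r ⊕ Fin s) (completeBipartiteGraph (Fin r) (Fin s)) = 2 * r :=
  edgeRomanNumber_completeBipartite_lt_general r s hrs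
end

section
/- For every integer r ≥ 1, the edge Roman domination number of the complete bipartite graph K_{r,r} equals 2r − 1. -/
open Finset SimpleGraph

section ERDFAux

variable {r : ℕ}

private lemma edge_mem (i j : Fin r) :
    s(Sum.inl i, Sum.inr j) ∈ (completeBipartiteGraph (Fin r) (Fin r)).edgeSet := by
  simp [SimpleGraph.mem_edgeSet]

private lemma edge_repr {e : Sym2 (Fin r ⊕ Fin r)}
    (he : e ∈ (completeBipartiteGraph (Fin r) (Fin r)).edgeSet) :
    ∃ i j : Fin r, e = s(Sum.inl i, Sum.inr j) := by
  induction e using Sym2.ind with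
  | _ x y =>
    rw [SimpleGraph.mem_edgeSet] at he
    rcases x with i | i <;> rcases y with j | j <;> simp at he
    · exact ⟨i, j, rfl⟩
    · exact ⟨j, i, Sym2.eq_swap⟩

private lemma edge_inj : Function.Injective
    (fun p : Fin r × Fin r => s(Sum.inl p.1, Sum.inr p.2)) := by
  rintro ⟨i, j⟩ ⟨k, l⟩ h
  simp only [Sym2.eq, Sym2.rel_iff', Prod.mk.injEq, Prod.swap_prod_mk] at h
  rcases h with ⟨h1, h2⟩ | ⟨h1, h2⟩ <;> simp_all

private lemma diag_inj : Function.Injective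
    (fun i : Fin r => s(Sum.inl i, Sum.inr i)) := by
  intro i j h
  have := edge_inj (r := r) (a₁ := (i, i)) (a₂ := (j, j)) h
  simpa using congrArg Prod.fst this

private lemma erdf_arith (r s a b : ℕ) (ha : a ≤ r) (hb : b ≤ r)
    (hsa : a ≤ s) (hsb : b ≤ s) : 2 * r - 1 ≤ 2 * s + (r - a) * (r - b) := by
  have sq : ∀ c : ℕ, 2 * c ≤ c * c + 1 := by
    intro c
    cases c with
    | zero => simp
    | succ n => nlinarith
  rcases le_total a b with h | h
  · have h1 : (r - b) * (r - b) ≤ (r - a) * (r - b) :=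
      Nat.mul_le_mul_right _ (Nat.sub_le_sub_left h r)
    have hP : 2 * (r - b) ≤ (r - a) * (r - b) + 1 :=
      le_trans (sq (r - b)) (by omega)
    generalize (r - a) * (r - b) = P at hP ⊢
    omega
  · have h1 : (r - a) * (r - a) ≤ (r - a) * (r - b) :=
      Nat.mul_le_mul_left _ (Nat.sub_le_sub_left h r)
    have hP : 2 * (r - a) ≤ (r - a) * (r - b) + 1 :=
      le_trans (sq (r - a)) (by omega)
    generalize (r - a) * (r - b) = P at hP ⊢
    omega

open Classical in
private lemma erdf_upper (hr : 1 ≤ r) :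
    ∃ f : Sym2 (Fin r ⊕ Fin r) → ℕ,
      EdgeRDF (completeBipartiteGraph (Fin r) (Fin r)) f ∧
      2 * r - 1 = ∑ e : Sym2 (Fin r ⊕ Fin r), f e := by
  classical
  set z : Fin r := ⟨0, hr⟩ with hz
  set f : Sym2 (Fin r ⊕ Fin r) → ℕ := fun e =>
    if e = s(Sum.inl z, Sum.inr z) then 1
    else if ∃ i : Fin r, e = s(Sum.inl i, Sum.inr i) then 2 else 0 with hf
  have fdiag : ∀ i : Fin r, f s(Sum.inl i, Sum.inr i) = if i = z then 1 else 2 := by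
    intro i
    by_cases h : i = z
    · simp [hf, h]
    · have h1 : s(Sum.inl i, Sum.inr i) ≠ s(Sum.inl z, Sum.inr z) :=
        fun hc => h (diag_inj hc)
      simp [hf, h1, h]
  refine ⟨f, ⟨?_, ?_, ?_⟩, ?_⟩
  · intro e
    simp only [hf]
    split <;> [omega; skip]
    split <;> omega
  · intro e he
    simp only [hf]
    split
    · exact absurd (by simpa [*] using edge_mem (r := r) z z) he
    · split
      · rename_i h
        obtain ⟨i, rfl⟩ := h
        exact absurd (edge_mem i i) he
      · rfl
  · intro e he h0
    obtain ⟨i, j, rfl⟩ := edge_repr he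
    have hij : i ≠ j := by
      rintro rfl
      rw [fdiag i] at h0
      split at h0 <;> omega
    by_cases hi : i = z
    · -- use diagonal at j; j ≠ z
      refine ⟨s(Sum.inl j, Sum.inr j), edge_mem j j, ?_, ?_, ⟨Sum.inr j, by simp, by simp⟩⟩
      · rw [fdiag j]; simp [show j ≠ z from fun hjz => hij (hi.trans hjz.symm)]
      · intro hc
        exact hij (congrArg Prod.fst (edge_inj (a₁ := (j, j)) (a₂ := (i, j)) hc)).symm
    · refine ⟨s(Sum.inl i, Sum.inr i), edge_mem i i, ?_, ?_, ⟨Sum.inl i, by simp, by simp⟩⟩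
      · rw [fdiag i]; simp [hi]
      · intro hc
        exact hij (congrArg Prod.snd (edge_inj (a₁ := (i, i)) (a₂ := (i, j)) hc))
  · -- weight
    set D : Finset (Sym2 (Fin r ⊕ Fin r)) :=
      (univ : Finset (Fin r)).image (fun i => s(Sum.inl i, Sum.inr i)) with hD
    have hsum : ∑ e : Sym2 (Fin r ⊕ Fin r), f e = ∑ e ∈ D, f e := by
      refine (Finset.sum_subset (Finset.subset_univ D) ?_).symm
      intro e _ heD
      simp only [hf]
      split
      · rename_i h
        exact absurd (by simp [hD, h]) heD
      · split
        · rename_i h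
          obtain ⟨i, rfl⟩ := h
          exact absurd (by simp [hD]) heD
        · rfl
    rw [hsum, hD, Finset.sum_image (fun a _ b _ h => diag_inj h)]
    have : ∀ i : Fin r, f s(Sum.inl i, Sum.inr i) = if i = z then 1 else 2 := fdiag
    rw [Finset.sum_congr rfl (fun i _ => this i)]
    rw [← Finset.add_sum_erase _ _ (Finset.mem_univ z)]
    rw [Finset.sum_congr rfl (fun i hi => if_neg (Finset.mem_erase.mp hi).1)]
    rw [Finset.sum_const, Finset.card_erase_of_mem (Finset.mem_univ z), Finset.card_univ,
      Fintype.card_fin]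
    rw [if_pos rfl, smul_eq_mul]
    omega

private lemma erdf_lower (f : Sym2 (Fin r ⊕ Fin r) → ℕ)
    (hf : EdgeRDF (completeBipartiteGraph (Fin r) (Fin r)) f) :
    2 * r - 1 ≤ ∑ e : Sym2 (Fin r ⊕ Fin r), f e := by
  classical
  obtain ⟨hle, hzero, hdom⟩ := hf
  set g : Fin r × Fin r → ℕ := fun p => f s(Sum.inl p.1, Sum.inr p.2) with hg
  set S2 : Finset (Fin r × Fin r) := univ.filter (fun p => g p = 2) with hS2
  set A : Finset (Fin r) := S2.image Prod.fst with hA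
  set B : Finset (Fin r) := S2.image Prod.snd with hB
  set U : Finset (Fin r × Fin r) := univ.filter (fun p => p.1 ∉ A ∧ p.2 ∉ B) with hU
  -- g ≥ 1 on U
  have hU1 : ∀ p ∈ U, 1 ≤ g p := by
    intro p hp
    rw [hU, Finset.mem_filter] at hp
    obtain ⟨-, h1, h2⟩ := hp
    by_contra hgo
    have hg0 : g p = 0 := by omega
    obtain ⟨e', he', hfe', hne, v, hve, hve'⟩ :=
      hdom s(Sum.inl p.1, Sum.inr p.2) (edge_mem p.1 p.2) hg0
    obtain ⟨i, j, rfl⟩ := edge_repr he'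
    have hij : (i, j) ∈ S2 := by
      rw [hS2, Finset.mem_filter]
      exact ⟨Finset.mem_univ _, hfe'⟩
    rw [Sym2.mem_iff] at hve hve'
    rcases hve with rfl | rfl
    · rcases hve' with h | h
      · exact h1 (Finset.mem_image.mpr ⟨(i, j), hij, (Sum.inl.inj h).symm⟩)
      · exact (Sum.inl_ne_inr h).elim
    · rcases hve' with h | h
      · exact (Sum.inr_ne_inl h).elim
      · exact h2 (Finset.mem_image.mpr ⟨(i, j), hij, (Sum.inr.inj h).symm⟩)
  have hdisj : Disjoint S2 U := by
    rw [Finset.disjoint_left]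
    intro p hp hpU
    rw [hU, Finset.mem_filter] at hpU
    exact hpU.2.1 (Finset.mem_image.mpr ⟨p, hp, rfl⟩)
  have hUcard : U.card = (r - A.card) * (r - B.card) := by
    have : U = (Aᶜ) ×ˢ (Bᶜ) := by
      ext p
      simp [hU, Finset.mem_product, and_comm]
    rw [this, Finset.card_product, Finset.card_compl, Finset.card_compl, Fintype.card_fin]
  have hAcard : A.card ≤ S2.card := Finset.card_image_le
  have hBcard : B.card ≤ S2.card := Finset.card_image_le
  have hAr : A.card ≤ r := le_trans (Finset.card_le_univ A) (by simp)
  have hBr : B.card ≤ r := le_trans (Finset.card_le_univ B) (by simp)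
  calc 2 * r - 1 ≤ 2 * S2.card + (r - A.card) * (r - B.card) :=
        erdf_arith r S2.card A.card B.card hAr hBr hAcard hBcard
    _ = 2 * S2.card + U.card := by rw [hUcard]
    _ ≤ ∑ p ∈ S2, g p + ∑ p ∈ U, g p := by
        gcongr
        · rw [Finset.sum_congr rfl (fun p hp => (Finset.mem_filter.mp hp).2),
            Finset.sum_const, smul_eq_mul]
          rw [← hS2]
          omega
        · calc U.card = ∑ _p ∈ U, 1 := by simp
            _ ≤ ∑ p ∈ U, g p := Finset.sum_le_sum hU1
    _ = ∑ p ∈ S2 ∪ U, g p := (Finset.sum_union hdisj).symm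
    _ ≤ ∑ p : Fin r × Fin r, g p := Finset.sum_le_sum_of_subset (Finset.subset_univ _)
    _ = ∑ e ∈ (univ : Finset (Fin r × Fin r)).image
          (fun p => s(Sum.inl p.1, Sum.inr p.2)), f e := by
        rw [Finset.sum_image (fun a _ b _ h => edge_inj h)]
    _ ≤ ∑ e : Sym2 (Fin r ⊕ Fin r), f e :=
        Finset.sum_le_sum_of_subset (Finset.subset_univ _)

end ERDFAux

/-- For every integer `r ≥ 1`, the edge Roman domination number of the complete
bipartite graph `K_{r,r}` equals `2r - 1`. -/
theorem edgeRomanNumber_completeBipartite_eq (r : ℕ) (hr : 1 ≤ r) :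
    edgeRomanNumber (Fin r ⊕ Fin r) (completeBipartiteGraph (Fin r) (Fin r)) = 2 * r - 1 := by
  obtain ⟨f, hf, hw⟩ := erdf_upper hr
  rw [edgeRomanNumber]
  apply le_antisymm
  · exact Nat.sInf_le ⟨f, hf, hw⟩
  · refine le_csInf ⟨2 * r - 1, f, hf, hw⟩ ?_
    rintro w ⟨f', hf', rfl⟩
    exact erdf_lower f' hf'
end

section
/- For all integers r ≥ 1 and t ≥ 1, the edge Roman domination number of the graph G_{r,t} equals 2rt. -/
open Finset SimpleGraph

/-- The graph `G_{r,t}`: `t` disjoint copies of `K_{r,r+1}`, the `i`-th copy having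
partite sets `X_i` (of size `r`, the `inl` part) and `Y_i` (of size `r+1`, the `inr` part),
together with the cyclically-added edges `y^i_{r+1} y^{i+1}_1`. -/
def Grt (r t : ℕ) : SimpleGraph (Fin t × (Fin r ⊕ Fin (r + 1))) :=
  SimpleGraph.fromRel (fun a b =>
    (a.1 = b.1 ∧ ∃ x y, a.2 = Sum.inl x ∧ b.2 = Sum.inr y) ∨
    (b.1.val = (a.1.val + 1) % t ∧ a.2 = Sum.inr (Fin.last r) ∧
      b.2 = Sum.inr (0 : Fin (r + 1))))

namespace GrtAux

variable {r t : ℕ}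

abbrev V (r t : ℕ) := Fin t × (Fin r ⊕ Fin (r + 1))

/-- internal edge of copy `i` -/
def eInt (i : Fin t) (x : Fin r) (y : Fin (r + 1)) : Sym2 (V r t) :=
  s((i, Sum.inl x), (i, Sum.inr y))

/-- cyclic edge from copy `i` to copy `i+1` -/
def eCyc [NeZero t] (i : Fin t) : Sym2 (V r t) :=
  s((i, Sum.inr (Fin.last r)), (i + 1, Sum.inr (0 : Fin (r + 1))))

lemma val_add_one [NeZero t] (i : Fin t) : (i + 1 : Fin t).val = (i.val + 1) % t := by
  rw [Fin.val_add, Fin.val_one']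
  rcases eq_or_lt_of_le (Nat.one_le_iff_ne_zero.mpr (NeZero.ne t)) with h | h
  · simp [← h, Nat.mod_one]
  · rw [Nat.mod_eq_of_lt h]

lemma eInt_mem (i : Fin t) (x : Fin r) (y : Fin (r + 1)) :
    eInt i x y ∈ (Grt r t).edgeSet := by
  rw [eInt, SimpleGraph.mem_edgeSet, Grt, SimpleGraph.fromRel_adj]
  exact ⟨by simp, Or.inl (Or.inl ⟨rfl, x, y, rfl, rfl⟩)⟩

lemma last_ne_zero (hr : 1 ≤ r) : (Fin.last r : Fin (r + 1)) ≠ 0 := by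
  intro hh
  have : (Fin.last r).val = (0 : Fin (r + 1)).val := by rw [hh]
  simp [Fin.last] at this
  omega

lemma eCyc_mem [NeZero t] (hr : 1 ≤ r) (i : Fin t) :
    eCyc (r := r) i ∈ (Grt r t).edgeSet := by
  rw [eCyc, SimpleGraph.mem_edgeSet, Grt, SimpleGraph.fromRel_adj]
  constructor
  · intro h
    rw [Prod.ext_iff] at h
    have h2 := h.2
    simp only [Sum.inr.injEq] at h2
    exact last_ne_zero hr h2
  · exact Or.inl (Or.inr ⟨val_add_one i, rfl, rfl⟩)

lemma eInt_inj {i i' : Fin t} {x x' : Fin r} {y y' : Fin (r + 1)}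
    (h : eInt i x y = eInt i' x' y') : i = i' ∧ x = x' ∧ y = y' := by
  rw [eInt, eInt, Sym2.eq_iff] at h
  rcases h with ⟨h1, h2⟩ | ⟨h1, h2⟩
  · rw [Prod.ext_iff] at h1 h2
    simp only [Sum.inl.injEq, Sum.inr.injEq] at h1 h2
    exact ⟨h1.1, h1.2, h2.2⟩
  · rw [Prod.ext_iff] at h1
    exact absurd h1.2 (by simp)

lemma eCyc_inj [NeZero t] (hr : 1 ≤ r) {i i' : Fin t}
    (h : eCyc (r := r) i = eCyc i') : i = i' := by
  rw [eCyc, eCyc, Sym2.eq_iff] at h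
  rcases h with ⟨h1, h2⟩ | ⟨h1, h2⟩
  · rw [Prod.ext_iff] at h1
    exact h1.1
  · rw [Prod.ext_iff] at h1
    have := h1.2
    simp only [Sum.inr.injEq] at this
    exact absurd this (last_ne_zero hr)

/-- classification of edges -/
lemma edge_cases [NeZero t] {e : Sym2 (V r t)} (he : e ∈ (Grt r t).edgeSet) :
    (∃ i x y, e = eInt i x y) ∨ (∃ i, e = eCyc i) := by
  induction e using Sym2.ind with
  | _ a b =>
    obtain ⟨a1, a2⟩ := a
    obtain ⟨b1, b2⟩ := b
    rw [SimpleGraph.mem_edgeSet, Grt, SimpleGraph.fromRel_adj] at he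
    obtain ⟨-, h | h⟩ := he
    · rcases h with ⟨h1, x, y, hx, hy⟩ | ⟨h1, h2, h3⟩
      · simp only at h1 hx hy
        subst h1; subst hx; subst hy
        exact Or.inl ⟨a1, x, y, rfl⟩
      · simp only at h1 h2 h3
        subst h2; subst h3
        have hb : b1 = a1 + 1 := Fin.ext (by rw [val_add_one]; exact h1)
        subst hb
        exact Or.inr ⟨a1, rfl⟩
    · rcases h with ⟨h1, x, y, hx, hy⟩ | ⟨h1, h2, h3⟩
      · simp only at h1 hx hy
        subst h1; subst hx; subst hy
        exact Or.inl ⟨b1, x, y, Sym2.eq_swap⟩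
      · simp only at h1 h2 h3
        subst h2; subst h3
        have hb : a1 = b1 + 1 := Fin.ext (by rw [val_add_one]; exact h1)
        subst hb
        exact Or.inr ⟨b1, Sym2.eq_swap⟩

lemma incidence_inl [NeZero t] {e : Sym2 (V r t)} (he : e ∈ (Grt r t).edgeSet)
    {i : Fin t} {x : Fin r} (hv : ((i, Sum.inl x) : V r t) ∈ e) :
    ∃ y, e = eInt i x y := by
  rcases edge_cases he with ⟨j, x', y, rfl⟩ | ⟨j, rfl⟩
  · rw [eInt, Sym2.mem_iff] at hv
    rcases hv with h | h
    · rw [Prod.ext_iff] at h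
      simp only [Sum.inl.injEq] at h
      obtain ⟨h1, h2⟩ := h
      exact ⟨y, by rw [h1, h2]⟩
    · rw [Prod.ext_iff] at h
      exact absurd h.2 (by simp)
  · rw [eCyc, Sym2.mem_iff] at hv
    rcases hv with h | h <;> (rw [Prod.ext_iff] at h; exact absurd h.2 (by simp))

lemma incidence_inr [NeZero t] {e : Sym2 (V r t)} (he : e ∈ (Grt r t).edgeSet)
    {i : Fin t} {y : Fin (r + 1)} (hv : ((i, Sum.inr y) : V r t) ∈ e) :
    (∃ x, e = eInt i x y) ∨ (y = Fin.last r ∧ e = eCyc i) ∨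
      (y = 0 ∧ e = eCyc (i - 1)) := by
  rcases edge_cases he with ⟨j, x, y', rfl⟩ | ⟨j, rfl⟩
  · rw [eInt, Sym2.mem_iff] at hv
    rcases hv with h | h
    · rw [Prod.ext_iff] at h
      exact absurd h.2 (by simp)
    · rw [Prod.ext_iff] at h
      simp only [Sum.inr.injEq] at h
      obtain ⟨h1, h2⟩ := h
      exact Or.inl ⟨x, by rw [h1, h2]⟩
  · rw [eCyc, Sym2.mem_iff] at hv
    rcases hv with h | h
    · rw [Prod.ext_iff] at h
      simp only [Sum.inr.injEq] at h
      obtain ⟨h1, h2⟩ := h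
      exact Or.inr (Or.inl ⟨h2, by rw [h1]⟩)
    · rw [Prod.ext_iff] at h
      simp only [Sum.inr.injEq] at h
      obtain ⟨h1, h2⟩ := h
      refine Or.inr (Or.inr ⟨h2, ?_⟩)
      have : j = i - 1 := by rw [h1, add_sub_cancel_right]
      rw [this]

/- ### Upper bound construction -/

/-- the matching edge at `x` in copy `i` -/
def g (p : Fin t × Fin r) : Sym2 (V r t) := eInt p.1 p.2 p.2.castSucc

lemma g_inj : Function.Injective (g (r := r) (t := t)) := by
  intro p q h
  obtain ⟨h1, h2, -⟩ := eInt_inj h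
  exact Prod.ext h1 h2

/-- the upper-bound edge Roman dominating function -/
def f0 : Sym2 (V r t) → ℕ := fun e =>
  2 * (Finset.univ.filter (fun p : Fin t × Fin r => e = g p)).card

lemma filter_card_le_one (e : Sym2 (V r t)) :
    (Finset.univ.filter (fun p : Fin t × Fin r => e = g p)).card ≤ 1 := by
  refine Finset.card_le_one.mpr ?_
  intro p hp q hq
  rw [Finset.mem_filter] at hp hq
  exact g_inj (hp.2 ▸ hq.2.symm ▸ rfl)

lemma f0_le (e : Sym2 (V r t)) : f0 e ≤ 2 := by
  have := filter_card_le_one e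
  rw [f0]; omega

lemma f0_g (p : Fin t × Fin r) : f0 (g p) = 2 := by
  rw [f0]
  have h1 : (Finset.univ.filter (fun q : Fin t × Fin r => g p = g q)).card = 1 := by
    refine le_antisymm (filter_card_le_one _) ?_
    refine Finset.card_pos.mpr ⟨p, ?_⟩
    rw [Finset.mem_filter]
    exact ⟨Finset.mem_univ _, rfl⟩
  rw [h1]

lemma f0_eq_zero {e : Sym2 (V r t)} (he : e ∉ (Grt r t).edgeSet) : f0 e = 0 := by
  rw [f0, Nat.mul_eq_zero]
  right
  rw [Finset.card_eq_zero, Finset.filter_eq_empty_iff]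
  intro p _ h
  exact he (h ▸ eInt_mem p.1 p.2 p.2.castSucc)

lemma f0_sum : ∑ e : Sym2 (V r t), f0 e = 2 * r * t := by
  simp only [f0]
  rw [← Finset.mul_sum]
  have : ∑ e : Sym2 (V r t),
      (Finset.univ.filter (fun p : Fin t × Fin r => e = g p)).card = r * t := by
    simp only [Finset.card_filter]
    rw [Finset.sum_comm]
    have h1 : ∀ p : Fin t × Fin r,
        (∑ e : Sym2 (V r t), if e = g p then 1 else 0) = 1 := by
      intro p
      simp
    rw [Finset.sum_congr rfl (fun p _ => h1 p)]
    simp [Finset.card_univ, Nat.mul_comm]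
  rw [this]
  ring

lemma f0_rdf [NeZero t] (hr : 1 ≤ r) : EdgeRDF (Grt r t) (f0 (r := r) (t := t)) := by
  haveI : NeZero r := ⟨by omega⟩
  refine ⟨f0_le, fun e he => f0_eq_zero he, ?_⟩
  intro e he hfe
  rcases edge_cases he with ⟨i, x, y, rfl⟩ | ⟨i, rfl⟩
  · refine ⟨g (i, x), eInt_mem _ _ _, f0_g _, ?_, (i, Sum.inl x), ?_, ?_⟩
    · intro h
      rw [← h, f0_g] at hfe
      omega
    · rw [eInt, Sym2.mem_iff]; left; rfl
    · rw [g, eInt, Sym2.mem_iff]; left; rfl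
  · refine ⟨g (i + 1, 0), eInt_mem _ _ _, f0_g _, ?_, (i + 1, Sum.inr 0), ?_, ?_⟩
    · intro h
      rw [← h, f0_g] at hfe
      omega
    · rw [eCyc, Sym2.mem_iff]; right; rfl
    · rw [g, eInt, Sym2.mem_iff]; right
      rw [Fin.castSucc_zero']

/- ### Lower bound -/

lemma eInt_ne_eCyc [NeZero t] (i j : Fin t) (x : Fin r) (y : Fin (r + 1)) :
    eInt i x y ≠ eCyc j := by
  intro h
  rw [eInt, eCyc, Sym2.eq_iff] at h
  rcases h with ⟨h1, -⟩ | ⟨h1, -⟩ <;>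
    (rw [Prod.ext_iff] at h1; exact absurd h1.2 (by simp))

/-- index of all edges -/
def E [NeZero t] (p : Fin t × (Fin r × Fin (r + 1) ⊕ Unit)) : Sym2 (V r t) :=
  match p.2 with
  | Sum.inl q => eInt p.1 q.1 q.2
  | Sum.inr _ => eCyc p.1

lemma E_inj [NeZero t] (hr : 1 ≤ r) :
    Function.Injective (E (r := r) (t := t)) := by
  rintro ⟨i, q⟩ ⟨i', q'⟩ h
  match q, q' with
  | Sum.inl a, Sum.inl b =>
    simp only [E] at h
    obtain ⟨h1, h2, h3⟩ := eInt_inj h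
    subst h1
    rw [Prod.mk.injEq, Sum.inl.injEq, Prod.ext_iff]
    exact ⟨rfl, h2, h3⟩
  | Sum.inl a, Sum.inr u => exact absurd h (eInt_ne_eCyc _ _ _ _)
  | Sum.inr u, Sum.inl b => exact absurd h.symm (eInt_ne_eCyc _ _ _ _)
  | Sum.inr u, Sum.inr u' =>
    simp only [E] at h
    rw [eCyc_inj hr h]

lemma arith2 (d ux uy c : ℕ) (hd : 1 ≤ d) (hc : c ≤ 2) (hx : d ≤ ux)
    (hy : d + 1 ≤ uy + c) : 2 * d ≤ ux * uy + c := by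
  have hprod : d * (d + 1 - c) ≤ ux * uy := Nat.mul_le_mul hx (by omega)
  suffices hkey : 2 * d ≤ d * (d + 1 - c) + c by omega
  rcases Nat.lt_or_ge d (c + 1) with hsmall | hbig
  · interval_cases c <;> interval_cases d <;> norm_num
  · have h2 : 2 ≤ d + 1 - c := by omega
    have := Nat.mul_le_mul_left d h2
    omega

lemma arith (rr a ux uy c1 c2 : ℕ) (h1 : c1 ≤ 1) (h2 : c2 ≤ 1)
    (hx : rr ≤ ux + a) (hy : rr + 1 ≤ uy + a + c1 + c2) :
    2 * rr ≤ 2 * a + ux * uy + c1 + c2 := by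
  rcases le_or_gt rr a with h | h
  · have := Nat.zero_le (ux * uy)
    omega
  · have := arith2 (rr - a) ux uy (c1 + c2) (by omega) (by omega) (by omega)
      (by omega)
    omega

lemma percopy [NeZero t] (hr : 1 ≤ r) {f : Sym2 (V r t) → ℕ}
    (hf : EdgeRDF (Grt r t) f) (i : Fin t) :
    4 * r ≤ 2 * (∑ q : Fin r × Fin (r + 1), f (eInt i q.1 q.2)) +
      f (eCyc (i - 1)) + f (eCyc i) := by
  classical
  obtain ⟨hle, hout, hdom⟩ := hf
  set A : Finset (Fin r × Fin (r + 1)) :=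
    Finset.univ.filter (fun q => f (eInt i q.1 q.2) = 2) with hA
  set UX : Finset (Fin r) :=
    Finset.univ.filter (fun x => ∀ y, f (eInt i x y) ≠ 2) with hUX
  set UY : Finset (Fin (r + 1)) :=
    Finset.univ.filter (fun y => (∀ x, f (eInt i x y) ≠ 2) ∧
      (y = 0 → f (eCyc (i - 1)) ≠ 2) ∧
      (y = Fin.last r → f (eCyc i) ≠ 2)) with hUY
  set c1 : ℕ := if f (eCyc (i - 1)) = 2 then 1 else 0 with hc1def
  set c2 : ℕ := if f (eCyc (r := r) i) = 2 then 1 else 0 with hc2def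
  -- every UX × UY edge has value 1
  have key : ∀ q ∈ UX ×ˢ UY, f (eInt i q.1 q.2) = 1 := by
    rintro ⟨x, y⟩ hq
    show f (eInt i x y) = 1
    rw [Finset.mem_product] at hq
    obtain ⟨hx, hy⟩ := hq
    rw [hUX, Finset.mem_filter] at hx
    rw [hUY, Finset.mem_filter] at hy
    have hne2 : f (eInt i x y) ≠ 2 := hx.2 y
    have hne0 : f (eInt i x y) ≠ 0 := by
      intro h0
      obtain ⟨e', he', hf2, hne, v, hve, hve'⟩ := hdom _ (eInt_mem i x y) h0
      rw [eInt, Sym2.mem_iff] at hve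
      rcases hve with hv | hv
      · subst hv
        obtain ⟨y', rfl⟩ := incidence_inl he' hve'
        exact hx.2 y' hf2
      · subst hv
        rcases incidence_inr he' hve' with ⟨x', rfl⟩ | ⟨hyl, rfl⟩ | ⟨hy0, rfl⟩
        · exact hy.2.1 x' hf2
        · exact hy.2.2.2 hyl hf2
        · exact hy.2.2.1 hy0 hf2
    have := hle (eInt i x y)
    omega
  -- the weight inside the copy
  have hdisj : Disjoint A (UX ×ˢ UY) := by
    rw [Finset.disjoint_left]
    intro q hqA hqP
    rw [hA, Finset.mem_filter] at hqA
    have := key q hqP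
    omega
  have hsplit : 2 * A.card + UX.card * UY.card ≤
      ∑ q : Fin r × Fin (r + 1), f (eInt i q.1 q.2) := by
    have e1 : ∑ q ∈ A, f (eInt i q.1 q.2) = 2 * A.card := by
      calc ∑ q ∈ A, f (eInt i q.1 q.2) = ∑ _q ∈ A, 2 :=
            Finset.sum_congr rfl (fun q hq => by
              rw [hA, Finset.mem_filter] at hq
              exact hq.2)
        _ = 2 * A.card := by rw [Finset.sum_const, smul_eq_mul, Nat.mul_comm]
    have e2 : ∑ q ∈ UX ×ˢ UY, f (eInt i q.1 q.2) = UX.card * UY.card := by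
      calc ∑ q ∈ UX ×ˢ UY, f (eInt i q.1 q.2) = ∑ _q ∈ UX ×ˢ UY, 1 :=
            Finset.sum_congr rfl key
        _ = UX.card * UY.card := by
            rw [Finset.sum_const, smul_eq_mul, Nat.mul_one, Finset.card_product]
    calc 2 * A.card + UX.card * UY.card
        = ∑ q ∈ A ∪ UX ×ˢ UY, f (eInt i q.1 q.2) := by
          rw [Finset.sum_union hdisj, e1, e2]
      _ ≤ ∑ q : Fin r × Fin (r + 1), f (eInt i q.1 q.2) :=
          Finset.sum_le_sum_of_subset (Finset.subset_univ _)
  -- cardinality bounds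
  have hXcard : r ≤ UX.card + A.card := by
    have hcover : (Finset.univ : Finset (Fin r)) ⊆ UX ∪ A.image Prod.fst := by
      intro x _
      rw [Finset.mem_union]
      by_cases hx : ∀ y, f (eInt i x y) ≠ 2
      · exact Or.inl (by rw [hUX, Finset.mem_filter]; exact ⟨Finset.mem_univ _, hx⟩)
      · push_neg at hx
        obtain ⟨y, hy⟩ := hx
        refine Or.inr (Finset.mem_image.mpr ⟨(x, y), ?_, rfl⟩)
        rw [hA, Finset.mem_filter]
        exact ⟨Finset.mem_univ _, hy⟩
    have h1 := Finset.card_le_card hcover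
    have h2 := Finset.card_union_le UX (A.image Prod.fst)
    have h3 := Finset.card_image_le (s := A) (f := Prod.fst)
    have h4 : (Finset.univ : Finset (Fin r)).card = r := by simp
    omega
  have hYcard : r + 1 ≤ UY.card + A.card + c1 + c2 := by
    set T1 : Finset (Fin (r + 1)) := if f (eCyc (i - 1)) = 2 then {0} else ∅ with hT1
    set T2 : Finset (Fin (r + 1)) :=
      if f (eCyc (r := r) i) = 2 then {Fin.last r} else ∅ with hT2
    have hT1card : T1.card ≤ c1 := by
      rw [hT1, hc1def]
      split <;> simp
    have hT2card : T2.card ≤ c2 := by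
      rw [hT2, hc2def]
      split <;> simp
    have hcover : (Finset.univ : Finset (Fin (r + 1))) ⊆
        UY ∪ (A.image Prod.snd ∪ (T1 ∪ T2)) := by
      intro y _
      rw [Finset.mem_union, Finset.mem_union, Finset.mem_union]
      by_cases hP1 : ∀ x, f (eInt i x y) ≠ 2
      · by_cases hP2 : y = 0 → f (eCyc (i - 1)) ≠ 2
        · by_cases hP3 : y = Fin.last r → f (eCyc (r := r) i) ≠ 2
          · refine Or.inl ?_
            rw [hUY, Finset.mem_filter]
            exact ⟨Finset.mem_univ _, hP1, hP2, hP3⟩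
          · push_neg at hP3
            refine Or.inr (Or.inr (Or.inr ?_))
            rw [hT2, if_pos hP3.2, hP3.1]
            exact Finset.mem_singleton_self _
        · push_neg at hP2
          refine Or.inr (Or.inr (Or.inl ?_))
          rw [hT1, if_pos hP2.2, hP2.1]
          exact Finset.mem_singleton_self _
      · push_neg at hP1
        obtain ⟨x, hx⟩ := hP1
        refine Or.inr (Or.inl (Finset.mem_image.mpr ⟨(x, y), ?_, rfl⟩))
        rw [hA, Finset.mem_filter]
        exact ⟨Finset.mem_univ _, hx⟩
    have h1 := Finset.card_le_card hcover
    have h2 := Finset.card_union_le UY (A.image Prod.snd ∪ (T1 ∪ T2))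
    have h3 := Finset.card_union_le (A.image Prod.snd) (T1 ∪ T2)
    have h4 := Finset.card_union_le T1 T2
    have h5 := Finset.card_image_le (s := A) (f := Prod.snd)
    have h6 : (Finset.univ : Finset (Fin (r + 1))).card = r + 1 := by simp
    omega
  have harith := arith r A.card UX.card UY.card c1 c2
    (by rw [hc1def]; split <;> omega) (by rw [hc2def]; split <;> omega)
    hXcard hYcard
  have hfc1 : 2 * c1 ≤ f (eCyc (i - 1)) := by
    rw [hc1def]; split <;> omega
  have hfc2 : 2 * c2 ≤ f (eCyc (r := r) i) := by
    rw [hc2def]; split <;> omega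
  omega

lemma lower_bound [NeZero t] (hr : 1 ≤ r) {f : Sym2 (V r t) → ℕ}
    (hf : EdgeRDF (Grt r t) f) : 2 * r * t ≤ ∑ e : Sym2 (V r t), f e := by
  classical
  have h1 : ∑ k : Fin t × (Fin r × Fin (r + 1) ⊕ Unit), f (E k) ≤
      ∑ e : Sym2 (V r t), f e := by
    rw [← Finset.sum_image (f := f) (fun p _ q _ h => E_inj hr h)]
    exact Finset.sum_le_sum_of_subset (Finset.subset_univ _)
  have h2 : ∑ k : Fin t × (Fin r × Fin (r + 1) ⊕ Unit), f (E k) =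
      ∑ i : Fin t, ((∑ q : Fin r × Fin (r + 1), f (eInt i q.1 q.2)) + f (eCyc i)) := by
    rw [Fintype.sum_prod_type]
    refine Finset.sum_congr rfl (fun i _ => ?_)
    rw [Fintype.sum_sum_type]
    simp [E]
  have h4 : ∑ i : Fin t, f (eCyc (r := r) (i - 1)) = ∑ i : Fin t, f (eCyc i) :=
    Equiv.sum_comp (Equiv.subRight (1 : Fin t)) (fun j => f (eCyc j))
  have h3 : ∀ i : Fin t, 4 * r ≤
      2 * (∑ q : Fin r × Fin (r + 1), f (eInt i q.1 q.2)) +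
        f (eCyc (i - 1)) + f (eCyc i) := percopy hr hf
  have s1 : ∑ _i : Fin t, (4 * r) ≤ ∑ i : Fin t,
      (2 * (∑ q : Fin r × Fin (r + 1), f (eInt i q.1 q.2)) +
        f (eCyc (i - 1)) + f (eCyc i)) := Finset.sum_le_sum (fun i _ => h3 i)
  have s2 : ∑ i : Fin t,
      (2 * (∑ q : Fin r × Fin (r + 1), f (eInt i q.1 q.2)) +
        f (eCyc (i - 1)) + f (eCyc i)) =
      (∑ i : Fin t, 2 * (∑ q : Fin r × Fin (r + 1), f (eInt i q.1 q.2))) +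
        (∑ i : Fin t, f (eCyc (r := r) (i - 1))) + (∑ i : Fin t, f (eCyc i)) := by
    rw [Finset.sum_add_distrib, Finset.sum_add_distrib]
  have s3 : ∑ i : Fin t, 2 * (∑ q : Fin r × Fin (r + 1), f (eInt i q.1 q.2)) =
      2 * ∑ i : Fin t, (∑ q : Fin r × Fin (r + 1), f (eInt i q.1 q.2)) := by
    rw [Finset.mul_sum]
  have s4 : ∑ i : Fin t,
      ((∑ q : Fin r × Fin (r + 1), f (eInt i q.1 q.2)) + f (eCyc i)) =
      (∑ i : Fin t, (∑ q : Fin r × Fin (r + 1), f (eInt i q.1 q.2))) +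
        (∑ i : Fin t, f (eCyc i)) := Finset.sum_add_distrib
  have s5 : ∑ _i : Fin t, (4 * r) = t * (4 * r) := by
    rw [Finset.sum_const, smul_eq_mul, Finset.card_univ, Fintype.card_fin]
  have hfin : t * (4 * r) = 2 * (2 * r * t) := by ring
  omega

end GrtAux

/-- For all integers `r ≥ 1` and `t ≥ 1`, the edge Roman domination number of
`G_{r,t}` equals `2rt`. -/
theorem edgeRomanNumber_Grt (r t : ℕ) (hr : 1 ≤ r) (ht : 1 ≤ t) :
    edgeRomanNumber (Fin t × (Fin r ⊕ Fin (r + 1))) (Grt r t) = 2 * r * t := by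
  haveI : NeZero t := ⟨by omega⟩
  apply le_antisymm
  · exact Nat.sInf_le ⟨GrtAux.f0, GrtAux.f0_rdf hr, GrtAux.f0_sum.symm⟩
  · refine le_csInf ⟨2 * r * t, GrtAux.f0, GrtAux.f0_rdf hr, GrtAux.f0_sum.symm⟩ ?_
    rintro w ⟨f, hf, rfl⟩
    exact GrtAux.lower_bound hr hf
end

section
/- If r ≥ 2 and t is a positive multiple of r + 2, then the graph G_{r,t}, which has maximum degree Δ = r + 1 and n = (2r+1)t vertices, satisfies γ'_R(G_{r,t}) = 2rt > ⌈(Δ/(Δ+1)) · n⌉; equivalently, 2rt > ⌈((r+1)(2r+1)t)/(r+2)⌉. In particular, such graphs disprove the conjecture that γ'_R(G) ≤ ⌈(Δ/(Δ+1)) n⌉ for every graph G of maximum degree Δ on n vertices. -/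
open Finset SimpleGraph

/-! The lower bound `γ'_R(G_{r,t}) ≥ 2rt` is proved copy by copy. Inside a copy `K_{r,r+1}`, if `d`
edges carry the value `2`, they dominate at most `d` vertices of `X_i` and, together with the at
most two connecting edges, at most `d + 2` vertices of `Y_i`; every edge between the remaining
`≥ r - d` and `≥ r + 1 - d - 2` vertices needs the value `1`, and `2d + (r-d)(r-d-1) + 2 ≥ 2r`
(the last `2` being paid by the connecting edges, each shared by two copies). The upper bound
is given by putting `2` on a matching of size `r` in every copy: the vertices `y^i_1` it covers
dominate the connecting edges. -/

lemma two_mul_le_of_dominated_product (n k d a s h : ℕ) (had : a ≤ d) (han : a ≤ n)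
    (hs : s ≤ d + h) (hh : h ≤ 2) (hnk : n < k) :
    2 * n ≤ 2 * d + (n - a) * (k - s) + h := by
  rcases le_or_gt n d with hnd | hdn
  · nlinarith [Nat.zero_le ((n - a) * (k - s))]
  · obtain ⟨m, rfl⟩ : ∃ m, n = d + m + 1 := ⟨n - d - 1, by omega⟩
    have h1 : m + 1 ≤ d + m + 1 - a := by omega
    have h2 : m + 2 - h ≤ k - s := by omega
    have := Nat.mul_le_mul h1 h2
    interval_cases h <;> rcases m with _ | m <;> simp_all <;> nlinarith

/-- Edge Roman domination of `K_{α,β}` with `|α| < |β|`, where the vertices of `S ⊆ β` may also be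
dominated from outside. -/
theorem two_mul_card_le_sum_add_card_of_dominated {α β : Type*} [Fintype α] [Fintype β]
    [DecidableEq α] [DecidableEq β] (hcard : Fintype.card α < Fintype.card β)
    (g : α × β → ℕ) (S : Finset β) (hS : #S ≤ 2)
    (hdom : ∀ p, g p = 0 → (∃ y, g (p.1, y) = 2) ∨ (∃ x, g (x, p.2) = 2) ∨ p.2 ∈ S) :
    2 * Fintype.card α ≤ ∑ p, g p + #S := by
  set P := ({p | g p = 2} : Finset (α × β))
  set U := (P.image Prod.fst)ᶜ ×ˢ (P.image Prod.snd ∪ S)ᶜ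
  have hU : ∀ p ∈ U, 1 ≤ g p := by
    intro p hp
    simp only [U, mem_product, mem_compl, mem_union, mem_image, P, mem_filter, mem_univ,
      true_and, not_or, not_exists, not_and] at hp
    by_contra! h0
    rcases hdom p (by omega) with ⟨y, hy⟩ | ⟨x, hx⟩ | hS
    · exact hp.1 (p.1, y) hy rfl
    · exact hp.2.1 (x, p.2) hx rfl
    · exact hp.2.2 hS
  have hdisj : Disjoint P U := by
    refine disjoint_left.2 fun p hpP hpU => ?_
    exact (mem_compl.1 (mem_product.1 hpU).1) (mem_image_of_mem _ hpP)
  have hweight : 2 * #P + #U ≤ ∑ p, g p :=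
    calc 2 * #P + #U = ∑ p ∈ P, g p + ∑ _p ∈ U, 1 := by
          rw [sum_congr rfl fun p hp => (mem_filter.1 hp).2]
          simp [P, mul_comm]
      _ ≤ ∑ p ∈ P, g p + ∑ p ∈ U, g p := by gcongr with p hp; exact hU p hp
      _ = ∑ p ∈ P ∪ U, g p := (sum_union hdisj).symm
      _ ≤ ∑ p, g p := sum_le_sum_of_subset (subset_univ _)
  have hU_card : #U = (Fintype.card α - #(P.image Prod.fst)) *
      (Fintype.card β - #(P.image Prod.snd ∪ S)) := by
    simp only [U, card_product, card_compl]
  have := two_mul_le_of_dominated_product (Fintype.card α) (Fintype.card β) #P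
    #(P.image Prod.fst) #(P.image Prod.snd ∪ S) #S card_image_le (card_le_univ _)
    ((card_union_le _ _).trans (by gcongr; exact card_image_le)) hS hcard
  omega

namespace Grt

variable {r t : ℕ}

abbrev Vertex (r t : ℕ) := Fin t × (Fin r ⊕ Fin (r + 1))

def innerEdge (i : Fin t) (p : Fin r × Fin (r + 1)) : Sym2 (Vertex r t) :=
  s((i, .inl p.1), (i, .inr p.2))

def linkEdge [NeZero t] (i : Fin t) : Sym2 (Vertex r t) :=
  s((i, .inr (Fin.last r)), (i + 1, .inr 0))

lemma val_eq_val_add_one_mod_iff [NeZero t] {i j : Fin t} :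
    j.val = (i.val + 1) % t ↔ j = i + 1 := by
  rw [Fin.ext_iff, Fin.val_add, Fin.val_one', Nat.add_mod_mod]

lemma adj_inl_iff {i : Fin t} {x : Fin r} {w : Vertex r t} :
    (Grt r t).Adj (i, .inl x) w ↔ ∃ y, w = (i, .inr y) := by
  obtain ⟨j, b | y⟩ := w <;> simp [Grt, eq_comm]

lemma adj_inr [NeZero t] {i : Fin t} {y : Fin (r + 1)} {w : Vertex r t}
    (h : (Grt r t).Adj (i, .inr y) w) :
    (∃ x, w = (i, .inl x)) ∨ (y = Fin.last r ∧ w = (i + 1, .inr 0)) ∨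
      (y = 0 ∧ w = (i - 1, .inr (Fin.last r))) := by
  obtain ⟨j, b | y'⟩ := w
  · simp_all [Grt, eq_comm]
  · simp only [Grt, fromRel_adj, val_eq_val_add_one_mod_iff] at h
    obtain ⟨-, ⟨⟨-, _, _, h, -⟩ | ⟨rfl, hy, hy'⟩⟩ | ⟨-, _, _, h, -⟩ | ⟨rfl, hy', hy⟩⟩ := h
    · simp at h
    · simp_all
    · simp at h
    · simp_all

lemma innerEdge_mem_edgeSet (i : Fin t) (p : Fin r × Fin (r + 1)) :
    innerEdge i p ∈ (Grt r t).edgeSet :=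
  adj_inl_iff.2 ⟨p.2, rfl⟩

lemma innerEdge_injective :
    Function.Injective fun q : Fin t × (Fin r × Fin (r + 1)) => innerEdge q.1 q.2 := by
  rintro ⟨i, x, y⟩ ⟨j, x', y'⟩ h
  simp_all [innerEdge]

def edgeOf [NeZero t] (q : Fin t × Option (Fin r × Fin (r + 1))) : Sym2 (Vertex r t) :=
  q.2.elim (linkEdge q.1) (innerEdge q.1)

lemma edgeOf_injective [NeZero t] [NeZero r] :
    Function.Injective (edgeOf : Fin t × Option (Fin r × Fin (r + 1)) → _) := by
  rintro ⟨i, _ | p⟩ ⟨j, _ | q⟩ h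
  · simp [edgeOf, linkEdge, Fin.last_pos'.ne'] at h
    rw [h]
  · simp [edgeOf, linkEdge, innerEdge] at h
  · simp [edgeOf, linkEdge, innerEdge] at h
  · simpa using @innerEdge_injective r t (i, p) (j, q) h

lemma four_mul_le_copy_weight [NeZero t] {f : Sym2 (Vertex r t) → ℕ} (hf : EdgeRDF (Grt r t) f)
    (i : Fin t) :
    4 * r ≤ 2 * ∑ p, f (innerEdge i p) + f (linkEdge (i - 1)) + f (linkEdge i) := by
  set S : Finset (Fin (r + 1)) := (if f (linkEdge (i - 1)) = 2 then {0} else ∅) ∪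
    (if f (linkEdge i) = 2 then {Fin.last r} else ∅)
  have hS : 2 * #S ≤ f (linkEdge (i - 1)) + f (linkEdge i) := by
    refine (Nat.mul_le_mul_left 2 (card_union_le _ _)).trans ?_
    split_ifs <;> simp_all
  have hdom : ∀ p, f (innerEdge i p) = 0 → (∃ y, f (innerEdge i (p.1, y)) = 2) ∨
      (∃ x, f (innerEdge i (x, p.2)) = 2) ∨ p.2 ∈ S := by
    intro p hp
    obtain ⟨e, he, he2, -, v, hv, hve⟩ := hf.2.2 _ (innerEdge_mem_edgeSet i p) hp
    rw [← Sym2.other_spec hve] at he he2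
    rw [mem_edgeSet] at he
    rcases Sym2.mem_iff.1 hv with rfl | rfl
    · obtain ⟨y, hy⟩ := adj_inl_iff.1 he
      exact Or.inl ⟨y, by rwa [hy] at he2⟩
    · rcases adj_inr he with ⟨x, hx⟩ | ⟨hy, hw⟩ | ⟨hy, hw⟩
      · exact Or.inr (Or.inl ⟨x, by rwa [hx, Sym2.eq_swap] at he2⟩)
      · rw [hw, hy] at he2
        simp [S, hy, linkEdge, he2]
      · rw [hw, hy, Sym2.eq_swap] at he2
        have : linkEdge (i - 1) = s(((i - 1 : Fin t), Sum.inr (Fin.last r)), (i, .inr 0)) := by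
          rw [linkEdge, sub_add_cancel]
        simp [S, hy, this, he2]
  have := two_mul_card_le_sum_add_card_of_dominated (by simp) (fun p => f (innerEdge i p)) S
    (by have := hf.1 (linkEdge i); have := hf.1 (linkEdge (i - 1)); omega) hdom
  simp only [Fintype.card_fin] at this
  omega

lemma two_mul_mul_le_weight [NeZero t] [NeZero r] {f : Sym2 (Vertex r t) → ℕ}
    (hf : EdgeRDF (Grt r t) f) : 2 * r * t ≤ ∑ e, f e := by
  have hcopies : ∑ _i : Fin t, 4 * r ≤
      ∑ i, (2 * ∑ p, f (innerEdge i p) + f (linkEdge (i - 1)) + f (linkEdge i)) :=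
    sum_le_sum fun i _ => four_mul_le_copy_weight hf i
  have hshift : ∑ i : Fin t, f (linkEdge (i - 1)) = ∑ i, f (linkEdge i) :=
    (Equiv.subRight 1).sum_comp fun i => f (linkEdge i)
  have hedges : ∑ i : Fin t, (∑ p, f (innerEdge i p) + f (linkEdge i)) ≤ ∑ e, f e :=
    calc ∑ i : Fin t, (∑ p, f (innerEdge i p) + f (linkEdge i))
        = ∑ q : Fin t × Option (Fin r × Fin (r + 1)), f (edgeOf q) := by
          simp [Fintype.sum_prod_type, Fintype.sum_option, edgeOf, add_comm]
      _ = ∑ e ∈ univ.map ⟨edgeOf, edgeOf_injective⟩, f e := by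
          rw [sum_map]; rfl
      _ ≤ ∑ e, f e := sum_le_sum_of_subset (subset_univ _)
  simp only [sum_add_distrib, ← mul_sum, hshift, sum_const, card_univ, Fintype.card_fin,
    smul_eq_mul] at hcopies hedges
  linarith

variable (r t) in
def matching : Finset (Sym2 (Vertex r t)) :=
  univ.image fun q : Fin t × Fin r => innerEdge q.1 (q.2, q.2.castSucc)

variable (r t) in
def matchingRDF (e : Sym2 (Vertex r t)) : ℕ :=
  if e ∈ matching r t then 2 else 0

lemma card_matching : #(matching r t) = t * r := by
  rw [matching, card_image_of_injective, card_univ, Fintype.card_prod, Fintype.card_fin,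
    Fintype.card_fin]
  rintro ⟨i, x⟩ ⟨j, y⟩ h
  simpa using @innerEdge_injective r t (i, x, x.castSucc) (j, y, y.castSucc) h

lemma sum_matchingRDF : ∑ e, matchingRDF r t e = 2 * r * t := by
  simp only [matchingRDF]
  rw [sum_ite_mem, univ_inter, sum_const, card_matching, smul_eq_mul]
  ring

lemma exists_mem_matching_of_mem_edgeSet [NeZero t] [NeZero r] {e : Sym2 (Vertex r t)}
    (he : e ∈ (Grt r t).edgeSet) : ∃ m ∈ matching r t, ∃ v, v ∈ e ∧ v ∈ m := by
  have hX (i : Fin t) (x : Fin r) : ∃ m ∈ matching r t, ((i, .inl x) : Vertex r t) ∈ m :=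
    ⟨_, mem_image_of_mem _ (mem_univ (i, x)), Sym2.mem_mk_left _ _⟩
  have hY (i : Fin t) : ∃ m ∈ matching r t, ((i, .inr 0) : Vertex r t) ∈ m :=
    ⟨_, mem_image_of_mem _ (mem_univ (i, 0)), by simp [innerEdge]⟩
  induction e using Sym2.ind with | _ u w => ?_
  rw [mem_edgeSet] at he
  obtain ⟨i, x | y⟩ := u
  · obtain ⟨m, hm, hum⟩ := hX i x
    exact ⟨m, hm, _, Sym2.mem_mk_left _ _, hum⟩
  · rcases adj_inr he with ⟨x, rfl⟩ | ⟨-, rfl⟩ | ⟨rfl, -⟩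
    · obtain ⟨m, hm, hwm⟩ := hX i x
      exact ⟨m, hm, _, Sym2.mem_mk_right _ _, hwm⟩
    · obtain ⟨m, hm, hwm⟩ := hY (i + 1)
      exact ⟨m, hm, _, Sym2.mem_mk_right _ _, hwm⟩
    · obtain ⟨m, hm, hum⟩ := hY i
      exact ⟨m, hm, _, Sym2.mem_mk_left _ _, hum⟩

lemma edgeRDF_matchingRDF [NeZero t] [NeZero r] : EdgeRDF (Grt r t) (matchingRDF r t) := by
  refine ⟨fun e => by unfold matchingRDF; split <;> omega, fun e he => ?_, fun e he he0 => ?_⟩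
  · refine if_neg fun hm => he ?_
    obtain ⟨q, -, rfl⟩ := mem_image.1 hm
    exact innerEdge_mem_edgeSet _ _
  · obtain ⟨m, hm, v, hve, hvm⟩ := exists_mem_matching_of_mem_edgeSet he
    have hm2 : matchingRDF r t m = 2 := if_pos hm
    obtain ⟨q, -, rfl⟩ := mem_image.1 hm
    exact ⟨_, innerEdge_mem_edgeSet _ _, hm2, by rintro rfl; omega, v, hve, hvm⟩

theorem edgeRomanNumber_eq [NeZero t] [NeZero r] :
    edgeRomanNumber (Vertex r t) (Grt r t) = 2 * r * t := by
  have hmem : 2 * r * t ∈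
      {w | ∃ f : Sym2 (Vertex r t) → ℕ, EdgeRDF (Grt r t) f ∧ w = ∑ e, f e} :=
    ⟨matchingRDF r t, edgeRDF_matchingRDF, sum_matchingRDF.symm⟩
  refine le_antisymm (Nat.sInf_le hmem) (le_csInf ⟨_, hmem⟩ ?_)
  rintro w ⟨f, hf, rfl⟩
  exact two_mul_mul_le_weight hf

lemma degree_inl [DecidableRel (Grt r t).Adj] (i : Fin t) (x : Fin r) :
    (Grt r t).degree (i, .inl x) = r + 1 := by
  have : (Grt r t).neighborFinset (i, .inl x) = univ.image fun y => (i, .inr y) := by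
    ext w
    simp [adj_inl_iff, eq_comm]
  rw [← card_neighborFinset_eq_degree, this,
    card_image_of_injective _ fun a b h => by simpa using h, card_univ, Fintype.card_fin]

lemma degree_inr_le [NeZero t] [NeZero r] [DecidableRel (Grt r t).Adj] (i : Fin t)
    (y : Fin (r + 1)) : (Grt r t).degree (i, .inr y) ≤ r + 1 := by
  have : (Grt r t).neighborFinset (i, .inr y) ⊆
      insert (if y = Fin.last r then (i + 1, .inr 0) else (i - 1, .inr (Fin.last r)))
        (univ.image fun x => (i, .inl x)) := by
    intro w hw
    rcases adj_inr ((mem_neighborFinset _ _ _).1 hw) with ⟨x, rfl⟩ | ⟨rfl, rfl⟩ | ⟨rfl, rfl⟩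
    · simp
    · simp
    · simp [NeZero.ne r]
  calc (Grt r t).degree (i, .inr y) ≤ _ := by
        rw [← card_neighborFinset_eq_degree]; exact card_le_card this
    _ ≤ r + 1 := (card_insert_le _ _).trans
        (by simpa using
          card_image_le (s := univ) (f := fun x : Fin r => ((i, .inl x) : Vertex r t)))

lemma maxDegree_eq [NeZero t] [NeZero r] [DecidableRel (Grt r t).Adj] :
    (Grt r t).maxDegree = r + 1 := by
  refine le_antisymm (maxDegree_le_of_forall_degree_le _ _ ?_) ?_
  · rintro ⟨i, x | y⟩
    · exact (degree_inl i x).le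
    · exact degree_inr_le i y
  · exact (degree_inl (0 : Fin t) (0 : Fin r)).symm.trans_le (degree_le_maxDegree _ _)

end Grt

lemma ceil_lt_two_mul_mul {r t : ℕ} (hr : 2 ≤ r) (ht : 1 ≤ t) (hdvd : r + 2 ∣ t) :
    ⌈((r : ℚ) + 1) * ((2 * r + 1) * t) / ((r : ℚ) + 1 + 1)⌉ < (2 * r * t : ℤ) := by
  obtain ⟨s, rfl⟩ := hdvd
  have hs : 1 ≤ s := Nat.pos_of_mul_pos_left ht
  have hq : ((r : ℚ) + 1) * ((2 * r + 1) * ((r + 2) * s : ℕ)) / ((r : ℚ) + 1 + 1) =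
      (((r + 1) * (2 * r + 1) * s : ℤ) : ℚ) := by
    field_simp
    push_cast
    ring
  rw [hq, Int.ceil_intCast]
  push_cast
  nlinarith

/-- If `r ≥ 2` and `t` is a positive multiple of `r + 2`, then `G_{r,t}` has maximum degree
`Δ = r + 1`, has `n = (2r+1)t` vertices, and satisfies
`γ'_R(G_{r,t}) = 2rt > ⌈(Δ/(Δ+1))·n⌉`, disproving the conjecture
`γ'_R(G) ≤ ⌈(Δ/(Δ+1))·n⌉`. -/
theorem Grt_counterexample (r t : ℕ) (hr : 2 ≤ r) (ht : 1 ≤ t) (hdvd : (r + 2) ∣ t) :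
    (@SimpleGraph.maxDegree (Fin t × (Fin r ⊕ Fin (r + 1))) (Grt r t) _
        (Classical.decRel _) = r + 1) ∧
    Fintype.card (Fin t × (Fin r ⊕ Fin (r + 1))) = (2 * r + 1) * t ∧
    edgeRomanNumber (Fin t × (Fin r ⊕ Fin (r + 1))) (Grt r t) = 2 * r * t ∧
    ((2 * r * t : ℤ) >
      ⌈(((r : ℚ) + 1) * ((2 * r + 1) * t)) / ((r : ℚ) + 1 + 1)⌉) := by
  have : NeZero r := ⟨by omega⟩
  have : NeZero t := ⟨by omega⟩
  refine ⟨@Grt.maxDegree_eq r t _ _ (Classical.decRel _), ?_, Grt.edgeRomanNumber_eq,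
    ceil_lt_two_mul_mul hr ht hdvd⟩
  simp only [Fintype.card_prod, Fintype.card_sum, Fintype.card_fin]
  ring
end

section
/- If a graph G has a removable triple (S, M₂, M₁) with ratio ρ(S, M₂, M₁) ≤ α, then γ'_R(G) ≤ γ'_R(G − S) + α·|S|. -/
open Finset SimpleGraph

/-- `M` is a matching of `G` (a set of pairwise non-adjacent edges of `G`) inside
the induced subgraph `G[S]` (i.e. all endpoints belong to `S`). -/
def IsMatchingOn {V : Type*} (G : SimpleGraph V) (S : Finset V)
    (M : Finset (Sym2 V)) : Prop :=
  (∀ e ∈ M, e ∈ G.edgeSet ∧ ∀ v ∈ e, v ∈ S) ∧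
  (∀ e ∈ M, ∀ e' ∈ M, e ≠ e' → ∀ v, v ∈ e → v ∉ e')

/-- A removable triple `(S, M₂, M₁)`: `S` is a nonempty set of vertices, `M₂` and `M₁`
are disjoint matchings in `G[S]`, and every edge of `G` not in `M₁` that is incident
to a vertex of `S` is adjacent to some edge of `M₂`. -/
def RemovableTriple {V : Type*} (G : SimpleGraph V) (S : Finset V)
    (M2 M1 : Finset (Sym2 V)) : Prop :=
  S.Nonempty ∧ Disjoint M2 M1 ∧ IsMatchingOn G S M2 ∧ IsMatchingOn G S M1 ∧
  ∀ e ∈ G.edgeSet, e ∉ M1 → (∃ v ∈ e, v ∈ S) →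
    ∃ e' ∈ M2, e' ≠ e ∧ ∃ v, v ∈ e ∧ v ∈ e'

/-- The ratio `ρ(S, M₂, M₁) = (2|M₂| + |M₁|)/|S|` of a removable triple. -/
noncomputable def removableRatio {V : Type*} (S : Finset V)
    (M2 M1 : Finset (Sym2 V)) : ℝ :=
  (2 * M2.card + M1.card : ℝ) / S.card

/-- `G − S`: the subgraph of `G` induced on the vertices outside of `S`. -/
def deleteVerts {V : Type*} [DecidableEq V] (G : SimpleGraph V) (S : Finset V) :
    SimpleGraph {v : V // v ∉ S} :=
  SimpleGraph.comap Subtype.val G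

private lemma exists_optimal_rdf {V : Type*} [Fintype V] [DecidableEq V] (G : SimpleGraph V) :
    ∃ f : Sym2 V → ℕ, EdgeRDF G f ∧ ∑ e : Sym2 V, f e = edgeRomanNumber V G := by
  classical
  have hne : {w | ∃ f : Sym2 V → ℕ, EdgeRDF G f ∧ w = ∑ e : Sym2 V, f e}.Nonempty := by
    refine ⟨_, fun e => if e ∈ G.edgeSet then 2 else 0, ⟨?_, ?_, ?_⟩, rfl⟩
    · intro e; dsimp only; split <;> omega
    · intro e he; simp [he]
    · intro e he h0; simp [he] at h0
  obtain ⟨f, hf, hw⟩ := Nat.sInf_mem hne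
  exact ⟨f, hf, hw.symm⟩

/-- If a graph `G` has a removable triple `(S, M₂, M₁)` with ratio at most `α`, then
`γ'_R(G) ≤ γ'_R(G − S) + α·|S|`. -/
theorem edgeRomanNumber_le_of_removableTriple {V : Type*} [Fintype V] [DecidableEq V]
    (G : SimpleGraph V) (S : Finset V) (M2 M1 : Finset (Sym2 V)) (α : ℝ)
    (hrt : RemovableTriple G S M2 M1) (hρ : removableRatio S M2 M1 ≤ α) :
    (edgeRomanNumber V G : ℝ) ≤
      edgeRomanNumber {v : V // v ∉ S} (deleteVerts G S) + α * S.card := by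
  classical
  obtain ⟨hS, hdisj, hM2, hM1, hdom⟩ := hrt
  obtain ⟨f', hf', hw'⟩ := exists_optimal_rdf (deleteVerts G S)
  set ι : {v : V // v ∉ S} → V := Subtype.val with hι
  have hinj : Function.Injective ι := Subtype.val_injective
  have hminj : Function.Injective (Sym2.map ι) := Sym2.map.injective hinj
  set g : Sym2 V → ℕ :=
    fun e => ∑ e' ∈ univ.filter (fun e' => Sym2.map ι e' = e), f' e' with hg
  have hg_eq : ∀ e₀ : Sym2 {v : V // v ∉ S}, g (Sym2.map ι e₀) = f' e₀ := by
    intro e₀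
    have hfil : univ.filter (fun e' => Sym2.map ι e' = Sym2.map ι e₀) = {e₀} := by
      ext e'; simp [hminj.eq_iff]
    rw [hg]; simp only [hfil, Finset.sum_singleton]
  have hg_zero : ∀ e, (∀ e₀ : Sym2 {v : V // v ∉ S}, Sym2.map ι e₀ ≠ e) → g e = 0 := by
    intro e h
    rw [hg]
    have : univ.filter (fun e' => Sym2.map ι e' = e) = (∅ : Finset (Sym2 {v : V // v ∉ S})) := by
      ext e'; simp [h e']
    simp [this]
  have hg_sum : ∑ e : Sym2 V, g e = ∑ e' : Sym2 {v : V // v ∉ S}, f' e' := by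
    rw [hg]
    exact Finset.sum_fiberwise _ _ _
  have hmem_map : ∀ e₀ : Sym2 {v : V // v ∉ S},
      e₀ ∈ (deleteVerts G S).edgeSet ↔ Sym2.map ι e₀ ∈ G.edgeSet := by
    intro e₀
    induction e₀ using Sym2.ind with
    | _ a b =>
      simp only [Sym2.map_pair_eq, SimpleGraph.mem_edgeSet]
      rfl
  have hg_le : ∀ e, g e ≤ 2 := by
    intro e
    by_cases h : ∃ e₀ : Sym2 {v : V // v ∉ S}, Sym2.map ι e₀ = e
    · obtain ⟨e₀, rfl⟩ := h
      rw [hg_eq]; exact hf'.1 e₀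
    · push_neg at h
      rw [hg_zero e h]; omega
  set F : Sym2 V → ℕ := fun e => if e ∈ M2 then 2 else if e ∈ M1 then 1 else g e with hF
  have hF_M2 : ∀ e ∈ M2, F e = 2 := by intro e he; simp [hF, he]
  have hF_out : ∀ e₀ : Sym2 {v : V // v ∉ S}, F (Sym2.map ι e₀) = f' e₀ := by
    intro e₀
    have hvert : ∀ M : Finset (Sym2 V), IsMatchingOn G S M → Sym2.map ι e₀ ∉ M := by
      intro M hM hmem
      obtain ⟨v₀, hv₀⟩ : ∃ v, v ∈ e₀ := by
        induction e₀ using Sym2.ind with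
        | _ a b => exact ⟨a, Sym2.mem_mk_left a b⟩
      have : ι v₀ ∈ Sym2.map ι e₀ := Sym2.mem_map.mpr ⟨v₀, hv₀, rfl⟩
      exact v₀.2 ((hM.1 _ hmem).2 _ this)
    rw [hF]
    simp only [if_neg (hvert M2 hM2), if_neg (hvert M1 hM1)]
    exact hg_eq e₀
  have hF_rdf : EdgeRDF G F := by
    refine ⟨?_, ?_, ?_⟩
    · intro e
      simp only [hF]; split_ifs with h1 h2
      · omega
      · omega
      · exact hg_le e
    · intro e he
      have h1 : e ∉ M2 := fun h => he (hM2.1 e h).1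
      have h2 : e ∉ M1 := fun h => he (hM1.1 e h).1
      rw [hF]; simp only [if_neg h1, if_neg h2]
      by_cases h : ∃ e₀ : Sym2 {v : V // v ∉ S}, Sym2.map ι e₀ = e
      · obtain ⟨e₀, rfl⟩ := h
        rw [hg_eq]
        exact hf'.2.1 e₀ (fun hmem => he ((hmem_map e₀).1 hmem))
      · push_neg at h; exact hg_zero e h
    · intro e he h0
      have h1 : e ∉ M2 := by intro h; rw [hF] at h0; simp [h] at h0
      have h2 : e ∉ M1 := by intro h; rw [hF] at h0; simp [h1, h] at h0
      have hge : g e = 0 := by rw [hF] at h0; simpa [h1, h2] using h0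
      by_cases hs : ∃ v ∈ e, v ∈ S
      · obtain ⟨e', he'M2, hne, v, hv1, hv2⟩ := hdom e he h2 hs
        exact ⟨e', (hM2.1 e' he'M2).1, hF_M2 e' he'M2, hne, v, hv1, hv2⟩
      · push_neg at hs
        revert he h0 h1 h2 hge hs
        induction e using Sym2.ind with
        | _ a b =>
          intro he h0 h1 h2 hge hs
          have ha : a ∉ S := hs a (Sym2.mem_mk_left a b)
          have hb : b ∉ S := hs b (Sym2.mem_mk_right a b)
          set e₀ : Sym2 {v : V // v ∉ S} := s(⟨a, ha⟩, ⟨b, hb⟩) with he₀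
          have hmap : Sym2.map ι e₀ = s(a, b) := by
            rw [he₀]; simp [Sym2.map_pair_eq, hι]
          have hmem₀ : e₀ ∈ (deleteVerts G S).edgeSet := by
            rw [hmem_map, hmap]; exact he
          have hz₀ : f' e₀ = 0 := by
            rw [← hg_eq e₀, hmap]; exact hge
          obtain ⟨e₁, he₁, hf2, hne₁, v₀, hv₀e₀, hv₀e₁⟩ := hf'.2.2 e₀ hmem₀ hz₀
          refine ⟨Sym2.map ι e₁, (hmem_map e₁).1 he₁, ?_, ?_, ι v₀, ?_, ?_⟩
          · rw [hF_out]; exact hf2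
          · intro h
            exact hne₁ (hminj (by rw [h, hmap]))
          · rw [← hmap]; exact Sym2.mem_map.mpr ⟨v₀, hv₀e₀, rfl⟩
          · exact Sym2.mem_map.mpr ⟨v₀, hv₀e₁, rfl⟩
  have hwF : ∑ e : Sym2 V, F e ≤ 2 * M2.card + M1.card + ∑ e' : Sym2 {v : V // v ∉ S}, f' e' := by
    have hpt : ∀ e : Sym2 V,
        F e ≤ (if e ∈ M2 then 2 else 0) + (if e ∈ M1 then 1 else 0) + g e := by
      intro e; simp only [hF]; split_ifs <;> omega
    calc ∑ e : Sym2 V, F e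
        ≤ ∑ e : Sym2 V, ((if e ∈ M2 then 2 else 0) + (if e ∈ M1 then 1 else 0) + g e) :=
          Finset.sum_le_sum (fun e _ => hpt e)
      _ = (∑ e : Sym2 V, if e ∈ M2 then 2 else 0) + (∑ e : Sym2 V, if e ∈ M1 then 1 else 0)
            + ∑ e : Sym2 V, g e := by rw [Finset.sum_add_distrib, Finset.sum_add_distrib]
      _ = 2 * M2.card + M1.card + ∑ e' : Sym2 {v : V // v ∉ S}, f' e' := by
          rw [hg_sum, Finset.sum_ite_mem, Finset.sum_ite_mem]
          simp [Finset.univ_inter, mul_comm]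
  have hγ : edgeRomanNumber V G ≤ ∑ e : Sym2 V, F e :=
    Nat.sInf_le ⟨F, hF_rdf, rfl⟩
  have hScard : (0 : ℝ) < S.card := by
    exact_mod_cast Finset.card_pos.mpr hS
  have hρ' : (2 * M2.card + M1.card : ℝ) ≤ α * S.card := by
    rw [removableRatio, div_le_iff₀ hScard] at hρ
    exact hρ
  have h1 : (edgeRomanNumber V G : ℝ) ≤ (∑ e : Sym2 V, F e : ℕ) := by exact_mod_cast hγ
  have h2 : ((∑ e : Sym2 V, F e : ℕ) : ℝ)
      ≤ (2 * M2.card + M1.card : ℝ) + edgeRomanNumber {v : V // v ∉ S} (deleteVerts G S) := by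
    have := hwF
    rw [hw'] at this
    exact_mod_cast this
  linarith
end

section
/- Let (S, M₂, M₁) be a removable triple of a graph G and let α be a real number. If γ'_R(G − S) ≤ α·|V(G − S)| but γ'_R(G) > α·|V(G)|, then ρ(S, M₂, M₁) > α. -/
open Finset SimpleGraph

/-- The set of weights of edge Roman dominating functions is nonempty. -/
lemma rdfSet_nonempty {V : Type*} [Fintype V] [DecidableEq V] (G : SimpleGraph V) :
    {w | ∃ f : Sym2 V → ℕ, EdgeRDF G f ∧ w = ∑ e : Sym2 V, f e}.Nonempty := by
  classical
  refine ⟨_, fun e => if e ∈ G.edgeSet then 2 else 0, ⟨?_, ?_, ?_⟩, rfl⟩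
  · intro e; dsimp only; split <;> omega
  · intro e he; simp [he]
  · intro e he h0; simp [he] at h0

/-- If `(S, M₂, M₁)` is a removable triple of `G`, `γ'_R(G − S) ≤ α·|V(G − S)|`, and
`γ'_R(G) > α·|V(G)|`, then `ρ(S, M₂, M₁) > α`. -/
theorem removableRatio_gt {V : Type*} [Fintype V] [DecidableEq V]
    (G : SimpleGraph V) (S : Finset V) (M2 M1 : Finset (Sym2 V)) (α : ℝ)
    (hrt : RemovableTriple G S M2 M1)
    (h1 : (edgeRomanNumber {v : V // v ∉ S} (deleteVerts G S) : ℝ) ≤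
      α * Fintype.card {v : V // v ∉ S})
    (h2 : (edgeRomanNumber V G : ℝ) > α * Fintype.card V) :
    removableRatio S M2 M1 > α := by
  
  classical
  obtain ⟨hSne, hdisj, hM2, hM1, hcov⟩ := hrt
  -- an optimal edge RDF of G − S
  obtain ⟨f', hf', hw'⟩ := Nat.sInf_mem (rdfSet_nonempty (deleteVerts G S))
  set m : Sym2 {v : V // v ∉ S} → Sym2 V := Sym2.map Subtype.val with hm
  have hm_inj : Function.Injective m := Sym2.map.injective Subtype.val_injective
  set fib : Sym2 V → ℕ := fun e => ∑ x ∈ univ.filter (fun x => m x = e), f' x with hfib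
  have hfib_map : ∀ x, fib (m x) = f' x := by
    intro x
    have hx : univ.filter (fun y => m y = m x) = {x} := by
      ext y; simp [hm_inj.eq_iff]
    simp [hfib, hx]
  have hfib_S : ∀ e : Sym2 V, (∃ v ∈ e, v ∈ S) → fib e = 0 := by
    rintro e ⟨v, hv, hvS⟩
    apply Finset.sum_eq_zero
    intro x hx
    simp only [Finset.mem_filter, Finset.mem_univ, true_and] at hx
    exfalso
    have hv' : v ∈ m x := hx ▸ hv
    obtain ⟨a, _, ha⟩ := Sym2.mem_map.mp hv'
    exact a.property (ha ▸ hvS)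
  have hedge : ∀ x : Sym2 {v : V // v ∉ S},
      x ∈ (deleteVerts G S).edgeSet ↔ m x ∈ G.edgeSet := by
    intro x
    induction x using Sym2.ind with
    | _ a b => simp [deleteVerts, hm, SimpleGraph.mem_edgeSet]
  have hfib_notedge : ∀ e : Sym2 V, e ∉ G.edgeSet → fib e = 0 := by
    intro e he
    apply Finset.sum_eq_zero
    intro x hx
    simp only [Finset.mem_filter, Finset.mem_univ, true_and] at hx
    by_contra h
    have hx_edge : x ∈ (deleteVerts G S).edgeSet := by
      by_contra hxe; exact h (hf'.2.1 x hxe)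
    exact he (hx ▸ (hedge x).mp hx_edge)
  have hfib_le : ∀ e, fib e ≤ 2 := by
    intro e
    by_cases h : ∃ x, m x = e
    · obtain ⟨x, rfl⟩ := h; rw [hfib_map]; exact hf'.1 x
    · push_neg at h
      have hempty : univ.filter (fun x => m x = e) = ∅ := by
        ext x; simp [h x]
      simp [hfib, hempty]
  -- the extended function on G
  set F : Sym2 V → ℕ :=
    fun e => (if e ∈ M2 then 2 else if e ∈ M1 then 1 else 0) + fib e with hF
  have hM2fib : ∀ e ∈ M2, fib e = 0 := by
    intro e he
    exact hfib_S e ⟨(Quot.out e).1, Sym2.out_fst_mem e,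
      (hM2.1 e he).2 _ (Sym2.out_fst_mem e)⟩
  have hM1fib : ∀ e ∈ M1, fib e = 0 := by
    intro e he
    exact hfib_S e ⟨(Quot.out e).1, Sym2.out_fst_mem e,
      (hM1.1 e he).2 _ (Sym2.out_fst_mem e)⟩
  have hFrdf : EdgeRDF G F := by
    refine ⟨?_, ?_, ?_⟩
    · intro e
      by_cases h2 : e ∈ M2
      · simp [hF, h2, hM2fib e h2]
      · by_cases h1 : e ∈ M1
        · simp [hF, h2, h1, hM1fib e h1]
        · simp only [hF, h2, h1, if_false, zero_add]
          exact hfib_le e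
    · intro e he
      have h2 : e ∉ M2 := fun h => he (hM2.1 e h).1
      have h1 : e ∉ M1 := fun h => he (hM1.1 e h).1
      simp [hF, h2, h1, hfib_notedge e he]
    · intro e he h0
      have h2 : e ∉ M2 := by intro h; simp [hF, h] at h0
      have h1 : e ∉ M1 := by intro h; simp [hF, h, h2] at h0
      have hfib0 : fib e = 0 := by simpa [hF, h2, h1] using h0
      by_cases hS : ∃ v ∈ e, v ∈ S
      · obtain ⟨e', he'M2, hne, v, hv, hv'⟩ := hcov e he h1 hS
        have he'M1 : e' ∉ M1 := fun h => (Finset.disjoint_left.mp hdisj he'M2) h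
        refine ⟨e', (hM2.1 e' he'M2).1, ?_, hne, v, hv, hv'⟩
        simp [hF, he'M2, hM2fib e' he'M2]
      · push_neg at hS
        obtain ⟨a, b, rfl⟩ : ∃ a b, e = s(a, b) := by
          induction e using Sym2.ind with
          | _ a b => exact ⟨a, b, rfl⟩
        have haS : a ∉ S := hS a (Sym2.mem_mk_left a b)
        have hbS : b ∉ S := hS b (Sym2.mem_mk_right a b)
        set x : Sym2 {v : V // v ∉ S} := s(⟨a, haS⟩, ⟨b, hbS⟩) with hxdef
        have hmx : m x = s(a, b) := by simp [hm, hxdef]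
        have hx_edge : x ∈ (deleteVerts G S).edgeSet := (hedge x).mpr (hmx ▸ he)
        have hfx : f' x = 0 := by rw [← hfib_map x, hmx]; exact hfib0
        obtain ⟨x', hx'e, hx'2, hx'ne, v, hvx, hvx'⟩ := hf'.2.2 x hx_edge hfx
        have hvval : (v : V) ∈ m x' := Sym2.mem_map.mpr ⟨v, hvx', rfl⟩
        have hx'M2 : m x' ∉ M2 := fun h => v.property ((hM2.1 _ h).2 _ hvval)
        have hx'M1 : m x' ∉ M1 := fun h => v.property ((hM1.1 _ h).2 _ hvval)
        refine ⟨m x', (hedge x').mp hx'e, ?_, ?_, (v : V), ?_, hvval⟩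
        · simp [hF, hx'M2, hx'M1, hfib_map, hx'2]
        · intro h
          exact hx'ne (hm_inj (h.trans hmx.symm))
        · have : (v : V) ∈ m x := Sym2.mem_map.mpr ⟨v, hvx, rfl⟩
          rwa [hmx] at this
  -- weight of F
  have hsumF : ∑ e : Sym2 V, F e =
      (∑ x : Sym2 {v : V // v ∉ S}, f' x) + (2 * M2.card + M1.card) := by
    have hsplit : ∀ e : Sym2 V,
        (if e ∈ M2 then 2 else if e ∈ M1 then 1 else 0)
          = (if e ∈ M2 then 2 else 0) + (if e ∈ M1 then 1 else 0) := by
      intro e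
      by_cases h2 : e ∈ M2
      · have h1 : e ∉ M1 := fun h => (Finset.disjoint_left.mp hdisj h2) h
        simp [h2, h1]
      · by_cases h1 : e ∈ M1 <;> simp [h2, h1]
    have hsfib : ∑ e : Sym2 V, fib e = ∑ x : Sym2 {v : V // v ∉ S}, f' x := by
      simpa [hfib] using Finset.sum_fiberwise (univ : Finset (Sym2 {v : V // v ∉ S})) m f'
    calc ∑ e : Sym2 V, F e
        = ∑ e : Sym2 V, ((if e ∈ M2 then 2 else 0) + (if e ∈ M1 then 1 else 0) + fib e) := by
          apply Finset.sum_congr rfl; intro e _; rw [hF]; simp only [hsplit e]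
      _ = (∑ e : Sym2 V, if e ∈ M2 then 2 else 0)
          + (∑ e : Sym2 V, if e ∈ M1 then 1 else 0) + ∑ e : Sym2 V, fib e := by
          rw [Finset.sum_add_distrib, Finset.sum_add_distrib]
      _ = 2 * M2.card + M1.card + ∑ x : Sym2 {v : V // v ∉ S}, f' x := by
          rw [Finset.sum_ite_mem, Finset.sum_ite_mem, Finset.univ_inter, Finset.univ_inter,
            Finset.sum_const, Finset.sum_const, hsfib]
          ring
      _ = (∑ x : Sym2 {v : V // v ∉ S}, f' x) + (2 * M2.card + M1.card) := by ring
  have hle : edgeRomanNumber V G ≤ ∑ e : Sym2 V, F e :=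
    Nat.sInf_le ⟨F, hFrdf, rfl⟩
  -- arithmetic
  have hScard : (0 : ℝ) < S.card := by
    exact_mod_cast Finset.card_pos.mpr hSne
  have hScard_le : S.card ≤ Fintype.card V := by
    simpa using Finset.card_le_card (Finset.subset_univ S)
  have hcard' : (Fintype.card {v : V // v ∉ S} : ℝ)
      = (Fintype.card V : ℝ) - S.card := by
    have : Fintype.card {v : V // v ∉ S} = Fintype.card V - S.card := by
      rw [Fintype.card_subtype_compl]
      congr 1
      simp [Fintype.card_subtype]
    rw [this, Nat.cast_sub hScard_le]
  have hkey : (edgeRomanNumber V G : ℝ)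
      ≤ (edgeRomanNumber {v : V // v ∉ S} (deleteVerts G S) : ℝ)
        + (2 * M2.card + M1.card) := by
    have := hle
    rw [hsumF, ← hw'] at this
    exact_mod_cast this
  have hfin : α * S.card < 2 * M2.card + M1.card := by
    have h3 : (edgeRomanNumber V G : ℝ)
        ≤ α * ((Fintype.card V : ℝ) - S.card) + (2 * M2.card + M1.card) := by
      rw [← hcard']
      linarith [hkey, h1]
    nlinarith [h2, h3]
  rw [removableRatio, gt_iff_lt, lt_div_iff₀ hScard]
  linarith
end

section
/- If G is a k-degenerate graph on n vertices, then γ'_R(G) ≤ (2k/(2k+1))·n. -/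
open Finset SimpleGraph

/-- A graph is `k`-degenerate if every nonempty subgraph contains
a vertex of degree at most `k`. -/
def KDegenerate {V : Type*} (G : SimpleGraph V) (k : ℕ) : Prop :=
  ∀ H : G.Subgraph, H.verts.Nonempty → ∃ v ∈ H.verts, (H.neighborSet v).ncard ≤ k

/-! Peel off a vertex `v` of degree `d ≤ k` in the remaining graph, together with a greedy
matching out of its neighbourhood: each neighbour `t` is matched (weight `2` on `tu`) to a vertex
`u` not yet removed if there is one, and otherwise gets weight `1` on `vt`. The removed set `S` has
`w + 1` vertices, where `w ≤ 2d ≤ 2k` is the weight spent, so `(2k+1) w ≤ 2k |S|`. Every edge of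
weight `0` meeting `S` meets a matched vertex, since a neighbour of `v` is left unmatched only when
all its other neighbours are already in `S`. Recurse on what is left. -/

section

variable {V : Type*}

def RomanDominated (f : Sym2 V → ℕ) (e : Sym2 V) : Prop :=
  ∃ e', f e' = 2 ∧ e' ≠ e ∧ ∃ x ∈ e, x ∈ e'

theorem RomanDominated.mono {f g : Sym2 V → ℕ} {e : Sym2 V} (h : RomanDominated f e)
    (hfg : ∀ e', f e' = 2 → g e' = 2) : RomanDominated g e :=
  let ⟨e', he', hne, x, hxe, hxe'⟩ := h
  ⟨e', hfg e' he', hne, x, hxe, hxe'⟩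

section Update

variable [DecidableEq V]

theorem romanDominated_update_two (f : Sym2 V → ℕ) {a e : Sym2 V} (hne : a ≠ e) {x : V}
    (hxe : x ∈ e) (hxa : x ∈ a) : RomanDominated (Function.update f a 2) e :=
  ⟨a, by simp, hne, x, hxe, hxa⟩

theorem RomanDominated.update {f : Sym2 V → ℕ} {a e : Sym2 V} (h : RomanDominated f e)
    (ha : f a = 0) (b : ℕ) : RomanDominated (Function.update f a b) e :=
  h.mono fun e' he' => by rwa [Function.update_of_ne (by rintro rfl; omega)]

end Update

theorem Fintype.sum_update_of_eq_zero {ι M : Type*} [Fintype ι] [DecidableEq ι] [AddCommMonoid M]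
    {f : ι → M} {a : ι} (ha : f a = 0) (b : M) : ∑ i, Function.update f a b i = ∑ i, f i + b := by
  rw [sum_update_of_mem (mem_univ a), sdiff_singleton_eq_erase, sum_erase _ ha, add_comm]

/-- `f` is an edge Roman dominating function of the subgraph of `G` induced by `s`. -/
structure IsEdgeRDFOn (G : SimpleGraph V) (s : Finset V) (f : Sym2 V → ℕ) : Prop where
  le_two : ∀ e, f e ≤ 2
  support : ∀ e, f e ≠ 0 → e ∈ G.edgeSet ∧ e ∈ s.sym2
  dominated : ∀ e ∈ G.edgeSet, e ∈ s.sym2 → f e = 0 → RomanDominated f e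

theorem isEdgeRDFOn_empty (G : SimpleGraph V) : IsEdgeRDFOn G ∅ 0 where
  le_two := by simp
  support := by simp
  dominated := by simp

theorem IsEdgeRDFOn.edgeRDF [Fintype V] {G : SimpleGraph V} {f : Sym2 V → ℕ}
    (h : IsEdgeRDFOn G univ f) : EdgeRDF G f := by
  refine ⟨h.le_two, fun e he => by_contra fun hf => he (h.support e hf).1, ?_⟩
  intro e he hf
  obtain ⟨e', he', hne, x, hxe, hxe'⟩ := h.dominated e he (by simp) hf
  exact ⟨e', (h.support e' (by omega)).1, he', hne, x, hxe, hxe'⟩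

theorem KDegenerate.exists_card_filter_adj_le {G : SimpleGraph V} [DecidableRel G.Adj] {k : ℕ}
    (hG : KDegenerate G k) {s : Finset V} (hs : s.Nonempty) :
    ∃ v ∈ s, #{w ∈ s | G.Adj v w} ≤ k := by
  obtain ⟨v, hv, hdeg⟩ := hG ((⊤ : G.Subgraph).induce s) (by simpa using hs)
  refine ⟨v, by simpa using hv, ?_⟩
  have hv : v ∈ s := by simpa using hv
  convert hdeg using 1
  rw [← Set.ncard_coe_finset]
  congr 1
  ext w
  simp [hv]

variable [Fintype V] {G : SimpleGraph V}

/-- One step of the recursion: `S ∋ v` is removed from `s`. The edges through `v` are excluded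
from `dominated`; they are handled once all neighbours of `v` in `s` have been put into `S`. -/
structure IsPeeling (G : SimpleGraph V) (s : Finset V) (v : V) (S : Finset V)
    (g : Sym2 V → ℕ) : Prop where
  subset : S ⊆ s
  mem : v ∈ S
  le_two : ∀ e, g e ≤ 2
  support : ∀ e, g e ≠ 0 → e ∈ G.edgeSet ∧ e ∈ S.sym2
  dominated : ∀ e ∈ G.edgeSet, e ∈ s.sym2 → (∃ x ∈ e, x ∈ S ∧ x ≠ v) → g e = 0 →
    RomanDominated g e
  weight : ∑ e, g e + 1 = #S

namespace IsPeeling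

variable {s S : Finset V} {v t u : V} {g : Sym2 V → ℕ}

theorem singleton (hv : v ∈ s) : IsPeeling G s v {v} 0 where
  subset := singleton_subset_iff.2 hv
  mem := mem_singleton_self v
  le_two := by simp
  support := by simp
  dominated := by
    rintro e - - ⟨x, -, hx, hxv⟩
    exact absurd (mem_singleton.1 hx) hxv
  weight := by simp

theorem apply_eq_zero_of_notMem (h : IsPeeling G s v S g) {e : Sym2 V} {x : V} (hx : x ∈ e)
    (hxS : x ∉ S) : g e = 0 :=
  by_contra fun he => hxS (mem_sym2_iff.1 (h.support e he).2 x hx)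

variable [DecidableEq V]

theorem insert_matched (h : IsPeeling G s v S g) (ht : t ∈ s) (hu : u ∈ s) (htS : t ∉ S)
    (huS : u ∉ S) (htu : G.Adj t u) :
    IsPeeling G s v (insert t (insert u S)) (Function.update g s(t, u) 2) where
  subset := insert_subset ht (insert_subset hu h.subset)
  mem := mem_insert_of_mem (mem_insert_of_mem h.mem)
  le_two e := by
    rcases eq_or_ne e s(t, u) with rfl | hne
    · simp
    · simpa [hne] using h.le_two e
  support e he := by
    rcases eq_or_ne e s(t, u) with rfl | hne
    · exact ⟨htu, by simp⟩
    · rw [Function.update_of_ne hne] at he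
      exact ⟨(h.support e he).1, sym2_mono (by grind) (h.support e he).2⟩
  dominated e he hes := by
    rintro ⟨x, hxe, hxS', hxv⟩ hge
    have hne : e ≠ s(t, u) := by rintro rfl; simp at hge
    rw [Function.update_of_ne hne] at hge
    rcases mem_insert.1 hxS' with rfl | hxS'
    · exact romanDominated_update_two g hne.symm hxe (Sym2.mem_mk_left _ _)
    rcases mem_insert.1 hxS' with rfl | hxS
    · exact romanDominated_update_two g hne.symm hxe (Sym2.mem_mk_right _ _)
    · exact (h.dominated e he hes ⟨x, hxe, hxS, hxv⟩ hge).update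
        (h.apply_eq_zero_of_notMem (Sym2.mem_mk_left t u) htS) 2
  weight := by
    rw [Fintype.sum_update_of_eq_zero (h.apply_eq_zero_of_notMem (Sym2.mem_mk_left t u) htS),
      card_insert_of_notMem (by grind [G.ne_of_adj htu]), card_insert_of_notMem huS, ← h.weight]

theorem insert_pendant (h : IsPeeling G s v S g) (ht : t ∈ s) (htS : t ∉ S) (hvt : G.Adj v t)
    (hfree : ∀ u ∈ s, G.Adj t u → u ∈ S) :
    IsPeeling G s v (insert t S) (Function.update g s(v, t) 1) where
  subset := insert_subset ht h.subset
  mem := mem_insert_of_mem h.mem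
  le_two e := by
    rcases eq_or_ne e s(v, t) with rfl | hne
    · simp
    · simpa [hne] using h.le_two e
  support e he := by
    rcases eq_or_ne e s(v, t) with rfl | hne
    · exact ⟨hvt, by simp [h.mem]⟩
    · rw [Function.update_of_ne hne] at he
      exact ⟨(h.support e he).1, sym2_mono (subset_insert t S) (h.support e he).2⟩
  dominated e he hes := by
    rintro ⟨x, hxe, hxS', hxv⟩ hge
    have hne : e ≠ s(v, t) := by rintro rfl; simp at hge
    rw [Function.update_of_ne hne] at hge
    refine (h.dominated e he hes ?_ hge).update
      (h.apply_eq_zero_of_notMem (Sym2.mem_mk_right v t) htS) 1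
    rcases mem_insert.1 hxS' with rfl | hxS
    · obtain ⟨y, rfl⟩ := Sym2.mem_iff_exists.1 hxe
      refine ⟨y, Sym2.mem_mk_right _ _, hfree y (mk_mem_sym2_iff.1 hes).2 he, ?_⟩
      rintro rfl
      exact hne Sym2.eq_swap
    · exact ⟨x, hxe, hxS, hxv⟩
  weight := by
    rw [Fintype.sum_update_of_eq_zero (h.apply_eq_zero_of_notMem (Sym2.mem_mk_right v t) htS),
      card_insert_of_notMem htS, ← h.weight]

theorem add (hP : IsPeeling G s v S g) (hN : ∀ w ∈ s, G.Adj v w → w ∈ S) {f : Sym2 V → ℕ}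
    (hf : IsEdgeRDFOn G (s \ S) f) : IsEdgeRDFOn G s (g + f) := by
  have hsupp : ∀ e, g e ≠ 0 → f e ≠ 0 → False := fun e hg hf' =>
    (mem_sdiff.1 (mem_sym2_iff.1 (hf.support e hf').2 _ (Sym2.out_fst_mem e))).2
      (mem_sym2_iff.1 (hP.support e hg).2 _ (Sym2.out_fst_mem e))
  have hg2 : ∀ e, g e = 2 → (g + f) e = 2 := fun e he => by
    have : f e = 0 := by_contra (hsupp e (by omega))
    simp [he, this]
  have hf2 : ∀ e, f e = 2 → (g + f) e = 2 := fun e he => by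
    have : g e = 0 := by_contra fun hg => hsupp e hg (by omega)
    simp [he, this]
  refine ⟨fun e => ?_, fun e he => ?_, fun e he hes hfe => ?_⟩
  · by_cases hg : g e = 0
    · simpa [hg] using hf.le_two e
    · simpa [by_contra (hsupp e hg)] using hP.le_two e
  · by_cases hg : g e = 0
    · have := hf.support e (by simpa [hg] using he)
      exact ⟨this.1, sym2_mono sdiff_subset this.2⟩
    · exact ⟨(hP.support e hg).1, sym2_mono hP.subset (hP.support e hg).2⟩
  obtain ⟨hg0, hf0⟩ := Nat.add_eq_zero_iff.1 hfe
  by_cases hmeet : ∃ x ∈ e, x ∈ S ∧ x ≠ v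
  · exact (hP.dominated e he hes hmeet hg0).mono hg2
  have hv : v ∉ e := by
    intro hv
    obtain ⟨w, rfl⟩ := Sym2.mem_iff_exists.1 hv
    exact hmeet ⟨w, Sym2.mem_mk_right _ _, hN w (mk_mem_sym2_iff.1 hes).2 he, (G.ne_of_adj he).symm⟩
  have hes' : e ∈ (s \ S).sym2 := mem_sym2_iff.2 fun x hx =>
    mem_sdiff.2 ⟨mem_sym2_iff.1 hes x hx, fun hxS => hmeet ⟨x, hx, hxS, by rintro rfl; exact hv hx⟩⟩
  exact (hf.dominated e he hes' hf0).mono hf2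

end IsPeeling

variable [DecidableEq V]

theorem exists_isPeeling {s : Finset V} {v : V} (hv : v ∈ s) (T : Finset V)
    (hT : ∀ t ∈ T, t ∈ s ∧ G.Adj v t) :
    ∃ S g, IsPeeling G s v S g ∧ T ⊆ S ∧ ∑ e, g e ≤ 2 * #T := by
  induction T using Finset.induction_on with
  | empty => exact ⟨{v}, 0, .singleton hv, empty_subset _, by simp⟩
  | insert t T htT ih =>
    obtain ⟨S, g, hP, hTS, hw⟩ := ih fun t' ht' => hT t' (mem_insert_of_mem ht')
    obtain ⟨hts, hvt⟩ := hT t (mem_insert_self t T)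
    rw [card_insert_of_notMem htT]
    by_cases htS : t ∈ S
    · exact ⟨S, g, hP, insert_subset htS hTS, by omega⟩
    by_cases hmatch : ∃ u ∈ s, u ∉ S ∧ G.Adj t u
    · obtain ⟨u, hus, huS, htu⟩ := hmatch
      refine ⟨_, _, hP.insert_matched hts hus htS huS htu,
        insert_subset_insert _ (hTS.trans (subset_insert _ _)), ?_⟩
      rw [Fintype.sum_update_of_eq_zero (hP.apply_eq_zero_of_notMem (Sym2.mem_mk_left t u) htS)]
      omega
    · have hfree : ∀ u ∈ s, G.Adj t u → u ∈ S := fun u hu htu =>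
        by_contra fun huS => hmatch ⟨u, hu, huS, htu⟩
      refine ⟨_, _, hP.insert_pendant hts htS hvt hfree, insert_subset_insert _ hTS, ?_⟩
      rw [Fintype.sum_update_of_eq_zero (hP.apply_eq_zero_of_notMem (Sym2.mem_mk_right v t) htS)]
      omega

theorem KDegenerate.exists_isEdgeRDFOn {k : ℕ} (hG : KDegenerate G k) (s : Finset V) :
    ∃ f, IsEdgeRDFOn G s f ∧ (2 * k + 1) * ∑ e, f e ≤ 2 * k * #s := by
  classical
  induction s using Finset.strongInduction with
  | H s ih =>
  rcases s.eq_empty_or_nonempty with rfl | hs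
  · exact ⟨0, isEdgeRDFOn_empty G, by simp⟩
  obtain ⟨v, hv, hdeg⟩ := hG.exists_card_filter_adj_le hs
  obtain ⟨S, g, hP, hNS, hgw⟩ :=
    exists_isPeeling hv {w ∈ s | G.Adj v w} fun t ht => by simpa using ht
  obtain ⟨f, hf, hfw⟩ := ih (s \ S) (sdiff_ssubset hP.subset ⟨v, hP.mem⟩)
  refine ⟨g + f, hP.add (fun w hw hvw => hNS (mem_filter.2 ⟨hw, hvw⟩)) hf, ?_⟩
  have hgS : (2 * k + 1) * ∑ e, g e ≤ 2 * k * #S := by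
    have hgk : ∑ e, g e ≤ 2 * k := hgw.trans (by omega)
    rw [← hP.weight]
    nlinarith
  simp only [Pi.add_apply, sum_add_distrib]
  rw [← card_sdiff_add_card_eq_card hP.subset, mul_add, mul_add, add_comm (2 * k * _)]
  exact add_le_add hgS hfw

end

/-- If `G` is a `k`-degenerate graph on `n` vertices, then `γ'_R(G) ≤ (2k/(2k+1))·n`. -/
theorem edgeRomanNumber_le_of_kDegenerate {V : Type*} [Fintype V] [DecidableEq V]
    (G : SimpleGraph V) (k : ℕ) (hG : KDegenerate G k) :
    (edgeRomanNumber V G : ℝ) ≤ (2 * k : ℝ) / (2 * k + 1) * Fintype.card V := by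
  obtain ⟨f, hf, hw⟩ := hG.exists_isEdgeRDFOn univ
  have hle : edgeRomanNumber V G ≤ ∑ e, f e := Nat.sInf_le ⟨f, hf.edgeRDF, rfl⟩
  have hnat : (2 * k + 1) * edgeRomanNumber V G ≤ 2 * k * Fintype.card V :=
    (Nat.mul_le_mul_left _ hle).trans hw
  rw [div_mul_eq_mul_div, le_div_iff₀ (by positivity), mul_comm]
  exact_mod_cast hnat
end

section
/- Let G be a graph of maximum degree Δ on n vertices. If every connected component of G contains a vertex of degree less than Δ, then γ'_R(G) ≤ ((2Δ − 2)/(2Δ − 1))·n. -/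
open Finset SimpleGraph

/-!
Induction on the number of non-isolated vertices. Take `w` with `0 < deg w < Δ` and a matching
`M` avoiding `w` that covers as many neighbours of `w` as possible and all of whose edges meet
`N(w)`. Then `|M|` is at most the number of covered neighbours, so `|M| + τ < Δ`, where `τ`
counts the uncovered ones; and by maximality an uncovered neighbour is adjacent only to `w` and
to `V(M)`. Hence weight `2` on `M`, together with weight `min τ 2` on the star from `w` to the
uncovered neighbours, dominates every edge meeting `S = N[w] ∪ V(M)`; as `|S| = 2|M| + τ + 1`
this costs at most `(2Δ - 2)/(2Δ - 1) · |S|`. Deleting the edges at `S` keeps the hypothesis (a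
walk to a low-degree vertex is cut just after a vertex that loses a neighbour), so the rest of
the graph is handled by induction.
-/

section

variable {V : Type*}

namespace SimpleGraph

def deleteIncidenceSets (G : SimpleGraph V) (S : Finset V) : SimpleGraph V where
  Adj x y := G.Adj x y ∧ x ∉ S ∧ y ∉ S
  symm := ⟨fun _ _ h => ⟨h.1.symm, h.2.2, h.2.1⟩⟩
  loopless := ⟨fun x h => G.loopless.irrefl x h.1⟩

variable {G : SimpleGraph V} {S : Finset V}

@[simp] lemma deleteIncidenceSets_adj {x y : V} :
    (G.deleteIncidenceSets S).Adj x y ↔ G.Adj x y ∧ x ∉ S ∧ y ∉ S := Iff.rfl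

instance [DecidableEq V] [DecidableRel G.Adj] : DecidableRel (G.deleteIncidenceSets S).Adj :=
  fun _ _ => inferInstanceAs (Decidable (_ ∧ _ ∧ _))

lemma deleteIncidenceSets_le : G.deleteIncidenceSets S ≤ G := fun _ _ h => h.1

lemma mem_edgeSet_sdiff_deleteIncidenceSets {e : Sym2 V} :
    e ∈ (G \ G.deleteIncidenceSets S).edgeSet ↔ e ∈ G.edgeSet ∧ ∃ v ∈ e, v ∈ S := by
  induction e using Sym2.ind with
  | _ x y => simp only [mem_edgeSet, sdiff_adj, deleteIncidenceSets_adj, Sym2.mem_iff]; grind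

lemma Reachable.mem_support {v w : V} (h : G.Reachable v w) (hv : v ∈ G.support) :
    w ∈ G.support := by
  obtain ⟨p⟩ := h.symm
  cases p with
  | nil => exact hv
  | cons hadj _ => exact ⟨_, hadj⟩

variable [Fintype V] [DecidableEq V] [DecidableRel G.Adj]

lemma degree_deleteIncidenceSets_le (v : V) :
    (G.deleteIncidenceSets S).degree v ≤ G.degree v :=
  degree_le_of_le deleteIncidenceSets_le

lemma degree_deleteIncidenceSets_lt {v x : V} (h : G.Adj v x) (hx : x ∈ S) :
    (G.deleteIncidenceSets S).degree v < G.degree v := by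
  refine card_lt_card ((ssubset_iff_of_subset fun y hy => ?_).2 ⟨x, ?_, fun hx' => ?_⟩)
  · simp only [mem_neighborFinset, deleteIncidenceSets_adj] at hy ⊢
    exact hy.1
  · simpa using h
  · simp only [mem_neighborFinset, deleteIncidenceSets_adj] at hx'
    exact hx'.2.2 hx

lemma Walk.exists_reachable_deleteIncidenceSets_degree_lt {Δ : ℕ} (hdeg : ∀ v, G.degree v ≤ Δ)
    {v u : V} (p : G.Walk v u) (hu : G.degree u < Δ) (hv : v ∉ S) :
    ∃ x, (G.deleteIncidenceSets S).Reachable v x ∧ (G.deleteIncidenceSets S).degree x < Δ := by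
  induction p with
  | nil => exact ⟨_, .rfl, (degree_deleteIncidenceSets_le _).trans_lt hu⟩
  | @cons a b c hab p ih =>
    by_cases hb : b ∈ S
    · exact ⟨a, .rfl, (degree_deleteIncidenceSets_lt hab hb).trans_le (hdeg a)⟩
    · obtain ⟨x, hbx, hx⟩ := ih hu hb
      exact ⟨x, (Adj.reachable (G := G.deleteIncidenceSets S) ⟨hab, hv, hb⟩).trans hbx, hx⟩

end SimpleGraph

namespace EdgeRDF

lemma bot : EdgeRDF (⊥ : SimpleGraph V) 0 :=
  ⟨fun _ => Nat.zero_le _, fun _ _ => rfl, fun e he => by simp at he⟩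

lemma add {H K : SimpleGraph V} {f g : Sym2 V → ℕ} (hHK : Disjoint H K) (hf : EdgeRDF H f)
    (hg : EdgeRDF K g) : EdgeRDF (H ⊔ K) (f + g) := by
  obtain ⟨hf2, hf0, hfdom⟩ := hf
  obtain ⟨hg2, hg0, hgdom⟩ := hg
  have hgH : ∀ e ∈ H.edgeSet, g e = 0 := fun e he =>
    hg0 e (Set.disjoint_left.1 (disjoint_edgeSet.2 hHK) he)
  have hfK : ∀ e ∈ K.edgeSet, f e = 0 := fun e he =>
    hf0 e (Set.disjoint_right.1 (disjoint_edgeSet.2 hHK) he)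
  refine ⟨fun e => ?_, fun e he => ?_, fun e he hfg => ?_⟩
  · by_cases he : e ∈ H.edgeSet
    · simpa [hgH e he] using hf2 e
    · simpa [hf0 e he] using hg2 e
  · rw [edgeSet_sup, Set.mem_union, not_or] at he
    simp [hf0 e he.1, hg0 e he.2]
  · rw [Pi.add_apply, Nat.add_eq_zero_iff] at hfg
    rw [edgeSet_sup] at he ⊢
    rcases he with he | he
    · obtain ⟨e', he', h2, hne, hv⟩ := hfdom e he hfg.1
      exact ⟨e', .inl he', by simp [h2, hgH e' he'], hne, hv⟩
    · obtain ⟨e', he', h2, hne, hv⟩ := hgdom e he hfg.2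
      exact ⟨e', .inr he', by simp [h2, hfK e' he'], hne, hv⟩

end EdgeRDF

variable [DecidableEq V]

def edgeRomanOf (D O : Finset (Sym2 V)) (e : Sym2 V) : ℕ :=
  if e ∈ D then 2 else if e ∈ O then 1 else 0

lemma edgeRDF_edgeRomanOf {H : SimpleGraph V} {D O : Finset (Sym2 V)} (hD : ↑D ⊆ H.edgeSet)
    (hO : ↑O ⊆ H.edgeSet) (hdom : ∀ e ∈ H.edgeSet, e ∉ D → e ∉ O → ∃ e' ∈ D, ∃ v ∈ e, v ∈ e') :
    EdgeRDF H (edgeRomanOf D O) := by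
  refine ⟨fun e => ?_, fun e he => ?_, fun e he h0 => ?_⟩
  · unfold edgeRomanOf; split_ifs <;> omega
  · have hDe : e ∉ D := fun h => he (hD h)
    have hOe : e ∉ O := fun h => he (hO h)
    simp [edgeRomanOf, hDe, hOe]
  · have hDe : e ∉ D := fun h => by simp [edgeRomanOf, h] at h0
    have hOe : e ∉ O := fun h => by simp [edgeRomanOf, hDe, h] at h0
    obtain ⟨e', he', v, hv, hv'⟩ := hdom e he hDe hOe
    exact ⟨e', hD he', by simp [edgeRomanOf, he'], ne_of_mem_of_not_mem he' hDe, v, hv, hv'⟩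

lemma sum_edgeRomanOf_le [Fintype V] (D O : Finset (Sym2 V)) :
    ∑ e, edgeRomanOf D O e ≤ 2 * #D + #O := by
  calc ∑ e, edgeRomanOf D O e
      ≤ ∑ e, (2 * (if e ∈ D then 1 else 0) + if e ∈ O then 1 else 0) :=
        sum_le_sum fun e _ => by unfold edgeRomanOf; split_ifs <;> omega
    _ = 2 * #D + #O := by simp [sum_add_distrib, mul_comm]

def matchedVerts (M : Finset (Sym2 V)) : Finset V := M.biUnion Sym2.toFinset

@[simp] lemma mem_matchedVerts {M : Finset (Sym2 V)} {v : V} :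
    v ∈ matchedVerts M ↔ ∃ e ∈ M, v ∈ e := by
  simp [matchedVerts]

def IsMatchingAvoiding (G : SimpleGraph V) (w : V) (M : Finset (Sym2 V)) : Prop :=
  ↑M ⊆ G.edgeSet ∧ (∀ e ∈ M, w ∉ e) ∧ (M : Set (Sym2 V)).PairwiseDisjoint Sym2.toFinset

namespace IsMatchingAvoiding

variable {G : SimpleGraph V} {w : V} {M : Finset (Sym2 V)}

lemma mono {M' : Finset (Sym2 V)} (h : IsMatchingAvoiding G w M) (hM : M' ⊆ M) :
    IsMatchingAvoiding G w M' :=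
  ⟨(coe_subset.2 hM).trans h.1, fun e he => h.2.1 e (hM he), h.2.2.subset (coe_subset.2 hM)⟩

lemma insert (h : IsMatchingAvoiding G w M) {x y : V} (hxy : G.Adj x y)
    (hx : x ∉ matchedVerts M) (hy : y ∉ matchedVerts M) (hxw : x ≠ w) (hyw : y ≠ w) :
    IsMatchingAvoiding G w (insert s(x, y) M) := by
  refine ⟨?_, ?_, ?_⟩
  · rw [coe_insert]
    exact Set.insert_subset hxy h.1
  · simp only [Finset.mem_insert, forall_eq_or_imp, Sym2.mem_iff, not_or]
    exact ⟨⟨hxw.symm, hyw.symm⟩, h.2.1⟩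
  · rw [coe_insert]
    refine h.2.2.insert fun e he _ => disjoint_left.2 fun v hv hve => ?_
    rw [Sym2.mem_toFinset, Sym2.mem_iff] at hv
    rcases hv with rfl | rfl
    · exact hx (mem_matchedVerts.2 ⟨e, he, Sym2.mem_toFinset.1 hve⟩)
    · exact hy (mem_matchedVerts.2 ⟨e, he, Sym2.mem_toFinset.1 hve⟩)

lemma card_matchedVerts (h : IsMatchingAvoiding G w M) : #(matchedVerts M) = 2 * #M := by
  rw [matchedVerts, card_biUnion h.2.2, mul_comm, ← smul_eq_mul, ← sum_const]
  exact sum_congr rfl fun e he => Sym2.card_toFinset_of_not_isDiag e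
    (G.not_isDiag_of_mem_edgeSet (h.1 he))

variable [Fintype V] [DecidableRel G.Adj]

/-- An uncovered neighbour `t` of `w` with a neighbour `z ∉ V(M) ∪ {w}` would let `M + tz` cover
more of `N(w)`. -/
lemma adj_eq_or_mem_of_forall_le (h : IsMatchingAvoiding G w M)
    (hmax : ∀ M', IsMatchingAvoiding G w M' →
      #(G.neighborFinset w ∩ matchedVerts M') ≤ #(G.neighborFinset w ∩ matchedVerts M))
    {t z : V} (hwt : G.Adj w t) (ht : t ∉ matchedVerts M) (htz : G.Adj t z) :
    z = w ∨ z ∈ matchedVerts M := by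
  by_contra! hz
  have hlt : G.neighborFinset w ∩ matchedVerts M ⊂
      G.neighborFinset w ∩ matchedVerts (Insert.insert s(t, z) M) := by
    refine (ssubset_iff_of_subset (inter_subset_inter_left ?_)).2 ⟨t, ?_, ?_⟩
    · exact biUnion_subset_biUnion_of_subset_left _ (subset_insert _ _)
    · simpa using hwt
    · simp [ht]
  exact (card_lt_card hlt).not_ge (hmax _ (h.insert htz ht hz.2 hwt.ne.symm hz.1))

end IsMatchingAvoiding

/-- Take a matching maximising the number of covered neighbours of `w`, then discard its edges
that miss `N(w)`; this keeps the coverage, so the result is still a maximiser. -/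
lemma exists_isMatchingAvoiding [Fintype V] (G : SimpleGraph V) [DecidableRel G.Adj] (w : V) :
    ∃ M, IsMatchingAvoiding G w M ∧ #M ≤ #(G.neighborFinset w ∩ matchedVerts M) ∧
      ∀ t ∈ G.neighborFinset w, t ∉ matchedVerts M → ∀ z, G.Adj t z →
        z = w ∨ z ∈ matchedVerts M := by
  obtain ⟨M₀, hM₀, hmax⟩ := Set.exists_max_image {M | IsMatchingAvoiding G w M}
    (fun M => #(G.neighborFinset w ∩ matchedVerts M)) (Set.toFinite _)
    ⟨∅, by simp [IsMatchingAvoiding]⟩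
  set M := M₀.filter fun e => (G.neighborFinset w ∩ e.toFinset).Nonempty
  have hM : IsMatchingAvoiding G w M := hM₀.mono (filter_subset _ _)
  have hcov : G.neighborFinset w ∩ matchedVerts M = G.neighborFinset w ∩ matchedVerts M₀ := by
    ext v
    simp only [mem_inter, mem_matchedVerts, M, mem_filter]
    exact ⟨fun ⟨hv, e, ⟨he, _⟩, hve⟩ => ⟨hv, e, he, hve⟩,
      fun ⟨hv, e, he, hve⟩ => ⟨hv, e, ⟨he, v, by simpa [hve] using hv⟩, hve⟩⟩
  refine ⟨M, hM, ?_, fun t ht ht' z htz =>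
    hM.adj_eq_or_mem_of_forall_le (fun M' h => hcov ▸ hmax M' h) (by simpa using ht) ht' htz⟩
  rw [matchedVerts, inter_biUnion]
  exact card_le_card_biUnion (hM.2.2.mono fun _ => inter_subset_right)
    fun e he => (mem_filter.1 he).2

lemma exists_star_domination (w : V) (T : Finset V) :
    ∃ D O : Finset (Sym2 V), (∀ e ∈ D ∪ O, ∃ t ∈ T, e = s(w, t)) ∧
      2 * #D + #O ≤ min #T 2 ∧ ∀ t ∈ T, s(w, t) ∈ O ∨ D.Nonempty := by
  obtain hT | hT | hT : #T = 0 ∨ #T = 1 ∨ 2 ≤ #T := by omega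
  · exact ⟨∅, ∅, by simp, by simp, by simp [card_eq_zero.1 hT]⟩
  · obtain ⟨t, rfl⟩ := card_eq_one.1 hT
    exact ⟨∅, {s(w, t)}, by simp, by simp, by simp⟩
  · obtain ⟨t, ht⟩ := card_pos.1 (by omega : 0 < #T)
    exact ⟨{s(w, t)}, ∅, by simpa using ⟨t, ht, .inl rfl⟩, by simp only [card_singleton, card_empty]; omega,
      fun _ _ => .inr (singleton_nonempty _)⟩

lemma add_min_mul_le {m τ Δ : ℕ} (h : m + τ < Δ) :
    (2 * m + min τ 2) * (2 * Δ - 1) ≤ (2 * Δ - 2) * (2 * m + τ + 1) := by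
  obtain ⟨D, rfl⟩ : ∃ D, Δ = D + 1 := ⟨Δ - 1, by omega⟩
  rw [show 2 * (D + 1) - 1 = 2 * D + 1 by omega, show 2 * (D + 1) - 2 = 2 * D by omega]
  rcases τ with _ | _ | τ
  · simp only [zero_le, inf_of_le_left, add_zero]; nlinarith
  · simp only [zero_add, Nat.one_le_ofNat, inf_of_le_left]; nlinarith
  · simp only [le_add_iff_nonneg_left, zero_le, inf_of_le_right]; nlinarith

lemma cast_le_div_mul_of_mul_le {c n Δ : ℕ} (hΔ : 1 ≤ Δ)
    (h : c * (2 * Δ - 1) ≤ (2 * Δ - 2) * n) :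
    (c : ℝ) ≤ (2 * Δ - 2 : ℝ) / (2 * Δ - 1) * n := by
  have hΔ' : (1 : ℝ) ≤ Δ := by exact_mod_cast hΔ
  have h' := (Nat.cast_le (α := ℝ)).2 h
  push_cast [Nat.cast_sub (by omega : 1 ≤ 2 * Δ), Nat.cast_sub (by omega : 2 ≤ 2 * Δ)] at h'
  rw [div_mul_eq_mul_div, le_div_iff₀ (by linarith)]
  linarith

variable [Fintype V] {G : SimpleGraph V} [DecidableRel G.Adj] {w : V} {M : Finset (Sym2 V)}

lemma exists_mem_or_eq_of_mem_insert_neighborFinset_union {U : Finset V}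
    (hU : ∀ t ∈ G.neighborFinset w, t ∉ U → ∀ z, G.Adj t z → z = w ∨ z ∈ U)
    {e : Sym2 V} (he : e ∈ G.edgeSet) {v : V} (hve : v ∈ e)
    (hv : v ∈ insert w (G.neighborFinset w ∪ U)) :
    (∃ x ∈ e, x ∈ U) ∨ ∃ t ∈ G.neighborFinset w \ U, e = s(w, t) := by
  obtain ⟨z, rfl⟩ := Sym2.mem_iff_exists.1 hve
  have hvz : G.Adj v z := he
  by_cases hzU : z ∈ U
  · exact .inl ⟨z, Sym2.mem_mk_right v z, hzU⟩
  by_cases hvU : v ∈ U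
  · exact .inl ⟨v, Sym2.mem_mk_left v z, hvU⟩
  simp only [Finset.mem_insert, mem_union, hvU, or_false] at hv
  rcases hv with rfl | hv
  · exact .inr ⟨z, by simp [hvz, hzU], rfl⟩
  · rcases hU v hv hvU z hvz with rfl | hz
    · exact .inr ⟨v, by simp_all, Sym2.eq_swap⟩
    · exact absurd hz hzU

lemma coe_insert_neighborFinset_union_matchedVerts_subset_support (hw : w ∈ G.support)
    (hM : ↑M ⊆ G.edgeSet) :
    ↑(insert w (G.neighborFinset w ∪ matchedVerts M)) ⊆ G.support := by
  intro v hv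
  rw [mem_coe] at hv
  simp only [Finset.mem_insert, mem_union, mem_neighborFinset, mem_matchedVerts] at hv
  rcases hv with rfl | hv | ⟨e, he, hve⟩
  · exact hw
  · exact ⟨w, hv.symm⟩
  · obtain ⟨z, rfl⟩ := Sym2.mem_iff_exists.1 hve
    exact ⟨z, hM he⟩

lemma IsMatchingAvoiding.card_insert_neighborFinset_union_matchedVerts
    (hM : IsMatchingAvoiding G w M) :
    #(Insert.insert w (G.neighborFinset w ∪ matchedVerts M)) =
      2 * #M + #(G.neighborFinset w \ matchedVerts M) + 1 := by
  have hw : w ∉ G.neighborFinset w ∪ matchedVerts M := by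
    simp only [mem_union, not_or, mem_neighborFinset, mem_matchedVerts]
    exact ⟨G.loopless.irrefl w, fun ⟨e, he, hwe⟩ => hM.2.1 e he hwe⟩
  rw [card_insert_of_notMem hw, ← card_sdiff_add_card, hM.card_matchedVerts]
  ring

lemma edgeRDF_edgeRomanOf_union (hM : IsMatchingAvoiding G w M)
    (hMmax : ∀ t ∈ G.neighborFinset w, t ∉ matchedVerts M → ∀ z, G.Adj t z →
      z = w ∨ z ∈ matchedVerts M)
    {D O : Finset (Sym2 V)}
    (hDO : ∀ e ∈ D ∪ O, ∃ t ∈ G.neighborFinset w \ matchedVerts M, e = s(w, t))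
    (hstar : ∀ t ∈ G.neighborFinset w \ matchedVerts M, s(w, t) ∈ O ∨ D.Nonempty) :
    EdgeRDF (G \ G.deleteIncidenceSets (insert w (G.neighborFinset w ∪ matchedVerts M)))
      (edgeRomanOf (M ∪ D) O) := by
  have hstarE : ∀ e ∈ D ∪ O, e ∈ (G \ G.deleteIncidenceSets
      (insert w (G.neighborFinset w ∪ matchedVerts M))).edgeSet := fun e he => by
    obtain ⟨t, ht, rfl⟩ := hDO e he
    exact mem_edgeSet_sdiff_deleteIncidenceSets.2
      ⟨by simpa using (mem_sdiff.1 ht).1, w, Sym2.mem_mk_left w t, mem_insert_self _ _⟩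
  refine edgeRDF_edgeRomanOf (fun e he => ?_) (fun e he => hstarE e (mem_union_right _ he)) ?_
  · rcases mem_union.1 he with he | he
    · exact mem_edgeSet_sdiff_deleteIncidenceSets.2 ⟨hM.1 he, e.out.1, Sym2.out_fst_mem e,
        mem_insert_of_mem (mem_union_right _ (mem_matchedVerts.2 ⟨e, he, Sym2.out_fst_mem e⟩))⟩
    · exact hstarE e (mem_union_left _ he)
  intro e he heD heO
  obtain ⟨heG, v, hve, hvS⟩ := mem_edgeSet_sdiff_deleteIncidenceSets.1 he
  rcases exists_mem_or_eq_of_mem_insert_neighborFinset_union hMmax heG hve hvS with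
    ⟨x, hxe, hxU⟩ | ⟨t, ht, rfl⟩
  · obtain ⟨e', he', hxe'⟩ := mem_matchedVerts.1 hxU
    exact ⟨e', mem_union_left _ he', x, hxe, hxe'⟩
  · obtain ⟨e', he'⟩ := (hstar t ht).resolve_left heO
    obtain ⟨t', -, rfl⟩ := hDO e' (mem_union_left _ he')
    exact ⟨s(w, t'), mem_union_right _ he', w, Sym2.mem_mk_left w t, Sym2.mem_mk_left w t'⟩

lemma exists_edgeRDF_sdiff_deleteIncidenceSets {Δ : ℕ} (hw : w ∈ G.support)
    (hwΔ : G.degree w < Δ) :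
    ∃ S : Finset V, ∃ f : Sym2 V → ℕ, w ∈ S ∧ ↑S ⊆ G.support ∧
      EdgeRDF (G \ G.deleteIncidenceSets S) f ∧
      (∑ e, f e) * (2 * Δ - 1) ≤ (2 * Δ - 2) * #S := by
  obtain ⟨M, hM, hMcov, hMmax⟩ := exists_isMatchingAvoiding G w
  set T := G.neighborFinset w \ matchedVerts M with hT
  obtain ⟨D, O, hDO, hcost, hstar⟩ := exists_star_domination w T
  refine ⟨_, edgeRomanOf (M ∪ D) O, mem_insert_self _ _,
    coe_insert_neighborFinset_union_matchedVerts_subset_support hw hM.1,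
    edgeRDF_edgeRomanOf_union hM hMmax hDO hstar, ?_⟩
  have hMT : #M + #T < Δ := by
    have := card_sdiff_add_card_inter (G.neighborFinset w) (matchedVerts M)
    rw [card_neighborFinset_eq_degree, ← hT] at this
    omega
  calc (∑ e, edgeRomanOf (M ∪ D) O e) * (2 * Δ - 1)
      ≤ (2 * #M + min #T 2) * (2 * Δ - 1) := by
        gcongr
        have := card_union_le M D
        have := sum_edgeRomanOf_le (M ∪ D) O
        omega
    _ ≤ (2 * Δ - 2) * (2 * #M + #T + 1) := add_min_mul_le hMT
    _ = _ := by rw [hM.card_insert_neighborFinset_union_matchedVerts]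

theorem exists_edgeRDF_sum_mul_le (Δ : ℕ) (R : Finset V) (G : SimpleGraph V)
    [DecidableRel G.Adj] (hdeg : ∀ v, G.degree v ≤ Δ) (hR : G.support ⊆ R)
    (hcomp : ∀ v ∈ R, ∃ w, G.Reachable v w ∧ G.degree w < Δ) :
    ∃ f : Sym2 V → ℕ, EdgeRDF G f ∧ (∑ e, f e) * (2 * Δ - 1) ≤ (2 * Δ - 2) * #R := by
  induction R using Finset.strongInduction generalizing G with
  | H R ih =>
  rcases eq_or_ne G ⊥ with rfl | hG
  · exact ⟨0, EdgeRDF.bot, by simp⟩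
  obtain ⟨p, q, hpq⟩ := ne_bot_iff_exists_adj.1 hG
  obtain ⟨w, hpw, hwΔ⟩ := hcomp p (hR ⟨q, hpq⟩)
  obtain ⟨S, f₀, hwS, hS, hf₀, hcost₀⟩ :=
    exists_edgeRDF_sdiff_deleteIncidenceSets (hpw.mem_support ⟨q, hpq⟩) hwΔ
  have hSR : S ⊆ R := coe_subset.1 (hS.trans hR)
  obtain ⟨f, hf, hcost⟩ := ih (R \ S) (sdiff_ssubset hSR ⟨w, hwS⟩) (G.deleteIncidenceSets S)
    (fun v => (degree_deleteIncidenceSets_le v).trans (hdeg v))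
    (fun v ⟨u, hvu⟩ => by simpa [hvu.2.1] using hR ⟨u, hvu.1⟩)
    (fun v hv => by
      obtain ⟨u, ⟨p⟩, hu⟩ := hcomp v (mem_sdiff.1 hv).1
      exact p.exists_reachable_deleteIncidenceSets_degree_lt hdeg hu (mem_sdiff.1 hv).2)
  have hG : G \ G.deleteIncidenceSets S ⊔ G.deleteIncidenceSets S = G :=
    sdiff_sup_cancel deleteIncidenceSets_le
  refine ⟨f₀ + f, hG ▸ hf₀.add disjoint_sdiff_self_left hf, ?_⟩
  calc (∑ e, (f₀ + f) e) * (2 * Δ - 1)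
      = (∑ e, f₀ e) * (2 * Δ - 1) + (∑ e, f e) * (2 * Δ - 1) := by
        simp only [Pi.add_apply, sum_add_distrib, add_mul]
    _ ≤ (2 * Δ - 2) * #S + (2 * Δ - 2) * #(R \ S) := add_le_add hcost₀ hcost
    _ = (2 * Δ - 2) * #R := by rw [← mul_add, add_comm, card_sdiff_add_card_eq_card hSR]

end

theorem edgeRomanNumber_le_of_nonregular_components_general {V : Type*} [Fintype V] [DecidableEq V]
    (G : SimpleGraph V) [DecidableRel G.Adj] (Δ : ℕ)
    (hdeg : ∀ v, G.degree v ≤ Δ)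
    (hcomp : ∀ v : V, ∃ w : V, G.Reachable v w ∧ G.degree w < Δ) :
    (edgeRomanNumber V G : ℝ) ≤
      (2 * Δ - 2 : ℝ) / (2 * Δ - 1) * Fintype.card V := by
  obtain ⟨f, hf, hcost⟩ := exists_edgeRDF_sum_mul_le Δ univ G hdeg (by simp) fun v _ => hcomp v
  have hγ : edgeRomanNumber V G ≤ ∑ e, f e := Nat.sInf_le ⟨f, hf, rfl⟩
  rcases isEmpty_or_nonempty V with hV | ⟨⟨v⟩⟩
  · simp_all
  · obtain ⟨w, -, hwΔ⟩ := hcomp v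
    exact (Nat.cast_le.2 hγ).trans (cast_le_div_mul_of_mul_le (by omega) (by simpa using hcost))

/-- Let `G` be a graph of maximum degree `Δ ≥ 1` on `n` vertices. If every connected
component of `G` contains a vertex of degree less than `Δ`, then
`γ'_R(G) ≤ ((2Δ − 2)/(2Δ − 1))·n`. -/
theorem edgeRomanNumber_le_of_nonregular_components {V : Type*} [Fintype V] [DecidableEq V]
    (G : SimpleGraph V) [DecidableRel G.Adj] (Δ : ℕ) (hΔ : 1 ≤ Δ)
    (hdeg : ∀ v, G.degree v ≤ Δ)
    (hcomp : ∀ v : V, ∃ w : V, G.Reachable v w ∧ G.degree w < Δ) :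
    (edgeRomanNumber V G : ℝ) ≤
      (2 * Δ - 2 : ℝ) / (2 * Δ - 1) * Fintype.card V :=
  edgeRomanNumber_le_of_nonregular_components_general G Δ hdeg hcomp
end

section
/- If G is a connected graph of maximum degree Δ ≥ 1 on n vertices, then γ'_R(G) ≤ ((2Δ − 2)/(2Δ − 1))·n + 2/(2Δ − 1). -/
open Finset SimpleGraph

set_option linter.unusedSectionVars false
set_option maxHeartbeats 1000000

namespace EdgeRomanAux

variable {V : Type*} [Fintype V] [DecidableEq V] (G : SimpleGraph V) [DecidableRel G.Adj]









/-- Degree of `v` counted inside the vertex set `S`. -/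
def degIn (S : Finset V) (v : V) : ℕ := (S.filter (fun u => G.Adj v u)).card

/-- Reachability using only vertices of `S` (endpoints included). -/
inductive ReachIn (S : Finset V) : V → V → Prop
  | refl (x : V) (hx : x ∈ S) : ReachIn S x x
  | cons (x y z : V) (hx : x ∈ S) (hxy : G.Adj x y) (h : ReachIn S y z) : ReachIn S x z

lemma ReachIn.mem_left {S : Finset V} {x y : V} (h : ReachIn G S x y) : x ∈ S := by
  cases h with
  | refl _ hx => exact hx
  | cons _ _ _ hx _ _ => exact hx

lemma ReachIn.mem_right {S : Finset V} {x y : V} (h : ReachIn G S x y) : y ∈ S := by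
  induction h with
  | refl _ hx => exact hx
  | cons _ _ _ _ _ _ ih => exact ih

lemma degIn_mono {S' S : Finset V} (h : S' ⊆ S) (v : V) : degIn G S' v ≤ degIn G S v :=
  Finset.card_le_card (Finset.filter_subset_filter _ h)

lemma degIn_le_degree (S : Finset V) (v : V) : degIn G S v ≤ G.degree v := by
  rw [← SimpleGraph.card_neighborFinset_eq_degree]
  apply Finset.card_le_card
  intro u hu
  rw [SimpleGraph.mem_neighborFinset]
  exact (Finset.mem_filter.1 hu).2

/-- Transfer of "deficient vertex reachable" to a subset `S \ D`. -/
lemma transfer {Δ : ℕ} (hdeg : ∀ v, G.degree v ≤ Δ) {S D : Finset V} {x y₀ : V}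
    (h : ReachIn G S x y₀) :
    x ∉ D → (y₀ ∈ D ∨ degIn G S y₀ + 1 ≤ Δ) →
    ∃ y, ReachIn G (S \ D) x y ∧ degIn G (S \ D) y + 1 ≤ Δ := by
  induction h with
  | refl x hxS =>
      intro hx hy
      rcases hy with hyD | hydef
      · exact absurd hyD hx
      · exact ⟨x, ReachIn.refl x (Finset.mem_sdiff.2 ⟨hxS, hx⟩),
          le_trans (Nat.add_le_add_right (degIn_mono G Finset.sdiff_subset x) 1) hydef⟩
  | cons x v z hxS hxv h ih =>
      intro hx hy
      by_cases hvD : v ∈ D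
      · refine ⟨x, ReachIn.refl x (Finset.mem_sdiff.2 ⟨hxS, hx⟩), ?_⟩
        have hvS : v ∈ S := h.mem_left G
        have hsub : (S \ D).filter (fun u => G.Adj x u) ⊂ S.filter (fun u => G.Adj x u) := by
          refine Finset.ssubset_iff_of_subset (Finset.filter_subset_filter _ Finset.sdiff_subset) |>.2
            ⟨v, Finset.mem_filter.2 ⟨hvS, hxv⟩, ?_⟩
          intro hvmem
          exact (Finset.mem_sdiff.1 (Finset.mem_filter.1 hvmem).1).2 hvD
        have h1 : degIn G (S \ D) x < degIn G S x := Finset.card_lt_card hsub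
        have h2 : degIn G S x ≤ Δ := le_trans (degIn_le_degree G S x) (hdeg x)
        omega
      · obtain ⟨y, hy1, hy2⟩ := ih hvD hy
        exact ⟨y, ReachIn.cons x v y (Finset.mem_sdiff.2 ⟨hxS, hx⟩) hxv hy1, hy2⟩



lemma exists_round (S : Finset V) (a : V) (ha : a ∈ S) :
    ∃ (D : Finset V) (f : Sym2 V → ℕ) (q : ℕ),
      a ∈ D ∧ D ⊆ S ∧ D.card = q + 1 ∧ q ≤ 2 * degIn G S a ∧
      (∑ e : Sym2 V, f e) = q ∧
      (∀ e, f e ≤ 2) ∧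
      (∀ e, f e ≠ 0 → e ∈ G.edgeSet ∧ (∀ v ∈ e, v ∈ S) ∧ (∃ v ∈ e, v ∈ D)) ∧
      (∀ e ∈ G.edgeSet, (∀ v ∈ e, v ∈ S) → (∃ v ∈ e, v ∈ D) → f e = 0 →
        ∃ e' ∈ G.edgeSet, f e' = 2 ∧ e' ≠ e ∧ (∃ v, v ∈ e ∧ v ∈ e') ∧ (∀ v ∈ e', v ∈ D)) := by
  classical
  set Nb : Finset V := S.filter (fun v => G.Adj a v) with hNbdef
  have haNb : a ∉ Nb := by simp [hNbdef]
  have hNbS : Nb ⊆ S := Finset.filter_subset _ _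
  have hNbAdj : ∀ u ∈ Nb, G.Adj a u := fun u hu => (Finset.mem_filter.1 hu).2
  -- matchings among edges (inside S, avoiding a) touching Nb
  let good : Finset (V × V) → Prop := fun M =>
    (∀ p ∈ M, G.Adj p.1 p.2 ∧ p.1 ∈ Nb ∧ p.2 ∈ S ∧ p.2 ≠ a) ∧
    (∀ p ∈ M, ∀ r ∈ M, p ≠ r → p.1 ≠ r.1 ∧ p.1 ≠ r.2 ∧ p.2 ≠ r.1 ∧ p.2 ≠ r.2)
  set MS : Finset (Finset (V × V)) := (Nb ×ˢ S).powerset.filter good with hMSdef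
  have hMS0 : (∅ : Finset (V × V)) ∈ MS := by
    simp only [hMSdef, Finset.mem_filter, Finset.mem_powerset]
    exact ⟨Finset.empty_subset _, fun p hp => absurd hp (Finset.notMem_empty p),
      fun p hp => absurd hp (Finset.notMem_empty p)⟩
  obtain ⟨M, hM_mem, hM_max⟩ := Finset.exists_max_image MS Finset.card ⟨∅, hMS0⟩
  have hMgood : good M := (Finset.mem_filter.1 hM_mem).2
  obtain ⟨hval, hdisj⟩ := hMgood
  have hMsub : M ⊆ Nb ×ˢ S := Finset.mem_powerset.1 (Finset.mem_filter.1 hM_mem).1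
  set VM : Finset V := M.image Prod.fst ∪ M.image Prod.snd with hVMdef
  have hVM_iff : ∀ v, v ∈ VM ↔ ∃ p ∈ M, v = p.1 ∨ v = p.2 := by
    intro v
    simp only [hVMdef, Finset.mem_union, Finset.mem_image]
    constructor
    · rintro (⟨p, hp, rfl⟩ | ⟨p, hp, rfl⟩)
      · exact ⟨p, hp, Or.inl rfl⟩
      · exact ⟨p, hp, Or.inr rfl⟩
    · rintro ⟨p, hp, rfl | rfl⟩
      · exact Or.inl ⟨p, hp, rfl⟩
      · exact Or.inr ⟨p, hp, rfl⟩
  -- maximality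
  have hmax : ∀ u w, u ∈ Nb → w ∈ S → w ≠ a → G.Adj u w → u ∈ VM ∨ w ∈ VM := by
    intro u w hu hw hwa hadj
    by_contra hcon
    push_neg at hcon
    obtain ⟨huVM, hwVM⟩ := hcon
    have hnm : (u, w) ∉ M := by
      intro hm
      exact huVM ((hVM_iff u).2 ⟨(u, w), hm, Or.inl rfl⟩)
    have hins : insert (u, w) M ∈ MS := by
      simp only [hMSdef, Finset.mem_filter, Finset.mem_powerset]
      refine ⟨Finset.insert_subset (Finset.mem_product.2 ⟨hu, hw⟩) hMsub, ?_, ?_⟩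
      · intro p hp
        rcases Finset.mem_insert.1 hp with rfl | hp
        · exact ⟨hadj, hu, hw, hwa⟩
        · exact hval p hp
      · intro p hp r hr hpr
        rcases Finset.mem_insert.1 hp with rfl | hp <;>
          rcases Finset.mem_insert.1 hr with h' | hr
        · exact absurd h'.symm hpr
        · refine ⟨?_, ?_, ?_, ?_⟩ <;> intro hco
          · exact huVM ((hVM_iff _).2 ⟨r, hr, Or.inl hco⟩)
          · exact huVM ((hVM_iff _).2 ⟨r, hr, Or.inr hco⟩)
          · exact hwVM ((hVM_iff _).2 ⟨r, hr, Or.inl hco⟩)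
          · exact hwVM ((hVM_iff _).2 ⟨r, hr, Or.inr hco⟩)
        · subst h'
          refine ⟨?_, ?_, ?_, ?_⟩ <;> intro hco
          · exact huVM ((hVM_iff _).2 ⟨p, hp, Or.inl hco.symm⟩)
          · exact hwVM ((hVM_iff _).2 ⟨p, hp, Or.inl hco.symm⟩)
          · exact huVM ((hVM_iff _).2 ⟨p, hp, Or.inr hco.symm⟩)
          · exact hwVM ((hVM_iff _).2 ⟨p, hp, Or.inr hco.symm⟩)
        · exact hdisj p hp r hr hpr
    have hle := hM_max _ hins
    rw [Finset.card_insert_of_notMem hnm] at hle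
    omega
  -- cardinalities
  have hinj1 : Set.InjOn Prod.fst (M : Set (V × V)) := by
    intro p hp r hr h
    by_contra hpr
    exact (hdisj p hp r hr hpr).1 h
  have hinj2 : Set.InjOn Prod.snd (M : Set (V × V)) := by
    intro p hp r hr h
    by_contra hpr
    exact (hdisj p hp r hr hpr).2.2.2 h
  have hdisj12 : Disjoint (M.image Prod.fst) (M.image Prod.snd) := by
    rw [Finset.disjoint_left]
    rintro v hv1 hv2
    obtain ⟨p, hp, rfl⟩ := Finset.mem_image.1 hv1
    obtain ⟨r, hr, hss⟩ := Finset.mem_image.1 hv2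
    by_cases hpr : p = r
    · subst hpr
      exact G.ne_of_adj (hval p hp).1 hss.symm
    · exact (hdisj p hp r hr hpr).2.1 hss.symm
  have hVMcard : VM.card = 2 * M.card := by
    rw [hVMdef, Finset.card_union_of_disjoint hdisj12,
      Finset.card_image_of_injOn hinj1, Finset.card_image_of_injOn hinj2]
    omega
  have haVM : a ∉ VM := by
    intro hmem
    obtain ⟨p, hp, h⟩ := (hVM_iff a).1 hmem
    rcases h with h | h
    · exact haNb (h ▸ (hval p hp).2.1)
    · exact (hval p hp).2.2.2 h.symm
  have hVMS : VM ⊆ S := by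
    intro v hv
    obtain ⟨p, hp, h⟩ := (hVM_iff v).1 hv
    rcases h with rfl | rfl
    · exact hNbS (hval p hp).2.1
    · exact (hval p hp).2.2.1
  set D : Finset V := insert a (Nb ∪ VM) with hDdef
  set q : ℕ := (Nb ∪ VM).card with hqdef
  have haD : a ∈ D := Finset.mem_insert_self _ _
  have hNbD : Nb ⊆ D := fun v hv => Finset.mem_insert_of_mem (Finset.mem_union_left _ hv)
  have hVMD : VM ⊆ D := fun v hv => Finset.mem_insert_of_mem (Finset.mem_union_right _ hv)
  have haNbVM : a ∉ Nb ∪ VM := by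
    rw [Finset.mem_union]
    rintro (h | h)
    exacts [haNb h, haVM h]
  have hDS : D ⊆ S := by
    rw [hDdef]
    exact Finset.insert_subset ha (Finset.union_subset hNbS hVMS)
  have hDcard : D.card = q + 1 := by
    rw [hDdef, Finset.card_insert_of_notMem haNbVM]
  -- q ≤ 2 * d
  have hMfst_sub : M.image Prod.fst ⊆ Nb := by
    rintro v hv
    obtain ⟨p, hp, rfl⟩ := Finset.mem_image.1 hv
    exact (hval p hp).2.1
  have hMcard_le : M.card ≤ Nb.card :=
    le_trans (le_of_eq (Finset.card_image_of_injOn hinj1).symm) (Finset.card_le_card hMfst_sub)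
  have hsdiff_snd : VM \ Nb ⊆ M.image Prod.snd := by
    intro v hv
    obtain ⟨hv1, hv2⟩ := Finset.mem_sdiff.1 hv
    rcases Finset.mem_union.1 hv1 with h | h
    · exact absurd (hMfst_sub h) hv2
    · exact h
  have hq2d : q ≤ 2 * degIn G S a := by
    have h1 : q ≤ Nb.card + (VM \ Nb).card := by
      rw [hqdef, ← Finset.union_sdiff_self_eq_union]
      exact Finset.card_union_le _ _
    have h2 : (VM \ Nb).card ≤ M.card :=
      le_trans (Finset.card_le_card hsdiff_snd) Finset.card_image_le
    have hd : degIn G S a = Nb.card := rfl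
    omega
  -- the function
  set U : Finset V := Nb \ VM with hUdef
  set Msym : Finset (Sym2 V) := M.image (fun p => s(p.1, p.2)) with hMsymdef
  set Usym : Finset (Sym2 V) := U.image (fun u => s(a, u)) with hUsymdef
  have hMsym_not_a : ∀ e ∈ Msym, ∀ p ∈ M, True := fun _ _ _ _ => trivial
  have hMU : ∀ e, e ∈ Msym → e ∈ Usym → False := by
    intro e he hu
    obtain ⟨p, hp, rfl⟩ := Finset.mem_image.1 he
    obtain ⟨u, hu', heq⟩ := Finset.mem_image.1 hu
    rw [Sym2.eq_iff] at heq
    rcases heq with ⟨h1, _⟩ | ⟨h1, _⟩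
    · exact haNb (h1 ▸ (hval p hp).2.1)
    · exact (hval p hp).2.2.2 h1.symm
  have hMsym_card : Msym.card = M.card := by
    apply Finset.card_image_of_injOn
    intro p hp r hr h
    rw [Sym2.eq_iff] at h
    rcases h with ⟨h1, h2⟩ | ⟨h1, h2⟩
    · exact Prod.ext h1 h2
    · by_contra hpr
      exact (hdisj p hp r hr hpr).2.1 h1
  have hUsym_card : Usym.card = U.card := by
    apply Finset.card_image_of_injOn
    intro u hu u' hu' h
    rw [Sym2.eq_iff] at h
    rcases h with ⟨_, h2⟩ | ⟨h1, _⟩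
    · exact h2
    · exact absurd (h1 ▸ ((Finset.mem_sdiff.1 hu').1 : u' ∈ Nb)) haNb
  set f : Sym2 V → ℕ := fun e => if e ∈ Msym then 2 else if e ∈ Usym then 1 else 0 with hfdef
  have hfle : ∀ e, f e ≤ 2 := by
    intro e
    simp only [hfdef]
    split_ifs <;> omega
  have hfM : ∀ e ∈ Msym, f e = 2 := by
    intro e he
    simp only [hfdef]
    rw [if_pos he]
  have hfU : ∀ e ∈ Usym, f e = 1 := by
    intro e he
    simp only [hfdef]
    rw [if_neg (fun h => hMU e h he), if_pos he]
  have hf0 : ∀ e, e ∉ Msym → e ∉ Usym → f e = 0 := by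
    intro e h1 h2
    simp only [hfdef]
    rw [if_neg h1, if_neg h2]
  -- sum
  have hfsum : (∑ e : Sym2 V, f e) = q := by
    have hptw : ∀ e : Sym2 V, f e =
        (if e ∈ Msym then 2 else 0) + (if e ∈ Usym then 1 else 0) := by
      intro e
      by_cases h1 : e ∈ Msym
      · rw [hfM e h1, if_pos h1, if_neg (fun h2 => hMU e h1 h2)]
      · by_cases h2 : e ∈ Usym
        · rw [hfU e h2, if_neg h1, if_pos h2]
        · rw [hf0 e h1 h2, if_neg h1, if_neg h2]
    calc (∑ e : Sym2 V, f e)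
        = (∑ e : Sym2 V, ((if e ∈ Msym then 2 else 0) + (if e ∈ Usym then 1 else 0))) :=
          Finset.sum_congr rfl (fun e _ => hptw e)
      _ = (∑ e : Sym2 V, (if e ∈ Msym then 2 else 0))
          + (∑ e : Sym2 V, (if e ∈ Usym then 1 else 0)) := Finset.sum_add_distrib
      _ = 2 * Msym.card + Usym.card := by
          rw [Finset.sum_ite_mem, Finset.sum_ite_mem, Finset.univ_inter, Finset.univ_inter,
            Finset.sum_const, Finset.sum_const]
          simp [mul_comm]
      _ = 2 * M.card + U.card := by rw [hMsym_card, hUsym_card]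
      _ = VM.card + (Nb \ VM).card := by rw [hVMcard, hUdef]
      _ = (VM ∪ (Nb \ VM)).card := (Finset.card_union_of_disjoint Finset.disjoint_sdiff).symm
      _ = (VM ∪ Nb).card := by rw [Finset.union_sdiff_self_eq_union]
      _ = q := by rw [hqdef, Finset.union_comm]
  -- support
  have hsupp : ∀ e, f e ≠ 0 → e ∈ G.edgeSet ∧ (∀ v ∈ e, v ∈ S) ∧ (∃ v ∈ e, v ∈ D) := by
    intro e hne
    by_cases h1 : e ∈ Msym
    · obtain ⟨p, hp, rfl⟩ := Finset.mem_image.1 h1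
      obtain ⟨hadj, h1', h2', _⟩ := hval p hp
      refine ⟨G.mem_edgeSet.2 hadj, ?_, ⟨p.1, Sym2.mem_iff.2 (Or.inl rfl), hNbD h1'⟩⟩
      intro v hv
      rcases Sym2.mem_iff.1 hv with rfl | rfl
      exacts [hNbS h1', h2']
    · by_cases h2 : e ∈ Usym
      · obtain ⟨u, hu, rfl⟩ := Finset.mem_image.1 h2
        have huNb : u ∈ Nb := (Finset.mem_sdiff.1 hu).1
        refine ⟨G.mem_edgeSet.2 (hNbAdj u huNb), ?_, ⟨a, Sym2.mem_iff.2 (Or.inl rfl), haD⟩⟩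
        intro v hv
        rcases Sym2.mem_iff.1 hv with rfl | rfl
        exacts [ha, hNbS huNb]
      · exact absurd (hf0 e h1 h2) hne
  -- coverage
  have hcov : ∀ e ∈ G.edgeSet, (∀ v ∈ e, v ∈ S) → (∃ v ∈ e, v ∈ D) → f e = 0 →
      ∃ e' ∈ G.edgeSet, f e' = 2 ∧ e' ≠ e ∧ (∃ v, v ∈ e ∧ v ∈ e') ∧ (∀ v ∈ e', v ∈ D) := by
    intro e
    induction e using Sym2.ind with
    | _ x y =>
      intro he hSe hDe hfe
      have hadj : G.Adj x y := G.mem_edgeSet.1 he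
      have hxS : x ∈ S := hSe x (by simp)
      have hyS : y ∈ S := hSe y (by simp)
      have hnM : s(x, y) ∉ Msym := by
        intro h; rw [hfM _ h] at hfe; omega
      have hnU : s(x, y) ∉ Usym := by
        intro h; rw [hfU _ h] at hfe; omega
      have key : x ∈ VM ∨ y ∈ VM := by
        by_contra hc
        push_neg at hc
        obtain ⟨hxVM, hyVM⟩ := hc
        have hni : ∀ u w, G.Adj u w → u ∈ S → w ∈ S → s(u, w) ∉ Msym → s(u, w) ∉ Usym →
            u ∉ VM → w ∉ VM → u ∉ D := by
          intro u w huw huS hwS hnM' hnU' huVM' hwVM' hu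
          rcases Finset.mem_insert.1 hu with rfl | h
          · have hwNb : w ∈ Nb := Finset.mem_filter.2 ⟨hwS, huw⟩
            exact hnU' (Finset.mem_image.2 ⟨w, Finset.mem_sdiff.2 ⟨hwNb, hwVM'⟩, rfl⟩)
          · rcases Finset.mem_union.1 h with h | h
            · by_cases hwa : w = a
              · subst hwa
                refine hnU' ?_
                have h2 : s(w, u) ∈ Usym :=
                  Finset.mem_image.2 ⟨u, Finset.mem_sdiff.2 ⟨h, huVM'⟩, rfl⟩
                rwa [Sym2.eq_swap] at h2
              · rcases hmax u w h hwS hwa huw with h' | h'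
                exacts [huVM' h', hwVM' h']
            · exact huVM' h
        have hx' := hni x y hadj hxS hyS hnM hnU hxVM hyVM
        have hy' := hni y x hadj.symm hyS hxS (by rwa [Sym2.eq_swap]) (by rwa [Sym2.eq_swap])
          hyVM hxVM
        obtain ⟨v, hv, hvD⟩ := hDe
        rcases Sym2.mem_iff.1 hv with rfl | rfl
        exacts [hx' hvD, hy' hvD]
      have hsome : ∃ v₀, v₀ ∈ s(x, y) ∧ v₀ ∈ VM := by
        rcases key with h | h
        · exact ⟨x, by simp, h⟩
        · exact ⟨y, by simp, h⟩
      obtain ⟨v₀, hv₀e, hv₀VM⟩ := hsome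
      obtain ⟨p, hp, hv₀p⟩ := (hVM_iff v₀).1 hv₀VM
      have he'M : s(p.1, p.2) ∈ Msym := Finset.mem_image.2 ⟨p, hp, rfl⟩
      refine ⟨s(p.1, p.2), G.mem_edgeSet.2 (hval p hp).1, hfM _ he'M, ?_,
        ⟨v₀, hv₀e, ?_⟩, ?_⟩
      · intro h
        rw [← h] at hnM
        exact hnM he'M
      · rw [Sym2.mem_iff]
        rcases hv₀p with h | h
        exacts [Or.inl h, Or.inr h]
      · intro v hv
        rcases Sym2.mem_iff.1 hv with rfl | rfl
        · exact hNbD (hval p hp).2.1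
        · exact hVMD ((hVM_iff _).2 ⟨p, hp, Or.inr rfl⟩)
  exact ⟨D, f, q, haD, hDS, hDcard, hq2d, hfsum, hfle, hsupp, hcov⟩

-- PART3

/-- Edge Roman dominating function relative to a vertex subset `S`. -/
def ERDFon (S : Finset V) (f : Sym2 V → ℕ) : Prop :=
  (∀ e, f e ≤ 2) ∧ (∀ e, f e ≠ 0 → e ∈ G.edgeSet ∧ ∀ v ∈ e, v ∈ S) ∧
  (∀ e ∈ G.edgeSet, (∀ v ∈ e, v ∈ S) → f e = 0 →
     ∃ e' ∈ G.edgeSet, f e' = 2 ∧ e' ≠ e ∧ ∃ v, v ∈ e ∧ v ∈ e')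

lemma glue (S D : Finset V) (fr f' : Sym2 V → ℕ)
    (hble : ∀ e, fr e ≤ 2)
    (hsupp : ∀ e, fr e ≠ 0 → e ∈ G.edgeSet ∧ (∀ v ∈ e, v ∈ S) ∧ (∃ v ∈ e, v ∈ D))
    (hcov : ∀ e ∈ G.edgeSet, (∀ v ∈ e, v ∈ S) → (∃ v ∈ e, v ∈ D) → fr e = 0 →
        ∃ e' ∈ G.edgeSet, fr e' = 2 ∧ e' ≠ e ∧ (∃ v, v ∈ e ∧ v ∈ e') ∧ (∀ v ∈ e', v ∈ D))
    (hf' : ERDFon G (S \ D) f') :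
    ERDFon G S (fun e => fr e + f' e) := by
  obtain ⟨hb', hs', hc'⟩ := hf'
  have hdisjsupp : ∀ e, fr e ≠ 0 → f' e = 0 := by
    intro e h
    by_contra h2
    obtain ⟨v, hv, hvD⟩ := (hsupp e h).2.2
    exact (Finset.mem_sdiff.1 ((hs' e h2).2 v hv)).2 hvD
  refine ⟨?_, ?_, ?_⟩
  · intro e
    show fr e + f' e ≤ 2
    by_cases h : fr e = 0
    · rw [h, zero_add]
      exact hb' e
    · rw [hdisjsupp e h, add_zero]
      exact hble e
  · intro e h
    have h' : fr e + f' e ≠ 0 := h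
    by_cases h1 : fr e = 0
    · have h2 : f' e ≠ 0 := by omega
      exact ⟨(hs' e h2).1, fun v hv => Finset.sdiff_subset ((hs' e h2).2 v hv)⟩
    · exact ⟨(hsupp e h1).1, (hsupp e h1).2.1⟩
  · intro e he hSe h0
    have h0' : fr e + f' e = 0 := h0
    have h1 : fr e = 0 := by omega
    have h2 : f' e = 0 := by omega
    by_cases hD : ∃ v ∈ e, v ∈ D
    · obtain ⟨e', he', hfe', hne, ⟨v, hv, hv'⟩, hD'⟩ := hcov e he hSe hD h1
      have hz : f' e' = 0 := by
        by_contra hcon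
        exact (Finset.mem_sdiff.1 ((hs' e' hcon).2 v hv')).2 (hD' v hv')
      refine ⟨e', he', ?_, hne, ⟨v, hv, hv'⟩⟩
      show fr e' + f' e' = 2
      rw [hfe', hz]
    · push_neg at hD
      have hSe' : ∀ v ∈ e, v ∈ S \ D := fun v hv => Finset.mem_sdiff.2 ⟨hSe v hv, hD v hv⟩
      obtain ⟨e', he', hfe', hne, hvv⟩ := hc' e he hSe' h2
      have hfr0 : fr e' = 0 := by
        by_contra hcon
        obtain ⟨v, hv, hvD⟩ := (hsupp e' hcon).2.2
        have hf'ne : f' e' ≠ 0 := by rw [hfe']; omega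
        exact (Finset.mem_sdiff.1 ((hs' e' hf'ne).2 v hv)).2 hvD
      refine ⟨e', he', ?_, hne, hvv⟩
      show fr e' + f' e' = 2
      rw [hfr0, hfe']

/-- Main induction: if every component of `G[S]` has a vertex of `S`-degree `≤ Δ - 1`,
then there is an ERDF on `S` of weight `w` with `(2Δ-1)w ≤ (2Δ-2)|S|`. -/
lemma key_lemma (Δ : ℕ) (hΔ : 1 ≤ Δ) (hdeg : ∀ v, G.degree v ≤ Δ) :
    ∀ S : Finset V, (∀ x ∈ S, ∃ y, ReachIn G S x y ∧ degIn G S y + 1 ≤ Δ) →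
    ∃ f : Sym2 V → ℕ, ERDFon G S f ∧
      (2 * Δ - 1) * (∑ e : Sym2 V, f e) ≤ (2 * Δ - 2) * S.card := by
  intro S
  induction S using Finset.strongInduction with
  | _ S IH =>
    intro hS
    rcases S.eq_empty_or_nonempty with rfl | ⟨a₀, ha₀⟩
    · refine ⟨fun _ => 0, ⟨fun e => Nat.zero_le 2, fun e h => absurd rfl h, ?_⟩, by simp⟩
      intro e
      induction e using Sym2.ind with
      | _ x y =>
        intro _ hSe _
        exact absurd (hSe x (Sym2.mem_iff.2 (Or.inl rfl))) (Finset.notMem_empty x)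
    · obtain ⟨a, hra, hdefa⟩ := hS a₀ ha₀
      have haS : a ∈ S := hra.mem_right G
      obtain ⟨D, fr, q, haD, hDS, hDcard, hqle, hfrsum, hfrle, hfrsupp, hfrcov⟩ :=
        exists_round G S a haS
      have hssub : S \ D ⊂ S := by
        refine Finset.ssubset_iff_of_subset Finset.sdiff_subset |>.2 ⟨a, haS, ?_⟩
        intro hmem
        exact (Finset.mem_sdiff.1 hmem).2 haD
      have hyp' : ∀ x ∈ S \ D, ∃ y, ReachIn G (S \ D) x y ∧ degIn G (S \ D) y + 1 ≤ Δ := by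
        intro x hx
        obtain ⟨y₀, hr, hd⟩ := hS x (Finset.sdiff_subset hx)
        exact transfer G hdeg hr (Finset.mem_sdiff.1 hx).2 (Or.inr hd)
      obtain ⟨f', hf', hw'⟩ := IH _ hssub hyp'
      refine ⟨fun e => fr e + f' e, glue G S D fr f' hfrle hfrsupp hfrcov hf', ?_⟩
      have hsum : (∑ e : Sym2 V, (fr e + f' e)) = q + (∑ e : Sym2 V, f' e) := by
        rw [Finset.sum_add_distrib, hfrsum]
      rw [hsum]
      have hcard : S.card = q + 1 + (S \ D).card := by
        have h := Finset.card_sdiff_add_card_eq_card hDS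
        omega
      have hq2 : q + 2 ≤ 2 * Δ := by
        have h1 : degIn G S a + 1 ≤ Δ := hdefa
        omega
      set w' := ∑ e : Sym2 V, f' e with hw'def
      have e1 : 2 * Δ - 1 = (2 * Δ - 2) + 1 := by omega
      calc (2 * Δ - 1) * (q + w')
          = (2 * Δ - 1) * q + (2 * Δ - 1) * w' := mul_add _ _ _
        _ ≤ (2 * Δ - 1) * q + (2 * Δ - 2) * (S \ D).card := Nat.add_le_add_left hw' _
        _ = (2 * Δ - 2) * q + q + (2 * Δ - 2) * (S \ D).card := by
            rw [e1, add_mul, one_mul]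
        _ ≤ (2 * Δ - 2) * q + (2 * Δ - 2) + (2 * Δ - 2) * (S \ D).card := by
            have : q ≤ 2 * Δ - 2 := by omega
            omega
        _ = (2 * Δ - 2) * (q + 1 + (S \ D).card) := by ring
        _ = (2 * Δ - 2) * S.card := by rw [← hcard]

lemma walk_reachIn {x y : V} (w : G.Walk x y) : ReachIn G Finset.univ x y := by
  induction w with
  | nil => exact ReachIn.refl _ (Finset.mem_univ _)
  | cons h p ih => exact ReachIn.cons _ _ _ (Finset.mem_univ _) h ih

end EdgeRomanAux


open EdgeRomanAux

/-- If `G` is a connected graph of maximum degree `Δ ≥ 1` on `n` vertices, then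
`γ'_R(G) ≤ ((2Δ − 2)/(2Δ − 1))·n + 2/(2Δ − 1)`. -/
theorem edgeRomanNumber_le_of_connected {V : Type*} [Fintype V] [DecidableEq V]
    (G : SimpleGraph V) [DecidableRel G.Adj] (Δ : ℕ) (hΔ : 1 ≤ Δ)
    (hdeg : ∀ v, G.degree v ≤ Δ) (hconn : G.Connected) :
    (edgeRomanNumber V G : ℝ) ≤
      (2 * Δ - 2 : ℝ) / (2 * Δ - 1) * Fintype.card V + 2 / (2 * Δ - 1) := by

  classical
  have hne : Nonempty V := hconn.nonempty
  obtain ⟨a⟩ := hne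
  obtain ⟨D, fr, q, haD, hDS, hDcard, hqle, hfrsum, hfrle, hfrsupp, hfrcov⟩ :=
    exists_round G Finset.univ a (Finset.mem_univ a)
  have hyp' : ∀ x ∈ Finset.univ \ D,
      ∃ y, ReachIn G (Finset.univ \ D) x y ∧ degIn G (Finset.univ \ D) y + 1 ≤ Δ := by
    intro x hx
    have hr : ReachIn G Finset.univ x a := by
      obtain ⟨w⟩ := hconn.preconnected x a
      exact walk_reachIn G w
    exact transfer G hdeg hr (Finset.mem_sdiff.1 hx).2 (Or.inl haD)
  obtain ⟨f', hf', hw'⟩ := key_lemma G Δ hΔ hdeg _ hyp'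
  have hERD : ERDFon G Finset.univ (fun e => fr e + f' e) :=
    glue G Finset.univ D fr f' hfrle hfrsupp hfrcov hf'
  obtain ⟨hb, hs, hc⟩ := hERD
  have hEdge : EdgeRDF G (fun e => fr e + f' e) := by
    refine ⟨hb, ?_, ?_⟩
    · intro e he
      by_contra hne0
      exact he (hs e hne0).1
    · intro e he h0
      obtain ⟨e', he', hfe', hne', hv⟩ := hc e he (fun v _ => Finset.mem_univ v) h0
      exact ⟨e', he', hfe', hne', hv⟩
  have hγle : edgeRomanNumber V G ≤ ∑ e : Sym2 V, (fr e + f' e) :=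
    Nat.sInf_le ⟨fun e => fr e + f' e, hEdge, rfl⟩
  have hsum : (∑ e : Sym2 V, (fr e + f' e)) = q + (∑ e : Sym2 V, f' e) := by
    rw [Finset.sum_add_distrib, hfrsum]
  have hq2 : q ≤ 2 * Δ := by
    have h1 : degIn G Finset.univ a ≤ G.degree a := degIn_le_degree G _ a
    have h2 := hdeg a
    omega
  have hcard : Fintype.card V = q + 1 + (Finset.univ \ D).card := by
    have h := Finset.card_sdiff_add_card_eq_card hDS
    rw [Finset.card_univ] at h
    omega
  set w' := ∑ e : Sym2 V, f' e with hw'def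
  have hNat : (2 * Δ - 1) * (q + w') ≤ (2 * Δ - 2) * Fintype.card V + 2 := by
    have e1 : 2 * Δ - 1 = (2 * Δ - 2) + 1 := by omega
    calc (2 * Δ - 1) * (q + w')
        = (2 * Δ - 1) * q + (2 * Δ - 1) * w' := mul_add _ _ _
      _ ≤ (2 * Δ - 1) * q + (2 * Δ - 2) * (Finset.univ \ D).card := Nat.add_le_add_left hw' _
      _ = (2 * Δ - 2) * q + q + (2 * Δ - 2) * (Finset.univ \ D).card := by
          rw [e1, add_mul, one_mul]
      _ ≤ (2 * Δ - 2) * q + ((2 * Δ - 2) + 2) + (2 * Δ - 2) * (Finset.univ \ D).card := by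
          have : q ≤ (2 * Δ - 2) + 2 := by omega
          omega
      _ = (2 * Δ - 2) * (q + 1 + (Finset.univ \ D).card) + 2 := by ring
      _ = (2 * Δ - 2) * Fintype.card V + 2 := by rw [← hcard]
  have hγNat : (2 * Δ - 1) * edgeRomanNumber V G ≤ (2 * Δ - 2) * Fintype.card V + 2 := by
    calc (2 * Δ - 1) * edgeRomanNumber V G
        ≤ (2 * Δ - 1) * (∑ e : Sym2 V, (fr e + f' e)) := Nat.mul_le_mul_left _ hγle
      _ = (2 * Δ - 1) * (q + w') := by rw [hsum]
      _ ≤ (2 * Δ - 2) * Fintype.card V + 2 := hNat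
  -- cast to ℝ
  have hΔR : (1 : ℝ) ≤ (Δ : ℝ) := by exact_mod_cast hΔ
  have hpos : (0 : ℝ) < 2 * (Δ : ℝ) - 1 := by linarith
  have hc1 : ((2 * Δ - 1 : ℕ) : ℝ) = 2 * (Δ : ℝ) - 1 := by
    have : (1 : ℕ) ≤ 2 * Δ := by omega
    push_cast [Nat.cast_sub this]
    ring
  have hc2 : ((2 * Δ - 2 : ℕ) : ℝ) = 2 * (Δ : ℝ) - 2 := by
    have : (2 : ℕ) ≤ 2 * Δ := by omega
    push_cast [Nat.cast_sub this]
    ring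
  have hcast : (2 * (Δ : ℝ) - 1) * (edgeRomanNumber V G : ℝ) ≤
      (2 * (Δ : ℝ) - 2) * (Fintype.card V : ℝ) + 2 := by
    have := hγNat
    have h' : (((2 * Δ - 1) * edgeRomanNumber V G : ℕ) : ℝ) ≤
        (((2 * Δ - 2) * Fintype.card V + 2 : ℕ) : ℝ) := by exact_mod_cast this
    push_cast at h'
    rw [hc1, hc2] at h'
    exact h'
  have heq : (2 * (Δ : ℝ) - 2) / (2 * (Δ : ℝ) - 1) * (Fintype.card V : ℝ) + 2 / (2 * (Δ : ℝ) - 1)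
      = ((2 * (Δ : ℝ) - 2) * (Fintype.card V : ℝ) + 2) / (2 * (Δ : ℝ) - 1) := by
    field_simp
  rw [heq, le_div_iff₀ hpos]
  nlinarith [hcast]
end

section
/- For all integers Δ ≥ 1 and t ≥ 1, the disjoint union of t copies of the complete bipartite graph K_{Δ,Δ} has edge Roman domination number exactly (2Δ − 1)·t. In particular, for Δ ≥ 2 and t sufficiently large, this exceeds ((2Δ − 2)/(2Δ − 1))·n + 2/(2Δ − 1) with n = 2Δt, showing the connectivity hypothesis in the bound γ'_R(G) ≤ ((2Δ − 2)/(2Δ − 1))·n + 2/(2Δ − 1) for connected graphs of maximum degree Δ is necessary. -/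
open Finset SimpleGraph

/-- `tKdd d t` is the disjoint union of `t` copies of the complete bipartite
graph `K_{d,d}`. -/
def tKdd (d t : ℕ) : SimpleGraph (Fin t × (Fin d ⊕ Fin d)) :=
  SimpleGraph.fromRel fun a b =>
    a.1 = b.1 ∧ ∃ x y, a.2 = Sum.inl x ∧ b.2 = Sum.inr y

/-!
The edges of one copy of `K_{Δ,Δ}` form a `Δ × Δ` grid in which two edges are adjacent exactly
when they share a row or a column, and the copies do not interact. If `k` edges of a copy carry
weight `2`, the at least `(Δ - k)²` edges avoiding their rows and columns all carry weight `≥ 1`,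
so the copy has weight at least `2k + (Δ - k)² ≥ 2Δ - 1`. Weighting the diagonal `2, …, 2, 1`
attains this bound.
-/

open Function

section Grid

variable {α : Type*}

/-- Edge Roman domination on `K_{α,α}`, whose edges are indexed by `α × α`. -/
def IsGridRDF (g : α × α → ℕ) : Prop :=
  ∀ p, g p = 0 → ∃ q, g q = 2 ∧ (p.1 = q.1 ∨ p.2 = q.2)

variable [Fintype α]

theorem IsGridRDF.two_mul_card_sub_one_le_sum {g : α × α → ℕ} (hg : IsGridRDF g) :
    2 * Fintype.card α - 1 ≤ ∑ p, g p := by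
  classical
  set n := Fintype.card α
  set A := univ.filter fun p => g p = 2
  set B := (univ \ A.image Prod.fst) ×ˢ (univ \ A.image Prod.snd)
  have hsumA : ∑ p ∈ A, g p = 2 * #A := by
    rw [sum_congr rfl fun p hp => (mem_filter.1 hp).2, sum_const, smul_eq_mul, mul_comm]
  have hsumB : #B ≤ ∑ p ∈ B, g p := by
    simpa using card_nsmul_le_sum B g 1 fun p hp => by
      simp only [B, mem_product, mem_sdiff, mem_image, mem_univ, true_and] at hp
      by_contra! h0
      obtain ⟨q, hq, hqp⟩ := hg p (by omega)
      have hqA : q ∈ A := mem_filter.2 ⟨mem_univ q, hq⟩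
      exact hqp.elim (fun h => hp.1 ⟨q, hqA, h.symm⟩) (fun h => hp.2 ⟨q, hqA, h.symm⟩)
  have hAB : Disjoint A B := disjoint_left.2 fun p hpA hpB =>
    (mem_sdiff.1 (mem_product.1 hpB).1).2 (mem_image_of_mem _ hpA)
  have hcardB : (n - #A) * (n - #A) ≤ #B := by
    rw [card_product, card_sdiff_of_subset (subset_univ _), card_sdiff_of_subset (subset_univ _)]
    exact Nat.mul_le_mul (Nat.sub_le_sub_left card_image_le n)
      (Nat.sub_le_sub_left card_image_le n)
  calc 2 * n - 1 ≤ 2 * #A + (n - #A) * (n - #A) := by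
        obtain h | h := le_or_gt n #A
        · omega
        · obtain ⟨m, hm⟩ : ∃ m, n - #A = m + 1 := ⟨n - #A - 1, by omega⟩
          rw [hm, show 2 * n - 1 = 2 * #A + 2 * m + 1 by omega]
          nlinarith
    _ ≤ ∑ p ∈ A, g p + ∑ p ∈ B, g p := by omega
    _ = ∑ p ∈ A ∪ B, g p := (sum_union hAB).symm
    _ ≤ ∑ p, g p := sum_le_sum_of_subset (subset_univ _)

theorem exists_isGridRDF_sum_eq :
    ∃ g : α × α → ℕ, (∀ p, g p ≤ 2) ∧ IsGridRDF g ∧ ∑ p, g p = 2 * Fintype.card α - 1 := by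
  classical
  cases isEmpty_or_nonempty α with
  | inl _ => exact ⟨0, by simp, fun p => isEmptyElim p.1, by simp⟩
  | inr hα =>
    obtain ⟨a⟩ := hα
    let w : α → ℕ := fun x => if x = a then 1 else 2
    have hw : ∀ x, w x ≠ 0 ∧ w x ≤ 2 := fun x => by dsimp only [w]; split_ifs <;> omega
    refine ⟨fun p => if p.1 = p.2 then w p.1 else 0, fun p => ?_, fun ⟨x, y⟩ hxy => ?_, ?_⟩
    · dsimp only
      split_ifs
      exacts [(hw _).2, Nat.zero_le 2]
    · have hne : x ≠ y := fun h => (hw x).1 (by simpa [h] using hxy)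
      by_cases hx : x = a
      · exact ⟨(y, y), by simp [w, hx ▸ hne.symm], Or.inr rfl⟩
      · exact ⟨(x, x), by simp [w, hx], Or.inl rfl⟩
    · have hn : 0 < Fintype.card α := Fintype.card_pos_iff.2 ⟨a⟩
      rw [Fintype.sum_prod_type]
      simp only [sum_ite_eq, mem_univ, if_true]
      rw [← add_sum_erase _ _ (mem_univ a), sum_congr rfl fun x hx => if_neg (ne_of_mem_erase hx)]
      simp only [w, ↓reduceIte, sum_const, card_erase_of_mem, mem_univ, card_univ, smul_eq_mul]
      omega

end Grid

section CompleteBipartite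

variable {Δ t : ℕ}

def tKddEdge (q : Fin t × Fin Δ × Fin Δ) : Sym2 (Fin t × (Fin Δ ⊕ Fin Δ)) :=
  s((q.1, .inl q.2.1), (q.1, .inr q.2.2))

theorem tKddEdge_injective : Injective (tKddEdge (Δ := Δ) (t := t)) := by
  rintro ⟨i, x, y⟩ ⟨j, x', y'⟩ h
  simp_all [tKddEdge]

theorem mem_edgeSet_tKdd {e : Sym2 (Fin t × (Fin Δ ⊕ Fin Δ))} :
    e ∈ (tKdd Δ t).edgeSet ↔ e ∈ Set.range tKddEdge := by
  induction e using Sym2.ind with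
  | _ a b =>
    obtain ⟨i, a | a⟩ := a <;> obtain ⟨j, b | b⟩ := b <;>
      simp [tKdd, tKddEdge]

theorem exists_mem_tKddEdge_iff {q r : Fin t × Fin Δ × Fin Δ} :
    (∃ v, v ∈ tKddEdge q ∧ v ∈ tKddEdge r) ↔ q.1 = r.1 ∧ (q.2.1 = r.2.1 ∨ q.2.2 = r.2.2) := by
  simp only [tKddEdge, Sym2.mem_iff, Prod.ext_iff, Prod.exists, Sum.exists, Sum.inl.injEq,
    Sum.inr.injEq, reduceCtorEq, and_false, or_false, false_or, exists_eq_right_right]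
  aesop

theorem sum_eq_sum_tKddEdge {f : Sym2 (Fin t × (Fin Δ ⊕ Fin Δ)) → ℕ}
    (hf : ∀ e ∉ (tKdd Δ t).edgeSet, f e = 0) : ∑ e, f e = ∑ q, f (tKddEdge q) :=
  (Fintype.sum_of_injective _ tKddEdge_injective _ f
    (fun e he => hf e (mt mem_edgeSet_tKdd.1 he)) fun _ => rfl).symm

theorem EdgeRDF.isGridRDF_tKddEdge {f : Sym2 (Fin t × (Fin Δ ⊕ Fin Δ)) → ℕ}
    (hf : EdgeRDF (tKdd Δ t) f) (i : Fin t) : IsGridRDF fun p => f (tKddEdge (i, p)) := by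
  intro p hp
  obtain ⟨_, he', hf', -, hshare⟩ :=
    hf.2.2 _ (mem_edgeSet_tKdd.2 ⟨(i, p), rfl⟩) hp
  obtain ⟨r, rfl⟩ := mem_edgeSet_tKdd.1 he'
  obtain ⟨rfl, hrp⟩ := exists_mem_tKddEdge_iff.1 hshare
  exact ⟨r.2, hf', hrp⟩

theorem EdgeRDF.mul_le_sum_tKdd {f : Sym2 (Fin t × (Fin Δ ⊕ Fin Δ)) → ℕ}
    (hf : EdgeRDF (tKdd Δ t) f) : (2 * Δ - 1) * t ≤ ∑ e, f e :=
  calc (2 * Δ - 1) * t = ∑ _i : Fin t, (2 * Fintype.card (Fin Δ) - 1) := by simp [mul_comm]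
    _ ≤ ∑ i, ∑ p, f (tKddEdge (i, p)) :=
        sum_le_sum fun i _ => (hf.isGridRDF_tKddEdge i).two_mul_card_sub_one_le_sum
    _ = ∑ e, f e := by rw [sum_eq_sum_tKddEdge hf.2.1, Fintype.sum_prod_type]

theorem IsGridRDF.edgeRDF_extend_tKddEdge {g : Fin Δ × Fin Δ → ℕ} (hg : IsGridRDF g)
    (hg2 : ∀ p, g p ≤ 2) : EdgeRDF (tKdd Δ t) (extend tKddEdge (fun q => g q.2) 0) := by
  have hext (q : Fin t × Fin Δ × Fin Δ) :
      extend tKddEdge (fun q => g q.2) 0 (tKddEdge q) = g q.2 :=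
    tKddEdge_injective.extend_apply _ _ q
  refine ⟨fun e => ?_, fun e he => ?_, fun e he he0 => ?_⟩
  · by_cases h : ∃ q, tKddEdge q = e
    · obtain ⟨q, rfl⟩ := h
      exact hext q ▸ hg2 q.2
    · simp [extend_apply' _ _ _ h]
  · exact extend_apply' _ _ _ (mt mem_edgeSet_tKdd.2 he)
  · obtain ⟨⟨i, p⟩, rfl⟩ := mem_edgeSet_tKdd.1 he
    rw [hext] at he0
    obtain ⟨q, hq, hpq⟩ := hg p he0
    refine ⟨tKddEdge (i, q), mem_edgeSet_tKdd.2 ⟨_, rfl⟩, (hext _).trans hq, fun h => ?_,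
      exists_mem_tKddEdge_iff.2 ⟨rfl, hpq⟩⟩
    obtain rfl : q = p := (Prod.ext_iff.1 (tKddEdge_injective h)).2
    exact absurd (hq.symm.trans he0) two_ne_zero

theorem exists_edgeRDF_tKdd_sum_eq (Δ t : ℕ) :
    ∃ f, EdgeRDF (tKdd Δ t) f ∧ ∑ e, f e = (2 * Δ - 1) * t := by
  obtain ⟨g, hg2, hg, hsum⟩ := exists_isGridRDF_sum_eq (α := Fin Δ)
  have hf : EdgeRDF (tKdd Δ t) _ := hg.edgeRDF_extend_tKddEdge hg2
  refine ⟨_, hf, ?_⟩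
  rw [sum_eq_sum_tKddEdge hf.2.1]
  simp [tKddEdge_injective.extend_apply, Fintype.sum_prod_type, hsum, mul_comm]

end CompleteBipartite

theorem lt_two_mul_sub_one_mul {d t : ℝ} (hd : 1 < 2 * d) (ht : 2 < t) :
    (2 * d - 2) / (2 * d - 1) * (2 * d * t) + 2 / (2 * d - 1) < (2 * d - 1) * t := by
  rw [div_mul_eq_mul_div, ← add_div, div_lt_iff₀ (by linarith)]
  linarith [show (2 * d - 1) * t * (2 * d - 1) - ((2 * d - 2) * (2 * d * t) + 2) = t - 2 by ring]

theorem edgeRomanNumber_tKdd_general (Δ : ℕ) :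
    (∀ t, 1 ≤ t →
      edgeRomanNumber (Fin t × (Fin Δ ⊕ Fin Δ)) (tKdd Δ t) = (2 * Δ - 1) * t) ∧
    (2 ≤ Δ → ∃ t₀ : ℕ, ∀ t, t₀ ≤ t →
      (((2 * Δ - 1) * t : ℕ) : ℝ) >
        (2 * Δ - 2 : ℝ) / (2 * Δ - 1) * (2 * Δ * t) + 2 / (2 * Δ - 1)) := by
  refine ⟨fun t _ => ?_, fun hΔ => ⟨3, fun t ht => ?_⟩⟩
  · obtain ⟨f, hf, hsum⟩ := exists_edgeRDF_tKdd_sum_eq Δ t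
    refine IsLeast.csInf_eq ⟨⟨f, hf, hsum.symm⟩, ?_⟩
    rintro _ ⟨f', hf', rfl⟩
    exact hf'.mul_le_sum_tKdd
  · push_cast [Nat.cast_sub (by omega : 1 ≤ 2 * Δ)]
    exact lt_two_mul_sub_one_mul (by norm_cast; omega) (by norm_cast)

/-- For `Δ ≥ 1` and `t ≥ 1`, the disjoint union of `t` copies of `K_{Δ,Δ}` has edge Roman
domination number exactly `(2Δ − 1)·t`; moreover for `Δ ≥ 2` this eventually exceeds
`((2Δ − 2)/(2Δ − 1))·n + 2/(2Δ − 1)` (with `n = 2Δt`), so the connectivity hypothesis in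
the corresponding bound for connected graphs is necessary. -/
theorem edgeRomanNumber_tKdd (Δ : ℕ) (hΔ : 1 ≤ Δ) :
    (∀ t, 1 ≤ t →
      edgeRomanNumber (Fin t × (Fin Δ ⊕ Fin Δ)) (tKdd Δ t) = (2 * Δ - 1) * t) ∧
    (2 ≤ Δ → ∃ t₀ : ℕ, ∀ t, t₀ ≤ t →
      (((2 * Δ - 1) * t : ℕ) : ℝ) >
        (2 * Δ - 2 : ℝ) / (2 * Δ - 1) * (2 * Δ * t) + 2 / (2 * Δ - 1)) :=
  edgeRomanNumber_tKdd_general Δ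
end

section
/- For every integer k ≥ 1, let G be the graph obtained from the disjoint union of k copies of the 5-cycle C_5 by adding one new vertex adjacent to exactly one vertex of each of the k cycles. Then γ'_R(G) = 4k = (4/5)·|V(G)| − 4/5. -/
/-!
Upper bound: in every 5-cycle `x₀ … x₄`, with `x₀` joined to the centre, the two edges `x₀x₁` and
`x₂x₃` share an endpoint with every other edge of the cycle and with the spoke, so these `2k` edges
form an edge dominating set, and weight `2` on them gives an edge Roman dominating function of
weight `4k`.

Lower bound: an edge of the `i`-th cycle shares endpoints only with edges of that cycle and with
the `i`-th spoke, so the five cycle edges must be dominated inside the cycle-plus-spoke "petal", and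
a short case analysis shows that every petal carries weight at least `4`. The `k` petals are
edge-disjoint.
-/

open Finset SimpleGraph

/-- The graph obtained from the disjoint union of `k` copies of the 5-cycle `C₅` by
adding one new vertex (`none`) adjacent to exactly one vertex of each of the `k` cycles. -/
def flowerC5 (k : ℕ) : SimpleGraph (Option (Fin k × Fin 5)) :=
  SimpleGraph.fromRel fun a b =>
    (∃ (i : Fin k) (x y : Fin 5),
        a = some (i, x) ∧ b = some (i, y) ∧ (cycleGraph 5).Adj x y) ∨
    (∃ i : Fin k, a = none ∧ b = some (i, 0))

namespace SimpleGraph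

variable {V : Type*}

def IsEdgeDominatingSet (G : SimpleGraph V) (T : Finset (Sym2 V)) : Prop :=
  (T : Set (Sym2 V)) ⊆ G.edgeSet ∧ ∀ e ∈ G.edgeSet, e ∉ T → ∃ e' ∈ T, ∃ v, v ∈ e ∧ v ∈ e'

theorem IsEdgeDominatingSet.edgeRDF [DecidableEq V] {G : SimpleGraph V} {T : Finset (Sym2 V)}
    (hT : G.IsEdgeDominatingSet T) : EdgeRDF G fun e => if e ∈ T then 2 else 0 := by
  refine ⟨fun e => by dsimp only; split <;> omega, fun e he => if_neg fun h => he (hT.1 h),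
    fun e he h0 => ?_⟩
  have heT : e ∉ T := fun h => by simp [h] at h0
  obtain ⟨e', he'T, v, hv, hv'⟩ := hT.2 e he heT
  exact ⟨e', hT.1 he'T, if_pos he'T, fun h => heT (h ▸ he'T), v, hv, hv'⟩

end SimpleGraph

theorem edgeRDF_indicator_edgeSet {V : Type*} {G : SimpleGraph V} :
    EdgeRDF G (G.edgeSet.indicator 1) := by
  refine ⟨fun e => ?_, fun e he => Set.indicator_of_notMem he _, fun e he h0 => ?_⟩
  · by_cases he : e ∈ G.edgeSet <;> simp [he]
  · simp [he] at h0

section EdgeRomanNumber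

variable {V : Type*} [Fintype V] [DecidableEq V] {G : SimpleGraph V}

theorem edgeRomanNumber_le_weight {f : Sym2 V → ℕ} (hf : EdgeRDF G f) :
    edgeRomanNumber V G ≤ ∑ e, f e :=
  Nat.sInf_le ⟨f, hf, rfl⟩

theorem le_edgeRomanNumber {n : ℕ} (h : ∀ f, EdgeRDF G f → n ≤ ∑ e, f e) :
    n ≤ edgeRomanNumber V G := by
  refine le_csInf ⟨_, _, edgeRDF_indicator_edgeSet, rfl⟩ ?_
  rintro w ⟨f, hf, rfl⟩
  exact h f hf

theorem edgeRomanNumber_le_two_mul_card {T : Finset (Sym2 V)} (hT : G.IsEdgeDominatingSet T) :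
    edgeRomanNumber V G ≤ 2 * #T := by
  refine (edgeRomanNumber_le_weight hT.edgeRDF).trans_eq ?_
  simp [Finset.sum_ite_mem, mul_comm]

end EdgeRomanNumber

namespace flowerC5

variable {k : ℕ}

def cycleEdge (i : Fin k) (x : Fin 5) : Sym2 (Option (Fin k × Fin 5)) :=
  s(some (i, x), some (i, x + 1))

def spoke (i : Fin k) : Sym2 (Option (Fin k × Fin 5)) :=
  s(none, some (i, 0))

def edge : Fin k × Option (Fin 5) → Sym2 (Option (Fin k × Fin 5))
  | (i, none) => spoke i
  | (i, some x) => cycleEdge i x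

theorem adj_some_some {i j : Fin k} {x y : Fin 5} :
    (flowerC5 k).Adj (some (i, x)) (some (j, y)) ↔ i = j ∧ (cycleGraph 5).Adj x y := by
  simp only [flowerC5, fromRel_adj, ne_eq, Option.some.injEq, Prod.mk.injEq, not_and,
    exists_and_left, ↓existsAndEq, and_true, exists_eq_left', reduceCtorEq, false_and, or_false]
  constructor
  · rintro ⟨-, ⟨rfl, h⟩ | ⟨rfl, h⟩⟩
    exacts [⟨rfl, h⟩, ⟨rfl, h.symm⟩]
  · rintro ⟨rfl, h⟩
    exact ⟨fun _ => h.ne, Or.inl ⟨rfl, h⟩⟩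

theorem adj_none_some {i : Fin k} {x : Fin 5} :
    (flowerC5 k).Adj none (some (i, x)) ↔ x = 0 := by
  simp [flowerC5]

theorem edge_injective : Function.Injective (edge (k := k)) := by
  rintro ⟨i, _ | x⟩ ⟨j, _ | y⟩ h
  · simpa [edge, spoke] using h
  · simp [edge, spoke, cycleEdge] at h
  · simp [edge, spoke, cycleEdge] at h
  · simp only [edge, cycleEdge, Sym2.eq, Sym2.rel_iff', Prod.mk.injEq, Option.some.injEq,
      Prod.swap_prod_mk] at h
    obtain ⟨⟨rfl, rfl⟩, -⟩ | ⟨⟨rfl, rfl⟩, -, h⟩ := h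
    · rfl
    · exact absurd h (by revert y; decide)

theorem edge_mem_edgeSet (p : Fin k × Option (Fin 5)) : edge p ∈ (flowerC5 k).edgeSet := by
  obtain ⟨i, _ | x⟩ := p
  · exact adj_none_some.2 rfl
  · exact adj_some_some.2 ⟨rfl, cycleGraph_adj.2 (Or.inr (add_sub_cancel_left x 1))⟩

theorem edgeSet_eq : (flowerC5 k).edgeSet = Set.range edge := by
  refine subset_antisymm (fun e he => ?_) (Set.range_subset_iff.2 edge_mem_edgeSet)
  induction e using Sym2.ind with | h a b => ?_
  rw [mem_edgeSet] at he
  obtain _ | ⟨i, x⟩ := a <;> obtain _ | ⟨j, y⟩ := b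
  · exact absurd rfl he.ne
  · exact ⟨(j, none), by rw [adj_none_some.1 he]; rfl⟩
  · exact ⟨(i, none), by rw [adj_none_some.1 he.symm]; exact Sym2.eq_swap⟩
  · obtain ⟨rfl, hxy⟩ := adj_some_some.1 he
    rcases cycleGraph_adj.1 hxy with h | h
    · exact ⟨(i, some y), by rw [sub_eq_iff_eq_add'.1 h]; exact Sym2.eq_swap⟩
    · exact ⟨(i, some x), by rw [sub_eq_iff_eq_add'.1 h]; rfl⟩

theorem eq_cycleEdge_or_spoke_of_mem {i : Fin k} {x : Fin 5} {e : Sym2 (Option (Fin k × Fin 5))}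
    (he : e ∈ (flowerC5 k).edgeSet) (hv : some (i, x) ∈ e) :
    e = cycleEdge i (x - 1) ∨ e = cycleEdge i x ∨ (x = 0 ∧ e = spoke i) := by
  rw [edgeSet_eq] at he
  obtain ⟨⟨j, _ | y⟩, rfl⟩ := he
  · obtain ⟨rfl, rfl⟩ : i = j ∧ x = 0 := by simpa [edge, spoke] using hv
    exact Or.inr (Or.inr ⟨rfl, rfl⟩)
  · obtain ⟨rfl, rfl | rfl⟩ : i = j ∧ (x = y ∨ x = y + 1) := by
      simpa [edge, cycleEdge, and_or_left] using hv
    · exact Or.inr (Or.inl rfl)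
    · exact Or.inl (by rw [add_sub_cancel_right]; rfl)

theorem cycleEdge_dominated {f : Sym2 (Option (Fin k × Fin 5)) → ℕ}
    (hf : EdgeRDF (flowerC5 k) f) {i : Fin k} {x : Fin 5} (h0 : f (cycleEdge i x) = 0) :
    f (cycleEdge i (x - 1)) = 2 ∨ f (cycleEdge i (x + 1)) = 2 ∨
      ((x = 0 ∨ x + 1 = 0) ∧ f (spoke i) = 2) := by
  obtain ⟨e, he, h2, hne, v, hv, hve⟩ := 
    hf.2.2 _ (edge_mem_edgeSet (i, some x) : cycleEdge i x ∈ _) h0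
  rcases Sym2.mem_iff.1 hv with rfl | rfl
  · rcases eq_cycleEdge_or_spoke_of_mem he hve with rfl | rfl | ⟨hx, rfl⟩
    · exact Or.inl h2
    · exact absurd rfl hne
    · exact Or.inr (Or.inr ⟨Or.inl hx, h2⟩)
  · rcases eq_cycleEdge_or_spoke_of_mem he hve with rfl | rfl | ⟨hx, rfl⟩
    · exact absurd (by rw [add_sub_cancel_right]; rfl) hne
    · exact Or.inr (Or.inl h2)
    · exact Or.inr (Or.inr ⟨Or.inr hx, h2⟩)

/-- `g x` stands for the weight of the cycle edge `{x, x + 1}` and `s` for that of the spoke. -/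
theorem four_le_of_dominated (g : Fin 5 → ℕ) (s : ℕ)
    (hdom : ∀ x, g x = 0 → g (x - 1) = 2 ∨ g (x + 1) = 2 ∨ ((x = 0 ∨ x + 1 = 0) ∧ s = 2)) :
    4 ≤ s + ∑ x, g x := by
  have h0 := hdom 0
  have h1 := hdom 1
  have h2 := hdom 2
  have h3 := hdom 3
  have h4 := hdom 4
  simp only [Fin.reduceAdd, Fin.reduceSub, Fin.reduceEq, true_and, false_and, or_false]
    at h0 h1 h2 h3 h4
  rw [Fin.sum_univ_five]
  omega

theorem four_mul_le_weight {f : Sym2 (Option (Fin k × Fin 5)) → ℕ}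
    (hf : EdgeRDF (flowerC5 k) f) : 4 * k ≤ ∑ e, f e := by
  have petal (i : Fin k) : 4 ≤ ∑ o, f (edge (i, o)) := by
    rw [Fintype.sum_option]
    exact four_le_of_dominated _ _ fun x => cycleEdge_dominated hf
  calc 4 * k = ∑ _i : Fin k, 4 := by simp [mul_comm]
    _ ≤ ∑ i, ∑ o, f (edge (i, o)) := sum_le_sum fun i _ => petal i
    _ = ∑ p, f (edge p) := (Fintype.sum_prod_type' _).symm
    _ = ∑ e ∈ univ.image edge, f e := (sum_image fun p _ q _ h => edge_injective h).symm
    _ ≤ ∑ e, f e := sum_le_sum_of_subset (subset_univ _)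

def twoEdges (k : ℕ) : Finset (Sym2 (Option (Fin k × Fin 5))) :=
  (univ ×ˢ {some 0, some 2}).image edge

theorem card_twoEdges : #(twoEdges k) = 2 * k := by
  rw [twoEdges, card_image_of_injective _ edge_injective, card_product]
  simp [mul_comm]

theorem isEdgeDominatingSet_twoEdges : (flowerC5 k).IsEdgeDominatingSet (twoEdges k) := by
  refine ⟨?_, fun e he heT => ?_⟩
  · rw [twoEdges, coe_image, edgeSet_eq]
    exact Set.image_subset_range _ _
  rw [edgeSet_eq] at he
  obtain ⟨⟨i, o⟩, rfl⟩ := he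
  have mem (x : Fin 5) (hx : x = 0 ∨ x = 2) : cycleEdge i x ∈ twoEdges k :=
    mem_image_of_mem edge (by simpa using hx : (i, some x) ∈ univ ×ˢ {some 0, some 2})
  obtain _ | x := o
  · exact ⟨cycleEdge i 0, mem 0 (by decide), some (i, 0), by simp [edge, spoke],
      by simp [cycleEdge]⟩
  fin_cases x
  · exact absurd (mem 0 (by decide)) heT
  · exact ⟨cycleEdge i 2, mem 2 (by decide), some (i, 2), by simp [edge, cycleEdge],
      by simp [cycleEdge]⟩
  · exact absurd (mem 2 (by decide)) heT
  · exact ⟨cycleEdge i 2, mem 2 (by decide), some (i, 3), by simp [edge, cycleEdge],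
      by simp [cycleEdge]⟩
  · exact ⟨cycleEdge i 0, mem 0 (by decide), some (i, 0), by simp [edge, cycleEdge],
      by simp [cycleEdge]⟩

end flowerC5

theorem edgeRomanNumber_flowerC5_general (k : ℕ) :
    edgeRomanNumber (Option (Fin k × Fin 5)) (flowerC5 k) = 4 * k ∧
    ((4 * k : ℝ) = 4 / 5 * Fintype.card (Option (Fin k × Fin 5)) - 4 / 5) := by
  have hcard : Fintype.card (Option (Fin k × Fin 5)) = 5 * k + 1 := by simp [mul_comm]
  refine ⟨le_antisymm ?_ (le_edgeRomanNumber fun _ => flowerC5.four_mul_le_weight), ?_⟩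
  · calc _ ≤ 2 * #(flowerC5.twoEdges k) :=
          edgeRomanNumber_le_two_mul_card flowerC5.isEdgeDominatingSet_twoEdges
      _ = 4 * k := by rw [flowerC5.card_twoEdges]; ring
  · rw [hcard]
    push_cast
    ring

/-- For `k ≥ 1`, the graph obtained from `k` disjoint 5-cycles by adding a vertex adjacent
to one vertex of each cycle satisfies `γ'_R(G) = 4k = (4/5)·|V(G)| − 4/5`. -/
theorem edgeRomanNumber_flowerC5 (k : ℕ) (hk : 1 ≤ k) :
    edgeRomanNumber (Option (Fin k × Fin 5)) (flowerC5 k) = 4 * k ∧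
    ((4 * k : ℝ) = 4 / 5 * Fintype.card (Option (Fin k × Fin 5)) - 4 / 5) :=
  edgeRomanNumber_flowerC5_general k
end
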